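/- arXiv:2510.14123 — 10 statements merged into one kernel-verified Lean document; each statement's English description precedes it below -/
import Mathlib

section
/- Let ψ : ℝ → [0,∞) be even, nonincreasing on [0,∞), and locally integrable, and set Ψ(r) := ∫₀^r ψ(s) ds. Let a, b, z ∈ ℝ with a > b, and let D ≥ 0 satisfy |a − z| ≤ D and |b − z| ≤ D. Then Ψ(a − z) − Ψ(b − z) ≥ ψ(D)·(a − b), and Ψ(a − z) − Ψ(b − z) ≤ 2·Ψ((a − b)/2). -/
/-!
On `[b - z, a - z] ⊆ [-D, D]` the integrand `ψ` is at least `ψ D`, which gives the lower bound.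
For the upper bound, an interval of length `2L` centred at `m ≥ 0` is obtained from `[-L, L]` by
trading `[-L, m - L]` for `[L, m + L]`; translating by `2L` moves each point of the first piece
away from the origin, where `ψ` is smaller. Hence the centred interval carries the most mass,
and `∫_{-L}^{L} ψ = 2 Ψ(L)` by evenness.
-/

open MeasureTheory intervalIntegral Set

section EvenAntitone

variable {ψ : ℝ → ℝ}

theorem Function.Even.apply_le_of_abs_le (he : ψ.Even) (ha : AntitoneOn ψ (Ici 0)) {x y : ℝ}
    (h : |x| ≤ |y|) : ψ y ≤ ψ x := by
  have habs : ∀ x, ψ |x| = ψ x := fun x => by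
    rcases abs_choice x with hx | hx <;> rw [hx]
    exact he.eq x
  rw [← habs x, ← habs y]
  exact ha (abs_nonneg x) (abs_nonneg y) h

theorem Function.Even.monotoneOn_Iic (he : ψ.Even) (ha : AntitoneOn ψ (Ici 0)) :
    MonotoneOn ψ (Iic 0) := fun x _ y hy hxy =>
  he.apply_le_of_abs_le ha (by rw [abs_of_nonpos hy, abs_of_nonpos (hxy.trans hy)]; linarith)

theorem Function.Even.intervalIntegrable_of_antitoneOn (he : ψ.Even) (ha : AntitoneOn ψ (Ici 0))
    (u v : ℝ) : IntervalIntegrable ψ volume u v := by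
  have from_zero : ∀ v, IntervalIntegrable ψ volume 0 v := fun v => by
    rcases le_total 0 v with hv | hv
    · exact (ha.mono (by simp [uIcc_of_le hv, Icc_subset_Ici_self])).intervalIntegrable
    · exact ((he.monotoneOn_Iic ha).mono
        (by simp [uIcc_of_ge hv, Icc_subset_Iic_self])).intervalIntegrable
  exact (from_zero u).symm.trans (from_zero v)

theorem Function.Even.integral_neg_neg (he : ψ.Even) (a b : ℝ) :
    ∫ s in -b..-a, ψ s = ∫ s in a..b, ψ s := by
  simp_rw [← integral_comp_neg, he.eq]

theorem Function.Even.integral_neg_self (he : ψ.Even) {L : ℝ}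
    (h₁ : IntervalIntegrable ψ volume (-L) 0) (h₂ : IntervalIntegrable ψ volume 0 L) :
    ∫ s in -L..L, ψ s = 2 * ∫ s in 0..L, ψ s := by
  rw [← integral_add_adjacent_intervals h₁ h₂, ← neg_zero, he.integral_neg_neg, neg_zero]
  ring

theorem Function.Even.mul_le_integral_of_abs_le (he : ψ.Even) (ha : AntitoneOn ψ (Ici 0))
    {u v D : ℝ} (huv : u ≤ v) (hu : |u| ≤ D) (hv : |v| ≤ D) :
    ψ D * (v - u) ≤ ∫ s in u..v, ψ s := by
  have hbound : ∀ s ∈ Icc u v, ψ D ≤ ψ s := fun s hs =>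
    he.apply_le_of_abs_le ha <| (abs_le.mpr
      ⟨by linarith [hs.1, (abs_le.mp hu).1], by linarith [hs.2, (abs_le.mp hv).2]⟩).trans
      (le_abs_self D)
  calc ψ D * (v - u) = ∫ _ in u..v, ψ D := by
        rw [intervalIntegral.integral_const, smul_eq_mul, mul_comm]
    _ ≤ ∫ s in u..v, ψ s := integral_mono_on huv intervalIntegrable_const
        (he.intervalIntegrable_of_antitoneOn ha u v) hbound

theorem Function.Even.integral_sub_add_le_integral_neg (he : ψ.Even) (ha : AntitoneOn ψ (Ici 0))
    {L : ℝ} (hL : 0 ≤ L) (m : ℝ) : ∫ s in m - L..m + L, ψ s ≤ ∫ s in -L..L, ψ s := by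
  wlog hm : 0 ≤ m generalizing m
  · calc ∫ s in m - L..m + L, ψ s = ∫ s in -m - L..-m + L, ψ s := by
          rw [← he.integral_neg_neg]; congr 1 <;> ring
      _ ≤ ∫ s in -L..L, ψ s := this (-m) (by linarith)
  have hint := he.intervalIntegrable_of_antitoneOn ha
  have hshift : ∀ s ∈ Icc (-L) (m - L), ψ (s + 2 * L) ≤ ψ s := fun s hs =>
    he.apply_le_of_abs_le ha <| by
      rw [abs_of_nonneg (by linarith [hs.1] : 0 ≤ s + 2 * L), abs_le]
      constructor <;> linarith [hs.1]
  calc ∫ s in m - L..m + L, ψ s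
      = (∫ s in m - L..L, ψ s) + ∫ s in -L..m - L, ψ (s + 2 * L) := by
        rw [integral_comp_add_right, ← integral_add_adjacent_intervals (hint _ L) (hint _ _)]
        ring_nf
    _ ≤ (∫ s in m - L..L, ψ s) + ∫ s in -L..m - L, ψ s := by
        gcongr
        exact integral_mono_on (by linarith)
          ((IntervalIntegrable.comp_add_right_iff).2 (hint _ _)) (hint _ _) hshift
    _ = ∫ s in -L..L, ψ s := by
        rw [add_comm, integral_add_adjacent_intervals (hint _ _) (hint _ _)]

end EvenAntitone

theorem stmt_0_general (ψ : ℝ → ℝ)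
    (hψ_even : ∀ s : ℝ, ψ (-s) = ψ s)
    (hψ_anti : ∀ ⦃s t : ℝ⦄, 0 ≤ s → s ≤ t → ψ t ≤ ψ s)
    (Ψ : ℝ → ℝ) (hΨ : ∀ r : ℝ, Ψ r = ∫ s in (0:ℝ)..r, ψ s)
    (a b z D : ℝ) (hab : a > b)
    (haz : |a - z| ≤ D) (hbz : |b - z| ≤ D) :
    ψ D * (a - b) ≤ Ψ (a - z) - Ψ (b - z) ∧
      Ψ (a - z) - Ψ (b - z) ≤ 2 * Ψ ((a - b) / 2) := by
  have he : Function.Even ψ := hψ_even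
  have ha : AntitoneOn ψ (Ici 0) := fun s hs _ _ hst => hψ_anti hs hst
  have hint := he.intervalIntegrable_of_antitoneOn ha
  have hdiff : Ψ (a - z) - Ψ (b - z) = ∫ s in b - z..a - z, ψ s := by
    rw [hΨ, hΨ, integral_interval_sub_left (hint _ _) (hint _ _)]
  rw [hdiff]
  constructor
  · have := he.mul_le_integral_of_abs_le ha (by linarith) hbz haz
    rwa [sub_sub_sub_cancel_right] at this
  · have hcentred := he.integral_sub_add_le_integral_neg ha (L := (a - b) / 2) (by linarith)
      ((a - z + (b - z)) / 2)
    rw [hΨ, ← he.integral_neg_self (hint _ _) (hint _ _)]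
    convert hcentred using 2 <;> ring

/-- Lemma 2.2 (Lipschitz-type estimates for the primitive Ψ). -/
theorem stmt_0 (ψ : ℝ → ℝ)
    (hψ_nonneg : ∀ s : ℝ, 0 ≤ ψ s)
    (hψ_even : ∀ s : ℝ, ψ (-s) = ψ s)
    (hψ_anti : ∀ ⦃s t : ℝ⦄, 0 ≤ s → s ≤ t → ψ t ≤ ψ s)
    (hψ_loc : LocallyIntegrable ψ)
    (Ψ : ℝ → ℝ) (hΨ : ∀ r : ℝ, Ψ r = ∫ s in (0:ℝ)..r, ψ s)
    (a b z D : ℝ) (hab : a > b) (hD : 0 ≤ D)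
    (haz : |a - z| ≤ D) (hbz : |b - z| ≤ D) :
    ψ D * (a - b) ≤ Ψ (a - z) - Ψ (b - z) ∧
      Ψ (a - z) - Ψ (b - z) ≤ 2 * Ψ ((a - b) / 2) :=
  stmt_0_general ψ hψ_even hψ_anti Ψ hΨ a b z D hab haz hbz
end

section
/- Let ψ : ℝ → [0,∞) be even, nonincreasing on [0,∞), and locally integrable, and set Ψ(r) := ∫₀^r ψ(s) ds. Let α ∈ (0,1) and suppose there exist R > 0 and 0 < A ≤ B such that A·|s|^{−α} ≤ ψ(s) ≤ B·|s|^{−α} for all 0 < |s| ≤ R. Let a, b, z ∈ ℝ with a > b, and set D := max(|a − z|, |b − z|); assume 0 < D ≤ R. Then A·D^{−α}·(a − b) ≤ Ψ(a − z) − Ψ(b − z) ≤ (2^α·B/(1 − α))·(a − b)^{1 − α}. -/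
open MeasureTheory intervalIntegral Real

lemma aux_rpow_subadd {u v p : ℝ} (hu : 0 ≤ u) (hv : 0 ≤ v) (hp : 0 ≤ p) (hp1 : p ≤ 1) :
    (u + v) ^ p ≤ u ^ p + v ^ p := by
  lift u to NNReal using hu
  lift v to NNReal using hv
  exact_mod_cast NNReal.rpow_add_le_add_rpow u v hp hp1

lemma aux_rpow_concave {u v p : ℝ} (hu : 0 ≤ u) (hv : 0 ≤ v) (hp0 : 0 < p) (hp1 : p < 1) :
    u ^ p + v ^ p ≤ 2 ^ (1 - p) * (u + v) ^ p := by
  have hc := (Real.concaveOn_rpow hp0.le hp1.le).2 (Set.mem_Ici.mpr hu) (Set.mem_Ici.mpr hv)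
    (by norm_num : (0:ℝ) ≤ 1/2) (by norm_num : (0:ℝ) ≤ 1/2) (by norm_num)
  simp only [smul_eq_mul] at hc
  have h2 : ((1:ℝ)/2 * u + 1/2 * v) = (u + v)/2 := by ring
  rw [h2] at hc
  have hdiv : ((u + v)/2) ^ p = (u + v) ^ p / 2 ^ p :=
    Real.div_rpow (by linarith) (by norm_num) p
  rw [hdiv] at hc
  have h2p : (2:ℝ) ^ (1 - p) = 2 / 2 ^ p := by
    rw [Real.rpow_sub (by norm_num : (0:ℝ) < 2), Real.rpow_one]
  rw [h2p]
  have heq : 2 / 2 ^ p * (u + v) ^ p = 2 * ((u + v) ^ p / 2 ^ p) := by ring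
  rw [heq]
  linarith

/-- Corollary 2.3 (ii), Lipschitz bounds for Ψ under weakly singular
communication weights. -/
theorem stmt_2 (ψ : ℝ → ℝ)
    (hψ_nonneg : ∀ s : ℝ, 0 ≤ ψ s)
    (hψ_even : ∀ s : ℝ, ψ (-s) = ψ s)
    (hψ_anti : ∀ ⦃s t : ℝ⦄, 0 ≤ s → s ≤ t → ψ t ≤ ψ s)
    (hψ_loc : LocallyIntegrable ψ)
    (Ψ : ℝ → ℝ) (hΨ : ∀ r : ℝ, Ψ r = ∫ s in (0:ℝ)..r, ψ s)
    (α : ℝ) (hα : α ∈ Set.Ioo (0:ℝ) 1)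
    (R A B : ℝ) (hR : 0 < R) (hA : 0 < A) (hAB : A ≤ B)
    (hbound : ∀ s : ℝ, 0 < |s| → |s| ≤ R →
      A * |s| ^ (-α) ≤ ψ s ∧ ψ s ≤ B * |s| ^ (-α))
    (a b z : ℝ) (hab : a > b)
    (D : ℝ) (hD : D = max |a - z| |b - z|) (hD0 : 0 < D) (hDR : D ≤ R) :
    A * D ^ (-α) * (a - b) ≤ Ψ (a - z) - Ψ (b - z) ∧
      Ψ (a - z) - Ψ (b - z) ≤ (2 ^ α * B / (1 - α)) * (a - b) ^ (1 - α) := by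
  obtain ⟨hα0, hα1⟩ := hα
  set x := b - z with hx
  set y := a - z with hy
  have hxy : x < y := by rw [hx, hy]; linarith
  have hyx : y - x = a - b := by rw [hx, hy]; ring
  have h1α : 0 < 1 - α := by linarith
  have hBpos : 0 < B := lt_of_lt_of_le hA hAB
  have hintg : ∀ u v : ℝ, IntervalIntegrable ψ volume u v := by
    intro u v
    rw [intervalIntegrable_iff]
    exact (hψ_loc.integrableOn_isCompact isCompact_uIcc).mono_set Set.uIoc_subset_uIcc
  have hkey : Ψ (a - z) - Ψ (b - z) = ∫ s in x..y, ψ s := by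
    rw [hΨ, hΨ]
    exact integral_interval_sub_left (hintg 0 y) (hintg 0 x)
  have hDx : |x| ≤ D := by rw [hD]; exact le_max_right _ _
  have hDy : |y| ≤ D := by rw [hD]; exact le_max_left _ _
  have habs : ∀ s : ℝ, x ≤ s → s ≤ y → |s| ≤ D := by
    intro s h1 h2
    rw [abs_le]
    constructor
    · have := neg_abs_le x
      have := neg_le_of_abs_le hDx
      linarith
    · have := le_abs_self y
      linarith
  -- The segment estimate, used for the upper bound.
  have hseg : ∀ u v : ℝ, 0 ≤ u → u ≤ v → v ≤ R →
      (∫ s in u..v, ψ s) ≤ B * (v ^ (1 - α) - u ^ (1 - α)) / (1 - α) := by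
    intro u v hu huv hvR
    have hBint : IntervalIntegrable (fun s : ℝ => B * s ^ (-α)) volume u v :=
      (intervalIntegrable_rpow' (by linarith : (-1:ℝ) < -α)).const_mul B
    have h0 : ∀ᵐ s : ℝ ∂volume, s ≠ 0 := by
      rw [ae_iff]
      simp only [ne_eq, not_not, Set.setOf_eq_eq_singleton]
      exact measure_singleton 0
    have hae : ∀ᵐ s ∂(volume.restrict (Set.Icc u v)), ψ s ≤ B * s ^ (-α) := by
      filter_upwards [ae_restrict_mem measurableSet_Icc, ae_restrict_of_ae h0] with s hs hs0
      have hs1 : 0 < s := lt_of_le_of_ne (hu.trans hs.1) (Ne.symm hs0)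
      have h2 := (hbound s (by rw [abs_of_pos hs1]; exact hs1)
        (by rw [abs_of_pos hs1]; linarith [hs.2])).2
      rwa [abs_of_pos hs1] at h2
    have h1 := intervalIntegral.integral_mono_ae_restrict huv (hintg u v) hBint hae
    have h2 : (∫ s in u..v, B * s ^ (-α)) = B * ∫ s in u..v, s ^ (-α) := by
      exact intervalIntegral.integral_const_mul B _
    have h3 : (∫ s in u..v, s ^ (-α)) = (v ^ (-α + 1) - u ^ (-α + 1)) / (-α + 1) :=
      integral_rpow (Or.inl (by linarith))
    have h4 : -α + 1 = 1 - α := by ring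
    rw [h2, h3, h4] at h1
    calc (∫ s in u..v, ψ s) ≤ B * ((v ^ (1 - α) - u ^ (1 - α)) / (1 - α)) := h1
      _ = B * (v ^ (1 - α) - u ^ (1 - α)) / (1 - α) := by ring
  constructor
  · -- lower bound
    rw [hkey]
    have hmono : ∀ s ∈ Set.Icc x y, A * D ^ (-α) ≤ ψ s := by
      intro s hs
      rcases eq_or_ne s 0 with rfl | hs0
      · have h1 : ψ D ≤ ψ 0 := hψ_anti le_rfl hD0.le
        have h2 := (hbound D (by rw [abs_of_pos hD0]; exact hD0)
          (by rw [abs_of_pos hD0]; exact hDR)).1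
        rw [abs_of_pos hD0] at h2
        linarith
      · have hs' : 0 < |s| := abs_pos.mpr hs0
        have hsD : |s| ≤ D := habs s hs.1 hs.2
        have h2 := (hbound s hs' (hsD.trans hDR)).1
        have h3 : D ^ (-α) ≤ |s| ^ (-α) :=
          Real.rpow_le_rpow_of_nonpos hs' hsD (by linarith)
        have h4 : A * D ^ (-α) ≤ A * |s| ^ (-α) :=
          mul_le_mul_of_nonneg_left h3 hA.le
        linarith
    have hm := intervalIntegral.integral_mono_on hxy.le
      intervalIntegrable_const (hintg x y) hmono
    rw [intervalIntegral.integral_const, smul_eq_mul, hyx] at hm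
    calc A * D ^ (-α) * (a - b) = (a - b) * (A * D ^ (-α)) := by ring
      _ ≤ _ := hm
  · -- upper bound
    rw [hkey]
    have h2a : (1:ℝ) ≤ 2 ^ α := Real.one_le_rpow (by norm_num) hα0.le
    have hab' : 0 < a - b := by linarith
    rcases le_or_gt 0 x with hx0 | hx0
    · -- 0 ≤ x < y
      have hyR : y ≤ R := le_trans (le_trans (le_abs_self y) hDy) hDR
      have h := hseg x y hx0 hxy.le hyR
      have hsub : y ^ (1 - α) ≤ (y - x) ^ (1 - α) + x ^ (1 - α) := by
        have h5 := aux_rpow_subadd (u := y - x) (v := x) (p := 1 - α)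
          (by linarith) hx0 h1α.le (by linarith)
        have h6 : y - x + x = y := by ring
        rwa [h6] at h5
      have hP : 0 ≤ (y - x) ^ (1 - α) := Real.rpow_nonneg (by linarith) _
      have hfin : B * (y ^ (1 - α) - x ^ (1 - α)) / (1 - α)
          ≤ 2 ^ α * B / (1 - α) * (y - x) ^ (1 - α) := by
        have e1 : y ^ (1 - α) - x ^ (1 - α) ≤ (y - x) ^ (1 - α) := by linarith
        have hnum : B * (y ^ (1 - α) - x ^ (1 - α)) ≤ 2 ^ α * B * (y - x) ^ (1 - α) :=
          calc B * (y ^ (1 - α) - x ^ (1 - α)) ≤ B * (y - x) ^ (1 - α) :=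
                mul_le_mul_of_nonneg_left e1 hBpos.le
            _ ≤ 2 ^ α * (B * (y - x) ^ (1 - α)) := le_mul_of_one_le_left (by positivity) h2a
            _ = 2 ^ α * B * (y - x) ^ (1 - α) := by ring
        rw [div_mul_eq_mul_div, div_le_div_iff₀ h1α h1α]
        exact mul_le_mul_of_nonneg_right hnum h1α.le
      rw [← hyx]
      linarith
    · rcases le_or_gt y 0 with hy0 | hy0
      · -- x < y ≤ 0 : reflect
        have hflipEq : (∫ s in (-y)..(-x), ψ (-s)) = ∫ s in x..y, ψ s := by
          have h := intervalIntegral.integral_comp_neg (a := -y) (b := -x) (f := ψ)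
          simpa using h
        have hflip : (∫ s in x..y, ψ s) = ∫ s in (-y)..(-x), ψ s := by
          rw [← hflipEq]
          simp only [hψ_even]
        have hxR : -x ≤ R := by
          have := hDx
          rw [abs_of_neg hx0] at this
          linarith
        have h := hseg (-y) (-x) (by linarith) (by linarith) hxR
        have hsub : (-x) ^ (1 - α) ≤ (y - x) ^ (1 - α) + (-y) ^ (1 - α) := by
          have h5 := aux_rpow_subadd (u := y - x) (v := -y) (p := 1 - α)
            (by linarith) (by linarith) h1α.le (by linarith)
          have h6 : y - x + -y = -x := by ring
          rwa [h6] at h5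
        have hP : 0 ≤ (y - x) ^ (1 - α) := Real.rpow_nonneg (by linarith) _
        have hfin : B * ((-x) ^ (1 - α) - (-y) ^ (1 - α)) / (1 - α)
            ≤ 2 ^ α * B / (1 - α) * (y - x) ^ (1 - α) := by
          have e1 : (-x) ^ (1 - α) - (-y) ^ (1 - α) ≤ (y - x) ^ (1 - α) := by linarith
          have hnum : B * ((-x) ^ (1 - α) - (-y) ^ (1 - α)) ≤ 2 ^ α * B * (y - x) ^ (1 - α) :=
            calc B * ((-x) ^ (1 - α) - (-y) ^ (1 - α)) ≤ B * (y - x) ^ (1 - α) :=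
                  mul_le_mul_of_nonneg_left e1 hBpos.le
              _ ≤ 2 ^ α * (B * (y - x) ^ (1 - α)) := le_mul_of_one_le_left (by positivity) h2a
              _ = 2 ^ α * B * (y - x) ^ (1 - α) := by ring
          rw [div_mul_eq_mul_div, div_le_div_iff₀ h1α h1α]
          exact mul_le_mul_of_nonneg_right hnum h1α.le
        rw [← hyx, hflip]
        linarith
      · -- x < 0 < y : split at 0
        have hsplit : (∫ s in x..0, ψ s) + (∫ s in (0:ℝ)..y, ψ s) = ∫ s in x..y, ψ s :=
          intervalIntegral.integral_add_adjacent_intervals (hintg x 0) (hintg 0 y)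
        have hflipEq : (∫ s in (0:ℝ)..(-x), ψ (-s)) = ∫ s in x..0, ψ s := by
          have h := intervalIntegral.integral_comp_neg (a := (0:ℝ)) (b := -x) (f := ψ)
          simpa using h
        have hflip : (∫ s in x..0, ψ s) = ∫ s in (0:ℝ)..(-x), ψ s := by
          rw [← hflipEq]
          simp only [hψ_even]
        have hxR : -x ≤ R := by
          have := hDx
          rw [abs_of_neg hx0] at this
          linarith
        have hyR : y ≤ R := le_trans (le_trans (le_abs_self y) hDy) hDR
        have h1 := hseg 0 (-x) le_rfl (by linarith) hxR
        have h2 := hseg 0 y le_rfl hy0.le hyR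
        have h0p : (0:ℝ) ^ (1 - α) = 0 := Real.zero_rpow (by linarith)
        rw [h0p] at h1 h2
        have hconc := aux_rpow_concave (u := -x) (v := y) (p := 1 - α)
          (by linarith) (by linarith) h1α (by linarith)
        have hα' : 1 - (1 - α) = α := by ring
        have hsum : -x + y = y - x := by ring
        rw [hα', hsum] at hconc
        have hP : 0 ≤ (y - x) ^ (1 - α) := Real.rpow_nonneg (by linarith) _
        have hfin : B * ((-x) ^ (1 - α) - 0) / (1 - α) + B * (y ^ (1 - α) - 0) / (1 - α)
            ≤ 2 ^ α * B / (1 - α) * (y - x) ^ (1 - α) := by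
          have hnum : B * ((-x) ^ (1 - α) - 0) + B * (y ^ (1 - α) - 0)
              ≤ 2 ^ α * B * (y - x) ^ (1 - α) :=
            calc B * ((-x) ^ (1 - α) - 0) + B * (y ^ (1 - α) - 0)
                = B * ((-x) ^ (1 - α) + y ^ (1 - α)) := by ring
              _ ≤ B * (2 ^ α * (y - x) ^ (1 - α)) := mul_le_mul_of_nonneg_left hconc hBpos.le
              _ = 2 ^ α * B * (y - x) ^ (1 - α) := by ring
          rw [div_mul_eq_mul_div, ← add_div, div_le_div_iff₀ h1α h1α]
          exact mul_le_mul_of_nonneg_right hnum h1α.le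
        rw [← hyx, ← hsplit, hflip]
        linarith
end

section
/- Let κ ≥ 0, λ > 0, and let f : [0,∞) → [0,∞) be continuous, nondecreasing, with f(0) = 0. Let (X, Y) : [0,∞) → (0,∞) × ℝ be continuously differentiable and satisfy, for all t ≥ 0, κ·(Y(t) − f(X(t))) ≤ X′(t) ≤ Y(t) and Y′(t) ≤ −λ·X(t). Then: (i) Y is strictly decreasing and Y(t) > 0 for all t ≥ 0; (ii) X(t) → 0 as t → ∞; (iii) if κ > 0 then Y(t) → 0 as t → ∞. -/
open Filter Topology

lemma comp_le_aux {u u' : ℝ → ℝ}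
    (hu : ∀ t ∈ Set.Ici (0:ℝ), HasDerivWithinAt u (u' t) (Set.Ici (0:ℝ)) t)
    {a b c : ℝ} (ha : 0 ≤ a) (hab : a ≤ b)
    (hbound : ∀ t, a ≤ t → t ≤ b → u' t ≤ c) :
    u b ≤ u a + c * (b - a) := by
  have hsub : Set.Icc a b ⊆ Set.Ici (0:ℝ) := fun x hx => le_trans ha hx.1
  have hderiv : ∀ t ∈ Set.Ioo a b, HasDerivAt u (u' t) t := by
    intro t ht
    have ht0 : 0 < t := lt_of_le_of_lt ha ht.1
    exact (hu t ht0.le).hasDerivAt (Ici_mem_nhds ht0)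
  have hg : AntitoneOn (fun t => u t - c * t) (Set.Icc a b) := by
    apply antitoneOn_of_deriv_nonpos (convex_Icc a b)
    · have h1 : ContinuousOn u (Set.Icc a b) :=
        fun t ht => ((hu t (hsub ht)).continuousWithinAt).mono hsub
      exact h1.sub (continuousOn_const.mul continuousOn_id)
    · intro t ht
      rw [interior_Icc] at ht
      exact ((hderiv t ht).sub ((hasDerivAt_id t).const_mul c)).differentiableAt.differentiableWithinAt
    · intro t ht
      rw [interior_Icc] at ht
      have hd : HasDerivAt (fun t => u t - c * t) (u' t - c * 1) t :=
        (hderiv t ht).sub ((hasDerivAt_id t).const_mul c)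
      rw [hd.deriv]
      have := hbound t ht.1.le ht.2.le
      linarith
  have := hg (Set.left_mem_Icc.2 hab) (Set.right_mem_Icc.2 hab) hab
  simp only at this
  linarith

/-- Lemma 3.2 (two-dimensional system of differential inequalities with
λ-coercive damping). -/
theorem stmt_5 (κ lam : ℝ) (hκ : 0 ≤ κ) (hlam : 0 < lam)
    (f : ℝ → ℝ)
    (hf_cont : ContinuousOn f (Set.Ici (0:ℝ)))
    (hf_mono : MonotoneOn f (Set.Ici (0:ℝ)))
    (hf_nonneg : ∀ s : ℝ, 0 ≤ s → 0 ≤ f s)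
    (hf0 : f 0 = 0)
    (X Y X' Y' : ℝ → ℝ)
    (hX_deriv : ∀ t ∈ Set.Ici (0:ℝ), HasDerivWithinAt X (X' t) (Set.Ici (0:ℝ)) t)
    (hY_deriv : ∀ t ∈ Set.Ici (0:ℝ), HasDerivWithinAt Y (Y' t) (Set.Ici (0:ℝ)) t)
    (hX'_cont : ContinuousOn X' (Set.Ici (0:ℝ)))
    (hY'_cont : ContinuousOn Y' (Set.Ici (0:ℝ)))
    (hXpos : ∀ t : ℝ, 0 ≤ t → 0 < X t)
    (hODI1 : ∀ t : ℝ, 0 ≤ t → κ * (Y t - f (X t)) ≤ X' t ∧ X' t ≤ Y t)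
    (hODI2 : ∀ t : ℝ, 0 ≤ t → Y' t ≤ -lam * X t) :
    (StrictAntiOn Y (Set.Ici (0:ℝ)) ∧ ∀ t : ℝ, 0 ≤ t → 0 < Y t) ∧
      Tendsto X atTop (𝓝 0) ∧
      (0 < κ → Tendsto Y atTop (𝓝 0)) := by
  have hYc : ContinuousOn Y (Set.Ici (0:ℝ)) :=
    fun t ht => (hY_deriv t ht).continuousWithinAt
  -- (i1) Y strictly decreasing
  have hanti : StrictAntiOn Y (Set.Ici (0:ℝ)) := by
    apply strictAntiOn_of_deriv_neg (convex_Ici 0) hYc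
    intro t ht
    rw [interior_Ici] at ht
    have hd : HasDerivAt Y (Y' t) t := (hY_deriv t (Set.mem_Ici.2 (le_of_lt ht))).hasDerivAt (Ici_mem_nhds ht)
    rw [hd.deriv]
    have h1 := hODI2 t ht.le
    have h2 := hXpos t ht.le
    nlinarith
  have hYanti : AntitoneOn Y (Set.Ici (0:ℝ)) := hanti.antitoneOn
  -- (i2) Y positive
  have hYpos : ∀ t : ℝ, 0 ≤ t → 0 < Y t := by
    intro t₀ ht₀
    by_contra h
    push_neg at h
    have ht₁ : (0:ℝ) ≤ t₀ + 1 := by linarith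
    have h1 : Y (t₀ + 1) < Y t₀ := hanti (Set.mem_Ici.2 ht₀) (Set.mem_Ici.2 ht₁) (lt_add_one t₀)
    set c := Y (t₀ + 1) with hc_def
    have hc : c < 0 := lt_of_lt_of_le h1 h
    set T := t₀ + 1 + (X (t₀ + 1) + 1) / (-c) with hT_def
    have hXp : 0 < X (t₀ + 1) := hXpos _ ht₁
    have hnc : (0:ℝ) < -c := by linarith
    have hq : 0 < (X (t₀ + 1) + 1) / (-c) := div_pos (by linarith) hnc
    have hTge : t₀ + 1 ≤ T := by simp only [hT_def]; linarith
    have hcomp := comp_le_aux (c := c) hX_deriv ht₁ hTge (fun s hs1 hs2 => by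
      have hs0 : (0:ℝ) ≤ s := le_trans ht₁ hs1
      have h2 := (hODI1 s hs0).2
      have h3 := hYanti (Set.mem_Ici.2 ht₁) (Set.mem_Ici.2 hs0) hs1
      linarith)
    have hkey : c * ((X (t₀ + 1) + 1) / (-c)) = -(X (t₀ + 1) + 1) := by
      rw [mul_comm, div_mul_eq_mul_div, div_eq_iff (ne_of_gt hnc)]
      ring
    have hTsub : T - (t₀ + 1) = (X (t₀ + 1) + 1) / (-c) := by
      simp only [hT_def]; ring
    rw [hTsub, hkey] at hcomp
    have := hXpos T (le_trans ht₁ hTge)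
    linarith
  have hY0pos : 0 < Y 0 := hYpos 0 le_rfl
  -- (ii) X tends to 0
  have hX0 : Tendsto X atTop (𝓝 0) := by
    by_contra hfail
    rw [Metric.tendsto_atTop] at hfail
    push_neg at hfail
    obtain ⟨ε, hε, hfreq⟩ := hfail
    set M := Y 0 with hM_def
    set δ := ε / (2 * M) with hδ_def
    have hδ : 0 < δ := by positivity
    set d := lam * (ε / 2) * δ with hd_def
    have hd : 0 < d := by positivity
    have key : ∀ n : ℕ, ∃ t : ℝ, 0 ≤ t ∧ Y t ≤ Y 0 - n * d := by
      intro n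
      induction n with
      | zero => exact ⟨0, le_rfl, by simp⟩
      | succ n ih =>
        obtain ⟨t, ht0, hYt⟩ := ih
        obtain ⟨s, hs, hXs⟩ := hfreq (t + δ)
        have hs0 : (0:ℝ) ≤ s := by linarith
        have hXsε : ε ≤ X s := by
          rw [Real.dist_eq, sub_zero, abs_of_pos (hXpos s hs0)] at hXs
          exact hXs
        have hsδ0 : (0:ℝ) ≤ s - δ := by linarith
        -- X ≥ ε/2 on [s - δ, s]
        have hXlow : ∀ r, s - δ ≤ r → r ≤ s → ε / 2 ≤ X r := by
          intro r hr1 hr2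
          have hr0 : (0:ℝ) ≤ r := le_trans hsδ0 hr1
          have hcomp := comp_le_aux (c := M) hX_deriv hr0 hr2 (fun u hu1 hu2 => by
            have hu0 : (0:ℝ) ≤ u := le_trans hr0 hu1
            have h2 := (hODI1 u hu0).2
            have h3 := hYanti (Set.self_mem_Ici) (Set.mem_Ici.2 hu0) hu0
            linarith)
          have hMδ : M * δ = ε / 2 := by
            rw [hδ_def]; field_simp
          nlinarith [hcomp, hXsε, hMδ,
            mul_le_mul_of_nonneg_left (show s - r ≤ δ by linarith) hY0pos.le]
        -- Y drops by d on [s - δ, s]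
        have hYdrop := comp_le_aux (c := -(lam * (ε / 2))) hY_deriv hsδ0
          (by linarith : s - δ ≤ s) (fun u hu1 hu2 => by
            have hu0 : (0:ℝ) ≤ u := le_trans hsδ0 hu1
            have h1 := hODI2 u hu0
            have h2 := hXlow u hu1 hu2
            nlinarith)
        have hss : s - (s - δ) = δ := by ring
        rw [hss] at hYdrop
        have hYsδ : Y (s - δ) ≤ Y t :=
          hYanti (Set.mem_Ici.2 ht0) (Set.mem_Ici.2 hsδ0) (by linarith)
        refine ⟨s, hs0, ?_⟩
        push_cast
        nlinarith [hYdrop, hd_def]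
    obtain ⟨n, hn⟩ := exists_nat_gt (Y 0 / d)
    obtain ⟨t, ht0, hYt⟩ := key n
    have : Y 0 < n * d := by
      rw [div_lt_iff₀ hd] at hn
      linarith
    have := hYpos t ht0
    linarith
  -- Limit of Y
  set g : ℝ → ℝ := fun t => Y (max t 0) with hg_def
  have hganti : Antitone g := fun s t hst => by
    rcases eq_or_lt_of_le (max_le_max hst (le_refl (0:ℝ))) with heq | hlt
    · simp only [hg_def, heq]; exact le_rfl
    · exact (hanti (Set.mem_Ici.2 (le_max_right s 0)) (Set.mem_Ici.2 (le_max_right t 0)) hlt).le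
  have hbdd : BddBelow (Set.range g) := by
    refine ⟨0, ?_⟩
    rintro _ ⟨t, rfl⟩
    exact (hYpos _ (le_max_right t 0)).le
  set L := ⨅ t, g t with hL_def
  have hgL : Tendsto g atTop (𝓝 L) := tendsto_atTop_ciInf hganti hbdd
  have hYL : Tendsto Y atTop (𝓝 L) := by
    apply hgL.congr'
    filter_upwards [eventually_ge_atTop (0:ℝ)] with t ht
    simp [hg_def, max_eq_left ht]
  have hLY : ∀ t : ℝ, 0 ≤ t → L ≤ Y t := by
    intro t ht
    have := ciInf_le hbdd t
    simpa [hg_def, max_eq_left ht] using this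
  have hL0 : 0 ≤ L := le_ciInf fun t => (hYpos _ (le_max_right t 0)).le
  refine ⟨⟨hanti, hYpos⟩, hX0, ?_⟩
  -- (iii)
  intro hκpos
  have hLzero : L = 0 := by
    refine le_antisymm ?_ hL0
    by_contra hL
    push_neg at hL
    -- f (X t) → 0
    have hfX : Tendsto (fun t => f (X t)) atTop (𝓝 0) := by
      have h0 : ContinuousWithinAt f (Set.Ici (0:ℝ)) 0 := hf_cont 0 Set.self_mem_Ici
      have hXin : Tendsto X atTop (𝓝[Set.Ici (0:ℝ)] 0) := by
        rw [tendsto_nhdsWithin_iff]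
        refine ⟨hX0, ?_⟩
        filter_upwards [eventually_ge_atTop (0:ℝ)] with t ht
        exact Set.mem_Ici.2 (hXpos t ht).le
      have := h0.tendsto.comp hXin
      rwa [hf0] at this
    have hev : ∀ᶠ t in atTop, f (X t) < L / 2 := hfX.eventually_lt_const (by linarith)
    obtain ⟨T, hT⟩ := (hev.and (eventually_ge_atTop (0:ℝ))).exists_forall_of_atTop
    obtain hT0 : (0:ℝ) ≤ T := (hT T le_rfl).2
    set m := κ * (L / 2) with hm_def
    have hm : 0 < m := by positivity
    -- lower bound on X growth via -X
    have hgrow : ∀ b, T ≤ b → X T + m * (b - T) ≤ X b := by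
      intro b hb
      have hcomp := comp_le_aux (u := fun t => -X t) (u' := fun t => -X' t) (c := -m)
        (fun t ht => (hX_deriv t ht).neg) hT0 hb (fun s hs1 hs2 => by
          have hs0 : (0:ℝ) ≤ s := le_trans hT0 hs1
          have h1 := (hODI1 s hs0).1
          have h2 := (hT s hs1).1
          have h3 := hLY s hs0
          have h4 : κ * (L / 2) ≤ κ * (Y s - f (X s)) :=
            mul_le_mul_of_nonneg_left (by linarith) hκ
          simp only [neg_le_neg_iff]
          linarith)
      linarith
    have hXTpos : 0 < X T := hXpos T hT0
    obtain ⟨b, hb1, hb2⟩ := ((hX0.eventually_lt_const hXTpos).and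
      (eventually_ge_atTop (T + 1))).exists
    have := hgrow b (by linarith)
    nlinarith
  rwa [hLzero] at hYL
end

section
/- Let r > 0 and let f : [0,∞) → [0,∞) be continuous and nondecreasing. Let (X, Y) : [0,∞) → [0,∞) × ℝ be continuously differentiable and satisfy, for all t ≥ 0, Y(t) − f(X(t)) ≤ X′(t) ≤ Y(t) and Y′(t) = −(X(t) − r). Then for all t ≥ 0, X(t) ≤ r + max{ √((X(0) − r)² + Y(0)²), max{Y(0), f(r) + 1} + r²/2 }. -/
open Set Filter

/-- Endpoint antitonicity from nonpositive derivative on the interior. -/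
lemma aux_antitoneOn {g g' : ℝ → ℝ} {a b : ℝ}
    (hg : ContinuousOn g (Set.Icc a b))
    (hd : ∀ t ∈ Set.Ioo a b, HasDerivAt g (g' t) t)
    (h0 : ∀ t ∈ Set.Ioo a b, g' t ≤ 0) : AntitoneOn g (Set.Icc a b) := by
  apply antitoneOn_of_deriv_nonpos (convex_Icc a b) hg
  · intro t ht
    rw [interior_Icc] at ht
    exact (hd t ht).differentiableAt.differentiableWithinAt
  · intro t ht
    rw [interior_Icc] at ht
    rw [(hd t ht).deriv]
    exact h0 t ht

/-- Derivative of `u ↦ max u 0 ^ 2 / 2` is `max u 0`. -/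
lemma hasDerivAt_maxsq (u : ℝ) :
    HasDerivAt (fun x : ℝ => max x 0 ^ 2 / 2) (max u 0) u := by
  rcases lt_trichotomy u 0 with h | h | h
  · have heq : (fun x : ℝ => max x 0 ^ 2 / 2) =ᶠ[nhds u] fun _ => (0 : ℝ) := by
      filter_upwards [Iio_mem_nhds h] with x hx
      simp [max_eq_right (le_of_lt (Set.mem_Iio.mp hx))]
    have : HasDerivAt (fun _ : ℝ => (0 : ℝ)) 0 u := hasDerivAt_const u 0
    have h2 := this.congr_of_eventuallyEq heq
    simpa [max_eq_right (le_of_lt h)] using h2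
  · subst h
    rw [hasDerivAt_iff_isLittleO]
    simp only [max_self, ne_eq, OfNat.ofNat_ne_zero, not_false_eq_true, zero_pow, zero_div,
      sub_zero, smul_zero]
    rw [Asymptotics.isLittleO_iff]
    intro c hc
    have hball : ∀ᶠ x : ℝ in nhds 0, |x| < 2 * c := by
      have := Metric.ball_mem_nhds (0 : ℝ) (by linarith : (0:ℝ) < 2 * c)
      filter_upwards [this] with x hx
      simpa [Real.dist_eq] using hx
    filter_upwards [hball] with x hx
    simp only [Real.norm_eq_abs, sub_zero]
    have h1 : max x 0 ^ 2 ≤ x ^ 2 := by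
      rcases le_or_gt 0 x with hx0 | hx0
      · rw [max_eq_left hx0]
      · rw [max_eq_right hx0.le]; simpa using sq_nonneg x
    have h2 : |max x 0 ^ 2 / 2| = max x 0 ^ 2 / 2 :=
      abs_of_nonneg (div_nonneg (sq_nonneg _) (by norm_num))
    have h3 : x ^ 2 = |x| * |x| := by rw [← abs_mul, ← sq, abs_of_nonneg (sq_nonneg x)]
    rw [h2]
    nlinarith [abs_nonneg x, h1]
  · have heq : (fun x : ℝ => max x 0 ^ 2 / 2) =ᶠ[nhds u] fun x => x ^ 2 / 2 := by
      filter_upwards [Ioi_mem_nhds h] with x hx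
      simp [max_eq_left (le_of_lt (Set.mem_Ioi.mp hx))]
    have : HasDerivAt (fun x : ℝ => x ^ 2 / 2) u u := by
      have := (hasDerivAt_pow 2 u).div_const 2
      simpa using this
    have h2 := this.congr_of_eventuallyEq heq
    simpa [max_eq_left (le_of_lt h)] using h2

/-- Lemma 3.3 (uniform-in-time bound for the auxiliary flocking system). -/
theorem stmt_6 (r : ℝ) (hr : 0 < r)
    (f : ℝ → ℝ)
    (hf_cont : ContinuousOn f (Set.Ici (0:ℝ)))
    (hf_mono : MonotoneOn f (Set.Ici (0:ℝ)))
    (hf_nonneg : ∀ s : ℝ, 0 ≤ s → 0 ≤ f s)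
    (X Y X' Y' : ℝ → ℝ)
    (hX_deriv : ∀ t ∈ Set.Ici (0:ℝ), HasDerivWithinAt X (X' t) (Set.Ici (0:ℝ)) t)
    (hY_deriv : ∀ t ∈ Set.Ici (0:ℝ), HasDerivWithinAt Y (Y' t) (Set.Ici (0:ℝ)) t)
    (hX'_cont : ContinuousOn X' (Set.Ici (0:ℝ)))
    (hY'_cont : ContinuousOn Y' (Set.Ici (0:ℝ)))
    (hXnonneg : ∀ t : ℝ, 0 ≤ t → 0 ≤ X t)
    (hODI1 : ∀ t : ℝ, 0 ≤ t → Y t - f (X t) ≤ X' t ∧ X' t ≤ Y t)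
    (hODI2 : ∀ t : ℝ, 0 ≤ t → Y' t = -(X t - r)) :
    ∀ t : ℝ, 0 ≤ t →
      X t ≤ r + max (Real.sqrt ((X 0 - r) ^ 2 + Y 0 ^ 2))
        (max (Y 0) (f r + 1) + r ^ 2 / 2) := by
  -- basic continuity / differentiability facts
  have hXc : ContinuousOn X (Set.Ici (0:ℝ)) := fun t ht => (hX_deriv t ht).continuousWithinAt
  have hYc : ContinuousOn Y (Set.Ici (0:ℝ)) := fun t ht => (hY_deriv t ht).continuousWithinAt
  have hXat : ∀ t : ℝ, 0 < t → HasDerivAt X (X' t) t :=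
    fun t ht => (hX_deriv t ht.le).hasDerivAt (Ici_mem_nhds ht)
  have hYat : ∀ t : ℝ, 0 < t → HasDerivAt Y (Y' t) t :=
    fun t ht => (hY_deriv t ht.le).hasDerivAt (Ici_mem_nhds ht)
  set c : ℝ := max (Y 0) (f r + 1) with hc_def
  set B : ℝ := c + r ^ 2 / 2 with hB_def
  set M : ℝ := max (Real.sqrt ((X 0 - r) ^ 2 + Y 0 ^ 2)) B with hM_def
  have hM0 : 0 ≤ M := le_trans (Real.sqrt_nonneg _) (le_max_left _ _)
  have hcB : c ≤ B := by
    rw [hB_def]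
    have : (0:ℝ) ≤ r ^ 2 / 2 := by positivity
    linarith
  -- STEP 1 : uniform upper bound on Y
  have hYB : ∀ s : ℝ, 0 ≤ s → Y s ≤ B := by
    intro ts hts
    by_contra hY
    push_neg at hY
    set T : Set ℝ := Set.Icc 0 ts ∩ Y ⁻¹' (Set.Iic c) with hT_def
    have hTclosed : IsClosed T :=
      (hYc.mono (Icc_subset_Ici_self)).preimage_isClosed_of_isClosed isClosed_Icc isClosed_Iic
    have hTcpt : IsCompact T :=
      isCompact_Icc.of_isClosed_subset hTclosed inter_subset_left
    have h0T : (0:ℝ) ∈ T :=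
      Set.mem_inter (Set.mem_Icc.mpr ⟨le_refl 0, hts⟩)
        (Set.mem_preimage.mpr (Set.mem_Iic.mpr (le_max_left _ _)))
    have hTne : T.Nonempty := ⟨0, h0T⟩
    set t0 : ℝ := sSup T with ht0_def
    have ht0T : t0 ∈ T := hTcpt.sSup_mem hTne
    obtain ⟨⟨ht00, ht0ts⟩, hYt0m⟩ := ht0T
    have hYt0 : Y t0 ≤ c := hYt0m
    have hgt : ∀ s ∈ Set.Ioc t0 ts, c < Y s := by
      intro s hs
      by_contra hle
      push_neg at hle
      rw [Set.mem_Ioc] at hs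
      have hsT : s ∈ T :=
        Set.mem_inter (Set.mem_Icc.mpr ⟨le_trans ht00 hs.1.le, hs.2⟩)
          (Set.mem_preimage.mpr (Set.mem_Iic.mpr hle))
      exact absurd (le_csSup hTcpt.bddAbove hsT) (not_le.mpr hs.1)
    have ht0lt : t0 < ts := by
      rcases lt_or_eq_of_le ht0ts with h | h
      · exact h
      · exfalso; rw [h] at hYt0; exact absurd hYt0 (not_le.mpr (lt_of_le_of_lt hcB hY))
    -- Lyapunov function V
    set V : ℝ → ℝ := fun s => Y s + max (r - X s) 0 ^ 2 / 2 with hV_def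
    have hgcont : Continuous (fun u : ℝ => max u 0 ^ 2 / 2) :=
      ((continuous_id.max continuous_const).pow 2).div_const 2
    have hVc : ContinuousOn V (Set.Icc t0 ts) := by
      have hsub : Set.Icc t0 ts ⊆ Set.Ici (0:ℝ) := fun x hx => le_trans ht00 hx.1
      exact (hYc.mono hsub).add
        (hgcont.comp_continuousOn (continuousOn_const.sub (hXc.mono hsub)))
    have hVd : ∀ s ∈ Set.Ioo t0 ts,
        HasDerivAt V (Y' s + max (r - X s) 0 * -(X' s)) s := by
      intro s hs
      have hspos : 0 < s := lt_of_le_of_lt ht00 hs.1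
      have h1 := (hasDerivAt_maxsq (r - X s)).comp s ((hXat s hspos).const_sub r)
      exact (hYat s hspos).add h1
    have hV0 : ∀ s ∈ Set.Ioo t0 ts, Y' s + max (r - X s) 0 * -(X' s) ≤ 0 := by
      intro s hs
      have hspos : 0 < s := lt_of_le_of_lt ht00 hs.1
      rw [hODI2 s hspos.le]
      rcases le_or_gt r (X s) with hxr | hxr
      · rw [max_eq_right (by linarith : r - X s ≤ 0)]
        linarith
      · rw [max_eq_left (by linarith : (0:ℝ) ≤ r - X s)]
        have hfle : f (X s) ≤ f r := hf_mono (hXnonneg s hspos.le) hr.le hxr.le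
        have hYgt : c < Y s := hgt s ⟨hs.1, hs.2.le⟩
        have hfr1 : f r + 1 ≤ c := le_max_right _ _
        have hX'ge : 1 ≤ X' s := by
          have := (hODI1 s hspos.le).1
          linarith
        nlinarith
    have hanti : AntitoneOn V (Set.Icc t0 ts) := aux_antitoneOn hVc hVd hV0
    have hVle : V ts ≤ V t0 :=
      hanti (left_mem_Icc.mpr ht0lt.le) (right_mem_Icc.mpr ht0lt.le) ht0lt.le
    have hmaxle : max (r - X t0) 0 ^ 2 ≤ r ^ 2 := by
      have h1 : max (r - X t0) 0 ≤ r :=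
        max_le (by linarith [hXnonneg t0 ht00]) hr.le
      have h2 : 0 ≤ max (r - X t0) 0 := le_max_right _ _
      nlinarith
    have : Y ts ≤ V ts := by
      have : (0:ℝ) ≤ max (r - X ts) 0 ^ 2 / 2 := by positivity
      simp only [hV_def]; linarith
    have : Y ts ≤ B := by
      have hVt0 : V t0 ≤ c + r ^ 2 / 2 := by
        simp only [hV_def]; linarith
      calc Y ts ≤ V ts := this
        _ ≤ V t0 := hVle
        _ ≤ c + r ^ 2 / 2 := hVt0
        _ = B := rfl
    linarith
  -- STEP 2 : the bound on X
  intro t2 ht2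
  by_contra hcon
  push_neg at hcon
  -- hcon : r + M < X t2
  have hXt2 : r + M < X t2 := hcon
  -- Energy function
  set E : ℝ → ℝ := fun s => (X s - r) ^ 2 + Y s ^ 2 with hE_def
  have hEd : ∀ s : ℝ, 0 < s →
      HasDerivAt E (2 * (X s - r) * X' s + 2 * Y s * Y' s) s := by
    intro s hs
    have h1 := (((hXat s hs).sub_const r).pow 2).add ((hYat s hs).pow 2)
    exact h1.congr_deriv (by norm_num)
  have hEcont : ∀ a b : ℝ, 0 ≤ a → ContinuousOn E (Set.Icc a b) := by
    intro a b ha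
    have hsub : Set.Icc a b ⊆ Set.Ici (0:ℝ) := fun x hx => le_trans ha hx.1
    exact (((hXc.mono hsub).sub continuousOn_const).pow 2).add ((hYc.mono hsub).pow 2)
  have hE0 : ∀ s : ℝ, 0 < s → r ≤ X s →
      2 * (X s - r) * X' s + 2 * Y s * Y' s ≤ 0 := by
    intro s hs hrx
    rw [hODI2 s hs.le]
    have h1 : X' s ≤ Y s := (hODI1 s hs.le).2
    nlinarith [mul_nonneg (sub_nonneg.mpr hrx) (sub_nonneg.mpr h1)]
  set S : Set ℝ := Set.Icc 0 t2 ∩ X ⁻¹' (Set.Iic r) with hS_def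
  by_cases hS : S.Nonempty
  · -- there is a time ≤ t2 with X ≤ r; take the last one
    have hSclosed : IsClosed S :=
      (hXc.mono (Icc_subset_Ici_self)).preimage_isClosed_of_isClosed isClosed_Icc isClosed_Iic
    have hScpt : IsCompact S := isCompact_Icc.of_isClosed_subset hSclosed inter_subset_left
    set t1 : ℝ := sSup S with ht1_def
    have ht1S : t1 ∈ S := hScpt.sSup_mem hS
    obtain ⟨⟨ht10, ht1t2⟩, hXt1m⟩ := ht1S
    have hXt1le : X t1 ≤ r := hXt1m
    have hgtX : ∀ s ∈ Set.Ioc t1 t2, r < X s := by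
      intro s hs
      by_contra hle
      push_neg at hle
      rw [Set.mem_Ioc] at hs
      have hsS : s ∈ S :=
        Set.mem_inter (Set.mem_Icc.mpr ⟨le_trans ht10 hs.1.le, hs.2⟩)
          (Set.mem_preimage.mpr (Set.mem_Iic.mpr hle))
      exact absurd (le_csSup hScpt.bddAbove hsS) (not_le.mpr hs.1)
    have ht1lt : t1 < t2 := by
      rcases lt_or_eq_of_le ht1t2 with h | h
      · exact h
      · exfalso; rw [h] at hXt1le
        have : r < X t2 := by linarith
        exact absurd hXt1le (not_le.mpr this)
    -- X t1 = r
    have hXt1 : X t1 = r := by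
      rcases lt_or_eq_of_le hXt1le with hlt | heq
      · exfalso
        have hcw : ContinuousWithinAt X (Set.Ici (0:ℝ)) t1 := hXc t1 ht10
        have hev : ∀ᶠ s in nhdsWithin t1 (Set.Ici (0:ℝ)), X s < r :=
          hcw (Iio_mem_nhds hlt)
        have hle' : nhdsWithin t1 (Set.Ioi t1) ≤ nhdsWithin t1 (Set.Ici (0:ℝ)) :=
          nhdsWithin_mono t1 (fun x hx => le_trans ht10 (le_of_lt hx))
        have hev2 : ∀ᶠ s in nhdsWithin t1 (Set.Ioi t1), X s < r := hle' hev
        have hev3 : Set.Ioo t1 t2 ∈ nhdsWithin t1 (Set.Ioi t1) :=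
          Ioo_mem_nhdsGT_of_mem ⟨le_refl t1, ht1lt⟩
        have hev4 : ∀ᶠ s in nhdsWithin t1 (Set.Ioi t1), s ∈ Set.Ioo t1 t2 := by
          filter_upwards [hev3] with s hs
          exact hs
        obtain ⟨s, hs1, hs2⟩ := (hev2.and hev4).exists
        exact absurd hs1 (not_lt.mpr (hgtX s ⟨hs2.1, hs2.2.le⟩).le)
      · exact heq
    -- energy decreases on [t1, t2]
    have hEanti : AntitoneOn E (Set.Icc t1 t2) := by
      apply aux_antitoneOn (hEcont t1 t2 ht10)
      · intro s hs; exact hEd s (lt_of_le_of_lt ht10 hs.1)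
      · intro s hs
        exact hE0 s (lt_of_le_of_lt ht10 hs.1) (hgtX s ⟨hs.1, hs.2.le⟩).le
    have hEle : E t2 ≤ E t1 :=
      hEanti (left_mem_Icc.mpr ht1lt.le) (right_mem_Icc.mpr ht1lt.le) ht1lt.le
    have hEt1 : E t1 = Y t1 ^ 2 := by simp [hE_def, hXt1]
    -- Y is antitone on [t1, t2]
    have hYanti : AntitoneOn Y (Set.Icc t1 t2) := by
      apply aux_antitoneOn (hYc.mono (fun x hx => le_trans ht10 hx.1))
      · intro s hs; exact hYat s (lt_of_le_of_lt ht10 hs.1)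
      · intro s hs
        rw [hODI2 s (lt_of_le_of_lt ht10 hs.1).le]
        have := hgtX s ⟨hs.1, hs.2.le⟩
        linarith
    -- Y t1 ≥ 0
    have hYt1nn : 0 ≤ Y t1 := by
      by_contra hneg
      push_neg at hneg
      have hXanti : AntitoneOn X (Set.Icc t1 t2) := by
        apply aux_antitoneOn (hXc.mono (fun x hx => le_trans ht10 hx.1))
        · intro s hs; exact hXat s (lt_of_le_of_lt ht10 hs.1)
        · intro s hs
          have h1 : X' s ≤ Y s := (hODI1 s (lt_of_le_of_lt ht10 hs.1).le).2
          have h2 : Y s ≤ Y t1 :=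
            hYanti (left_mem_Icc.mpr ht1lt.le) ⟨hs.1.le, hs.2.le⟩ hs.1.le
          linarith
      have : X t2 ≤ X t1 :=
        hXanti (left_mem_Icc.mpr ht1lt.le) (right_mem_Icc.mpr ht1lt.le) ht1lt.le
      rw [hXt1] at this
      linarith
    -- conclude
    have hsq : (X t2 - r) ^ 2 ≤ Y t1 ^ 2 := by
      have : (X t2 - r) ^ 2 ≤ E t2 := by
        have : (0:ℝ) ≤ Y t2 ^ 2 := sq_nonneg _
        simp only [hE_def]; linarith
      calc (X t2 - r) ^ 2 ≤ E t2 := this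
        _ ≤ E t1 := hEle
        _ = Y t1 ^ 2 := hEt1
    have hXt2r : 0 ≤ X t2 - r := by linarith
    have h1 : X t2 - r ≤ Y t1 := by nlinarith
    have h2 : Y t1 ≤ B := hYB t1 ht10
    have h3 : B ≤ M := le_max_right _ _
    linarith
  · -- X > r on all of [0, t2]
    have hgtX : ∀ s ∈ Set.Icc 0 t2, r < X s := by
      intro s hs
      by_contra hle
      push_neg at hle
      exact hS ⟨s, hs, hle⟩
    have hEanti : AntitoneOn E (Set.Icc 0 t2) := by
      apply aux_antitoneOn (hEcont 0 t2 le_rfl)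
      · intro s hs; exact hEd s hs.1
      · intro s hs; exact hE0 s hs.1 (hgtX s ⟨hs.1.le, hs.2.le⟩).le
    have hEle : E t2 ≤ E 0 :=
      hEanti (left_mem_Icc.mpr ht2) (right_mem_Icc.mpr ht2) ht2
    have hsq : (X t2 - r) ^ 2 ≤ (X 0 - r) ^ 2 + Y 0 ^ 2 := by
      have : (0:ℝ) ≤ Y t2 ^ 2 := sq_nonneg _
      simp only [hE_def] at hEle
      linarith
    have hXt2r : 0 ≤ X t2 - r := by linarith
    have hsum : (0:ℝ) ≤ (X 0 - r) ^ 2 + Y 0 ^ 2 := by positivity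
    have h1 : X t2 - r ≤ Real.sqrt ((X 0 - r) ^ 2 + Y 0 ^ 2) :=
      (Real.le_sqrt hXt2r hsum).mpr hsq
    have h2 : Real.sqrt ((X 0 - r) ^ 2 + Y 0 ^ 2) ≤ M := le_max_left _ _
    linarith
end

section
/- Consider the one-dimensional Lagrangian alignment system: μ₀ is a compactly supported Borel probability measure on ℝ whose support contains at least two points; ψ : ℝ → [0,∞) is even, nonincreasing on [0,∞), locally integrable, with primitive Ψ(r) := ∫₀^r ψ(s) ds; W : ℝ → ℝ is C¹ and satisfies λ·(x − y) ≤ W′(x) − W′(y) for all x > y, for some λ > 0; η, ω : [0,∞) × ℝ → ℝ are continuous in (t,x), continuously differentiable in t with time derivatives continuous in (t,x), satisfy for all t ≥ 0 and all x in supp μ₀: ∂_t η(t,x) = ω(t,x) − ∫ Ψ(η(t,x) − η(t,y)) dμ₀(y) and ∂_t ω(t,x) = −∫ W′(η(t,x) − η(t,y)) dμ₀(y), and satisfy strict order preservation: η(t,x) > η(t,y) whenever x, y ∈ supp μ₀ with x > y. Set v(t,x) := ∂_t η(t,x), and define the diameters D_η(t) := sup_{x,y ∈ supp μ₀} |η(t,x)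 − η(t,y)|, and similarly D_ω(t) and D_v(t). Then D_η(t) + D_ω(t) + D_v(t) → 0 as t → ∞. -/
open MeasureTheory Filter Topology intervalIntegral

/-- The topological support of a Borel measure on ℝ: points all of whose neighborhoods
have positive measure. -/
def msupp (μ : MeasureTheory.Measure ℝ) : Set ℝ := {x : ℝ | ∀ U ∈ nhds x, μ U ≠ 0}

/-- The diameter `sup_{x,y ∈ S} |h x - h y|` of the image of a set `S` under `h`. -/
noncomputable def setDiam (S : Set ℝ) (h : ℝ → ℝ) : ℝ :=
  sSup ((fun p : ℝ × ℝ => |h p.1 - h p.2|) '' (S ×ˢ S))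

section helpers

open Set

lemma msupp_closed' (μ : Measure ℝ) : IsClosed (msupp μ) := by
  rw [← isOpen_compl_iff, isOpen_iff_mem_nhds]
  intro x hx
  simp only [msupp, mem_compl_iff, mem_setOf_eq, not_forall] at hx
  obtain ⟨U, hU, hUz⟩ := hx
  obtain ⟨V, hVU, hVo, hxV⟩ := mem_nhds_iff.1 hU
  rw [not_not] at hUz
  filter_upwards [hVo.mem_nhds hxV] with y hy
  simp only [msupp, mem_compl_iff, mem_setOf_eq, not_forall]
  exact ⟨V, hVo.mem_nhds hy, by rw [not_not]; exact measure_mono_null hVU hUz⟩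

lemma msupp_compl_null' (μ : Measure ℝ) : μ (msupp μ)ᶜ = 0 := by
  have : ∀ x : ((msupp μ)ᶜ : Set ℝ), ∃ V : Set ℝ, IsOpen V ∧ (x:ℝ) ∈ V ∧ μ V = 0 := by
    rintro ⟨x, hx⟩
    simp only [msupp, mem_compl_iff, mem_setOf_eq, not_forall] at hx
    obtain ⟨U, hU, hUz⟩ := hx
    obtain ⟨V, hVU, hVo, hxV⟩ := mem_nhds_iff.1 hU
    rw [not_not] at hUz
    exact ⟨V, hVo, hxV, measure_mono_null hVU hUz⟩
  choose V hVo hxV hV0 using this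
  obtain ⟨T, hTc, hTU⟩ := TopologicalSpace.isOpen_iUnion_countable V hVo
  have hcover : (msupp μ)ᶜ ⊆ ⋃ i ∈ T, V i := by
    intro x hx
    rw [hTU]
    exact mem_iUnion.2 ⟨⟨x, hx⟩, hxV _⟩
  exact measure_mono_null hcover ((measure_biUnion_null_iff hTc).2 fun i _ => hV0 i)

lemma ftc_Ici {F F' : ℝ → ℝ}
    (hd : ∀ t ∈ Set.Ici (0:ℝ), HasDerivWithinAt F (F' t) (Set.Ici 0) t)
    (hF' : Continuous F') {s t : ℝ} (hs : 0 ≤ s) (hst : s ≤ t) :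
    F t - F s = ∫ u in s..t, F' u := by
  rw [intervalIntegral.integral_eq_sub_of_hasDeriv_right_of_le hst ?_ ?_ (hF'.intervalIntegrable s t)]
  · intro x hx
    have h1 : ContinuousWithinAt F (Set.Ici 0) x := (hd x (le_trans hs hx.1)).continuousWithinAt
    exact h1.mono (fun y hy => le_trans hs hy.1)
  · intro x hx
    exact (hd x (le_trans hs hx.1.le)).mono (Ioi_subset_Ici (le_trans hs hx.1.le))

lemma deriv_le_linear {F F' : ℝ → ℝ}
    (hd : ∀ t ∈ Set.Ici (0:ℝ), HasDerivWithinAt F (F' t) (Set.Ici 0) t)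
    (hF' : Continuous F') {s t c : ℝ} (hs : 0 ≤ s) (hst : s ≤ t)
    (hc : ∀ u ∈ Set.Icc s t, F' u ≤ c) :
    F t - F s ≤ c * (t - s) := by
  rw [ftc_Ici hd hF' hs hst]
  calc ∫ u in s..t, F' u ≤ ∫ _u in s..t, c :=
        intervalIntegral.integral_mono_on hst (hF'.intervalIntegrable s t)
          intervalIntegrable_const hc
    _ = c * (t - s) := by simp [mul_comm]

lemma deriv_ge_linear {F F' : ℝ → ℝ}
    (hd : ∀ t ∈ Set.Ici (0:ℝ), HasDerivWithinAt F (F' t) (Set.Ici 0) t)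
    (hF' : Continuous F') {s t c : ℝ} (hs : 0 ≤ s) (hst : s ≤ t)
    (hc : ∀ u ∈ Set.Icc s t, c ≤ F' u) :
    c * (t - s) ≤ F t - F s := by
  rw [ftc_Ici hd hF' hs hst]
  calc (c : ℝ) * (t - s) = ∫ _u in s..t, c := by simp [mul_comm]
    _ ≤ ∫ u in s..t, F' u := intervalIntegral.integral_mono_on hst
        intervalIntegrable_const (hF'.intervalIntegrable s t) hc

lemma setDiam_bounds {S : Set ℝ} {h : ℝ → ℝ} {c : ℝ} (hS : S.Nonempty)
    (hb : ∀ x ∈ S, ∀ y ∈ S, |h x - h y| ≤ c) :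
    0 ≤ setDiam S h ∧ setDiam S h ≤ c := by
  obtain ⟨x, hx⟩ := hS
  have hmem : (0:ℝ) ∈ (fun p : ℝ × ℝ => |h p.1 - h p.2|) '' (S ×ˢ S) :=
    ⟨(x, x), ⟨hx, hx⟩, by simp⟩
  have hub : ∀ z ∈ (fun p : ℝ × ℝ => |h p.1 - h p.2|) '' (S ×ˢ S), z ≤ c := by
    rintro z ⟨⟨p, q⟩, ⟨hp, hq⟩, rfl⟩
    exact hb p hp q hq
  constructor
  · exact le_csSup ⟨c, hub⟩ hmem
  · exact Real.sSup_le hub (le_trans (by simp) (hb x hx x hx))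

end helpers
set_option maxHeartbeats 1000000 in
/-- Proposition 3.1 (i): for the one-dimensional Lagrangian alignment system
with a λ-convex interaction potential, the flow, auxiliary and velocity diameters decay
to zero. -/
theorem stmt_7 (μ₀ : Measure ℝ) [IsProbabilityMeasure μ₀]
    (hsupp_cpt : IsCompact (msupp μ₀))
    (hsupp_nontriv : (msupp μ₀).Nontrivial)
    (ψ : ℝ → ℝ)
    (hψ_nonneg : ∀ s : ℝ, 0 ≤ ψ s)
    (hψ_even : ∀ s : ℝ, ψ (-s) = ψ s)
    (hψ_anti : ∀ ⦃s t : ℝ⦄, 0 ≤ s → s ≤ t → ψ t ≤ ψ s)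
    (hψ_loc : LocallyIntegrable ψ)
    (Ψ : ℝ → ℝ) (hΨ : ∀ r : ℝ, Ψ r = ∫ s in (0:ℝ)..r, ψ s)
    (W W' : ℝ → ℝ) (lam : ℝ) (hlam : 0 < lam)
    (hW_deriv : ∀ x : ℝ, HasDerivAt W (W' x) x)
    (hW'_cont : Continuous W')
    (hW_convex : ∀ x y : ℝ, y < x → lam * (x - y) ≤ W' x - W' y)
    (η ω ηt ωt : ℝ → ℝ → ℝ)
    (hη_cont : Continuous (fun p : ℝ × ℝ => η p.1 p.2))
    (hω_cont : Continuous (fun p : ℝ × ℝ => ω p.1 p.2))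
    (hηt_cont : Continuous (fun p : ℝ × ℝ => ηt p.1 p.2))
    (hωt_cont : Continuous (fun p : ℝ × ℝ => ωt p.1 p.2))
    (hη_deriv : ∀ x : ℝ, ∀ t ∈ Set.Ici (0:ℝ),
      HasDerivWithinAt (fun s => η s x) (ηt t x) (Set.Ici (0:ℝ)) t)
    (hω_deriv : ∀ x : ℝ, ∀ t ∈ Set.Ici (0:ℝ),
      HasDerivWithinAt (fun s => ω s x) (ωt t x) (Set.Ici (0:ℝ)) t)
    (heq_η : ∀ t : ℝ, 0 ≤ t → ∀ x ∈ msupp μ₀,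
      ηt t x = ω t x - ∫ y, Ψ (η t x - η t y) ∂μ₀)
    (heq_ω : ∀ t : ℝ, 0 ≤ t → ∀ x ∈ msupp μ₀,
      ωt t x = -∫ y, W' (η t x - η t y) ∂μ₀)
    (horder : ∀ t : ℝ, 0 ≤ t → ∀ x ∈ msupp μ₀, ∀ y ∈ msupp μ₀,
      y < x → η t y < η t x) :
    Tendsto (fun t : ℝ =>
        setDiam (msupp μ₀) (η t) + setDiam (msupp μ₀) (ω t) + setDiam (msupp μ₀) (ηt t))
      atTop (𝓝 0) := by
  classical
  set S := msupp μ₀ with hSdef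
  have hSne : S.Nonempty := hsupp_nontriv.nonempty
  have hnull : μ₀ Sᶜ = 0 := msupp_compl_null' μ₀
  have hrestr : μ₀.restrict S = μ₀ := by
    apply Measure.restrict_eq_self_of_ae_mem
    rw [ae_iff]
    simpa [Set.compl_def] using hnull
  obtain ⟨p, hp, q, hq, hpq⟩ := hsupp_nontriv
  set a := sSup S with hadef
  set b := sInf S with hbdef
  have ha : a ∈ S := hsupp_cpt.sSup_mem hSne
  have hb : b ∈ S := hsupp_cpt.sInf_mem hSne
  have hle_a : ∀ x ∈ S, x ≤ a := fun x hx => le_csSup hsupp_cpt.bddAbove hx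
  have hb_le : ∀ x ∈ S, b ≤ x := fun x hx => csInf_le hsupp_cpt.bddBelow hx
  have hba : b < a := by
    rcases lt_or_gt_of_ne hpq with h | h
    · exact lt_of_le_of_lt (hb_le p hp) (lt_of_lt_of_le h (hle_a q hq))
    · exact lt_of_le_of_lt (hb_le q hq) (lt_of_lt_of_le h (hle_a p hp))
  -- monotonicity of η in space
  have hmono : ∀ t, 0 ≤ t → ∀ x ∈ S, ∀ y ∈ S, y ≤ x → η t y ≤ η t x := by
    intro t ht x hx y hy hyx
    rcases eq_or_lt_of_le hyx with rfl | h
    · exact le_rfl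
    · exact (horder t ht x hx y hy h).le
  have hdpos : ∀ t, 0 ≤ t → ∀ x ∈ S, ∀ y ∈ S, y < x → 0 < η t x - η t y :=
    fun t ht x hx y hy h => sub_pos.2 (horder t ht x hx y hy h)
  have hdle : ∀ t, 0 ≤ t → ∀ x ∈ S, ∀ y ∈ S, η t x - η t y ≤ η t a - η t b :=
    fun t ht x hx y hy =>
      sub_le_sub (hmono t ht a ha x hx (hle_a x hx)) (hmono t ht y hy b hb (hb_le y hy))
  -- ψ and Ψ facts
  have hψ_le : ∀ s : ℝ, ψ s ≤ ψ 0 := by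
    intro s
    rcases le_or_gt 0 s with h | h
    · exact hψ_anti le_rfl h
    · rw [← hψ_even s]
      exact hψ_anti le_rfl (by linarith)
  have hψ0 : 0 ≤ ψ 0 := hψ_nonneg 0
  have hψInt : ∀ u v : ℝ, IntervalIntegrable ψ Real.measureSpace.volume u v := by
    intro u v
    rw [intervalIntegrable_iff]
    exact (hψ_loc.integrableOn_isCompact isCompact_uIcc).mono_set Set.uIoc_subset_uIcc
  have hΨdiff : ∀ u v : ℝ, Ψ u - Ψ v = ∫ s in v..u, ψ s := by
    intro u v
    rw [hΨ u, hΨ v]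
    exact intervalIntegral.integral_interval_sub_left (hψInt 0 u) (hψInt 0 v)
  have hΨmono : ∀ {u v : ℝ}, v ≤ u → 0 ≤ Ψ u - Ψ v := by
    intro u v h
    rw [hΨdiff u v]
    exact intervalIntegral.integral_nonneg h (fun s _ => hψ_nonneg s)
  have hΨlip : ∀ {u v : ℝ}, v ≤ u → Ψ u - Ψ v ≤ ψ 0 * (u - v) := by
    intro u v h
    rw [hΨdiff u v]
    calc ∫ s in v..u, ψ s ≤ ∫ _s in v..u, ψ 0 :=
          intervalIntegral.integral_mono_on h (hψInt v u) intervalIntegrable_const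
            (fun s _ => hψ_le s)
      _ = ψ 0 * (u - v) := by simp [mul_comm]
  -- slice continuity
  have hηz : ∀ t : ℝ, Continuous (fun z => η t z) :=
    fun t => hη_cont.comp (continuous_const.prodMk continuous_id)
  have hωx : ∀ x : ℝ, Continuous (fun t => ω t x) :=
    fun x => hω_cont.comp (continuous_id.prodMk continuous_const)
  have hηx : ∀ x : ℝ, Continuous (fun t => η t x) :=
    fun x => hη_cont.comp (continuous_id.prodMk continuous_const)
  have hηtx : ∀ x : ℝ, Continuous (fun t => ηt t x) :=
    fun x => hηt_cont.comp (continuous_id.prodMk continuous_const)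
  have hωtx : ∀ x : ℝ, Continuous (fun t => ωt t x) :=
    fun x => hωt_cont.comp (continuous_id.prodMk continuous_const)
  have hΨcont : Continuous Ψ := by
    have := intervalIntegral.continuous_primitive hψInt 0
    have he : Ψ = fun r => ∫ s in (0:ℝ)..r, ψ s := funext hΨ
    rw [he]
    exact this
  -- integrability over μ₀
  have hIntΨ : ∀ t c : ℝ, Integrable (fun z => Ψ (c - η t z)) μ₀ := by
    intro t c
    have hcont : Continuous (fun z => Ψ (c - η t z)) :=
      hΨcont.comp (continuous_const.sub (hηz t))
    have h2 : IntegrableOn (fun z => Ψ (c - η t z)) S μ₀ :=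
      hcont.continuousOn.integrableOn_compact hsupp_cpt
    rwa [IntegrableOn, hrestr] at h2
  have hIntW : ∀ t c : ℝ, Integrable (fun z => W' (c - η t z)) μ₀ := by
    intro t c
    have hcont : Continuous (fun z => W' (c - η t z)) :=
      hW'_cont.comp (continuous_const.sub (hηz t))
    have h2 : IntegrableOn (fun z => W' (c - η t z)) S μ₀ :=
      hcont.continuousOn.integrableOn_compact hsupp_cpt
    rwa [IntegrableOn, hrestr] at h2
  -- equation differences
  have hvd : ∀ t, 0 ≤ t → ∀ x ∈ S, ∀ y ∈ S,
      ηt t x - ηt t y = (ω t x - ω t y) -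
        ∫ z, (Ψ (η t x - η t z) - Ψ (η t y - η t z)) ∂μ₀ := by
    intro t ht x hx y hy
    rw [heq_η t ht x hx, heq_η t ht y hy, integral_sub (hIntΨ t (η t x)) (hIntΨ t (η t y))]
    ring
  have hwd : ∀ t, 0 ≤ t → ∀ x ∈ S, ∀ y ∈ S,
      ωt t x - ωt t y = -∫ z, (W' (η t x - η t z) - W' (η t y - η t z)) ∂μ₀ := by
    intro t ht x hx y hy
    rw [heq_ω t ht x hx, heq_ω t ht y hy, integral_sub (hIntW t (η t x)) (hIntW t (η t y))]
    ring
  have hI_nonneg : ∀ t, 0 ≤ t → ∀ x ∈ S, ∀ y ∈ S, y ≤ x →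
      0 ≤ ∫ z, (Ψ (η t x - η t z) - Ψ (η t y - η t z)) ∂μ₀ := by
    intro t ht x hx y hy hyx
    apply MeasureTheory.integral_nonneg
    intro z
    exact hΨmono (sub_le_sub_right (hmono t ht x hx y hy hyx) (η t z))
  have hI_le : ∀ t, 0 ≤ t → ∀ x ∈ S, ∀ y ∈ S, y ≤ x →
      (∫ z, (Ψ (η t x - η t z) - Ψ (η t y - η t z)) ∂μ₀) ≤ ψ 0 * (η t x - η t y) := by
    intro t ht x hx y hy hyx
    calc (∫ z, (Ψ (η t x - η t z) - Ψ (η t y - η t z)) ∂μ₀)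
        ≤ ∫ _z, ψ 0 * (η t x - η t y) ∂μ₀ := by
          apply integral_mono ((hIntΨ t (η t x)).sub (hIntΨ t (η t y))) (integrable_const _)
          intro z
          have h1 := hΨlip (sub_le_sub_right (hmono t ht x hx y hy hyx) (η t z))
          calc Ψ (η t x - η t z) - Ψ (η t y - η t z)
              ≤ ψ 0 * ((η t x - η t z) - (η t y - η t z)) := h1
            _ = ψ 0 * (η t x - η t y) := by ring
      _ = ψ 0 * (η t x - η t y) := by simp
  have hJ_ge : ∀ t, 0 ≤ t → ∀ x ∈ S, ∀ y ∈ S, y < x →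
      lam * (η t x - η t y) ≤ ∫ z, (W' (η t x - η t z) - W' (η t y - η t z)) ∂μ₀ := by
    intro t ht x hx y hy hyx
    calc lam * (η t x - η t y) = ∫ _z, lam * (η t x - η t y) ∂μ₀ := by simp
      _ ≤ ∫ z, (W' (η t x - η t z) - W' (η t y - η t z)) ∂μ₀ := by
          apply integral_mono (integrable_const _) ((hIntW t (η t x)).sub (hIntW t (η t y)))
          intro z
          have hlt : η t y - η t z < η t x - η t z :=
            sub_lt_sub_right (horder t ht x hx y hy hyx) (η t z)
          have h1 := hW_convex (η t x - η t z) (η t y - η t z) hlt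
          calc lam * (η t x - η t y) = lam * ((η t x - η t z) - (η t y - η t z)) := by ring
            _ ≤ W' (η t x - η t z) - W' (η t y - η t z) := h1
  -- derivative bundles
  have hDd : ∀ x y : ℝ, ∀ t ∈ Set.Ici (0:ℝ),
      HasDerivWithinAt (fun s => η s x - η s y) (ηt t x - ηt t y) (Set.Ici 0) t :=
    fun x y t ht => (hη_deriv x t ht).sub (hη_deriv y t ht)
  have hDw : ∀ x y : ℝ, ∀ t ∈ Set.Ici (0:ℝ),
      HasDerivWithinAt (fun s => ω s x - ω s y) (ωt t x - ωt t y) (Set.Ici 0) t :=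
    fun x y t ht => (hω_deriv x t ht).sub (hω_deriv y t ht)
  have hcontdv : ∀ x y : ℝ, Continuous (fun t => ηt t x - ηt t y) :=
    fun x y => (hηtx x).sub (hηtx y)
  have hcontwv : ∀ x y : ℝ, Continuous (fun t => ωt t x - ωt t y) :=
    fun x y => (hωtx x).sub (hωtx y)
  -- velocity bounds
  have hwv_le : ∀ x ∈ S, ∀ y ∈ S, y < x → ∀ t, 0 ≤ t →
      ωt t x - ωt t y ≤ -(lam * (η t x - η t y)) := by
    intro x hx y hy hyx t ht
    rw [hwd t ht x hx y hy]
    exact neg_le_neg (hJ_ge t ht x hx y hy hyx)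
  have hdv_le_w : ∀ x ∈ S, ∀ y ∈ S, y ≤ x → ∀ t, 0 ≤ t →
      ηt t x - ηt t y ≤ ω t x - ω t y := by
    intro x hx y hy hyx t ht
    rw [hvd t ht x hx y hy]
    linarith [hI_nonneg t ht x hx y hy hyx]
  have hdv_ge : ∀ x ∈ S, ∀ y ∈ S, y ≤ x → ∀ t, 0 ≤ t →
      (ω t x - ω t y) - ψ 0 * (η t x - η t y) ≤ ηt t x - ηt t y := by
    intro x hx y hy hyx t ht
    rw [hvd t ht x hx y hy]
    linarith [hI_le t ht x hx y hy hyx]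
  -- w is antitone on pairs
  have hwanti : ∀ x ∈ S, ∀ y ∈ S, y < x → ∀ s t : ℝ, 0 ≤ s → s ≤ t →
      ω t x - ω t y ≤ ω s x - ω s y := by
    intro x hx y hy hyx s t hs hst
    have h := deriv_le_linear (hDw x y) (hcontwv x y) hs hst (c := 0) ?_
    · linarith
    · intro u hu
      have hu0 : 0 ≤ u := le_trans hs hu.1
      have h1 := hwv_le x hx y hy hyx u hu0
      have h2 := hdpos u hu0 x hx y hy hyx
      nlinarith
  -- w is nonnegative on pairs
  have hwpos : ∀ x ∈ S, ∀ y ∈ S, y < x → ∀ t, 0 ≤ t → 0 ≤ ω t x - ω t y := by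
    intro x hx y hy hyx T hT
    by_contra hneg
    push_neg at hneg
    have hB : ω T x - ω T y ≠ 0 := ne_of_lt hneg
    have hdTpos : 0 < η T x - η T y := hdpos T hT x hx y hy hyx
    have hq : 0 ≤ (η T x - η T y) / (-(ω T x - ω T y)) := div_nonneg hdTpos.le (by linarith)
    have hTt : T ≤ T + (η T x - η T y) / (-(ω T x - ω T y)) + 1 := by linarith
    have hb1 := deriv_le_linear (hDd x y) (hcontdv x y) hT hTt (c := ω T x - ω T y) ?_
    · have harith : (ω T x - ω T y) * ((T + (η T x - η T y) / (-(ω T x - ω T y)) + 1) - T)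
          = -(η T x - η T y) + (ω T x - ω T y) := by
        have h5 : (ω T x - ω T y) * ((η T x - η T y) / -(ω T x - ω T y))
            = -(η T x - η T y) := by
          rw [div_neg, mul_neg, mul_div_cancel₀]
          exact hB
        have e : (T + (η T x - η T y) / (-(ω T x - ω T y)) + 1) - T
            = (η T x - η T y) / -(ω T x - ω T y) + 1 := by ring
        rw [e, mul_add, h5, mul_one]
      rw [harith] at hb1
      have hdtpos : 0 < η (T + (η T x - η T y) / (-(ω T x - ω T y)) + 1) x
          - η (T + (η T x - η T y) / (-(ω T x - ω T y)) + 1) y :=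
        hdpos _ (le_trans hT hTt) x hx y hy hyx
      linarith
    · intro u hu
      have hu0 : 0 ≤ u := le_trans hT hu.1
      calc ηt u x - ηt u y ≤ ω u x - ω u y := hdv_le_w x hx y hy hyx.le u hu0
        _ ≤ ω T x - ω T y := hwanti x hx y hy hyx T u hT hu.1
  -- auxiliary arithmetic fact
  have haux : ∀ c : ℝ, 0 ≤ c → ψ 0 * (c / (2 * (ψ 0 + 1))) ≤ c / 2 := by
    intro c hc
    have h2 : (0:ℝ) < 2 * (ψ 0 + 1) := by linarith
    rw [← mul_div_assoc, div_le_iff₀ h2]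
    nlinarith
  -- Step P3 : the extreme ω-difference tends to 0
  have hwab : ∀ ε : ℝ, 0 < ε → ∃ T, 0 ≤ T ∧ ∀ t, T ≤ t → ω t a - ω t b ≤ ε := by
    intro ε hε
    by_contra hcon
    push_neg at hcon
    have hweps : ∀ s, 0 ≤ s → ε ≤ ω s a - ω s b := by
      intro s hs
      obtain ⟨t, hst, htw⟩ := hcon s hs
      exact le_trans htw.le (hwanti a ha b hb hba s t hs hst)
    have hψ1pos : (0:ℝ) < ψ 0 + 1 := by linarith
    have hexp : ∀ s : ℝ, HasDerivAt (fun u : ℝ => Real.exp ((ψ 0 + 1) * u))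
        ((ψ 0 + 1) * Real.exp ((ψ 0 + 1) * s)) s := by
      intro s
      have h1 : HasDerivAt (fun u : ℝ => (ψ 0 + 1) * u) (ψ 0 + 1) s := by
        simpa using (hasDerivAt_id s).const_mul (ψ 0 + 1)
      simpa [mul_comm] using h1.exp
    have hK : ∀ t ∈ Set.Ici (0:ℝ), HasDerivWithinAt
        (fun s => (η s a - η s b) * Real.exp ((ψ 0 + 1) * s)
          - ε / (ψ 0 + 1) * Real.exp ((ψ 0 + 1) * s))
        (((ηt t a - ηt t b) * Real.exp ((ψ 0 + 1) * t)
          + (η t a - η t b) * ((ψ 0 + 1) * Real.exp ((ψ 0 + 1) * t)))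
          - ε / (ψ 0 + 1) * ((ψ 0 + 1) * Real.exp ((ψ 0 + 1) * t))) (Set.Ici 0) t := by
      intro t ht
      exact ((hDd a b t ht).mul ((hexp t).hasDerivWithinAt)).sub
        ((HasDerivAt.const_mul (ε / (ψ 0 + 1)) (hexp t)).hasDerivWithinAt)
    have hEcont : Continuous (fun t : ℝ => Real.exp ((ψ 0 + 1) * t)) :=
      Real.continuous_exp.comp (continuous_const.mul continuous_id)
    have hKcont : Continuous (fun t => (((ηt t a - ηt t b) * Real.exp ((ψ 0 + 1) * t)
          + (η t a - η t b) * ((ψ 0 + 1) * Real.exp ((ψ 0 + 1) * t)))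
          - ε / (ψ 0 + 1) * ((ψ 0 + 1) * Real.exp ((ψ 0 + 1) * t)))) :=
      (((hcontdv a b).mul hEcont).add
        (((hηx a).sub (hηx b)).mul (continuous_const.mul hEcont))).sub
        (continuous_const.mul (continuous_const.mul hEcont))
    have hbar : ∀ t, 0 ≤ t →
        min (η 0 a - η 0 b) (ε / (ψ 0 + 1)) ≤ η t a - η t b := by
      intro t ht
      have hlin := deriv_ge_linear (c := 0) hK hKcont le_rfl ht ?_
      · simp only [Real.exp_zero, mul_zero, mul_one, zero_mul, sub_zero] at hlin
        have hEpos : (0:ℝ) < Real.exp ((ψ 0 + 1) * t) := Real.exp_pos _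
        have hE1 : (1:ℝ) ≤ Real.exp ((ψ 0 + 1) * t) :=
          Real.one_le_exp (by positivity)
        have h9 : (η 0 a - η 0 b) - ε / (ψ 0 + 1)
            + ε / (ψ 0 + 1) * Real.exp ((ψ 0 + 1) * t)
            ≤ (η t a - η t b) * Real.exp ((ψ 0 + 1) * t) := by linarith
        have h6 : min (η 0 a - η 0 b) (ε / (ψ 0 + 1)) ≤ η 0 a - η 0 b := min_le_left _ _
        have h7 : min (η 0 a - η 0 b) (ε / (ψ 0 + 1)) ≤ ε / (ψ 0 + 1) := min_le_right _ _
        have h10 : min (η 0 a - η 0 b) (ε / (ψ 0 + 1)) * (Real.exp ((ψ 0 + 1) * t) - 1)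
            ≤ ε / (ψ 0 + 1) * (Real.exp ((ψ 0 + 1) * t) - 1) :=
          mul_le_mul_of_nonneg_right h7 (by linarith)
        have h8 : min (η 0 a - η 0 b) (ε / (ψ 0 + 1)) * Real.exp ((ψ 0 + 1) * t)
            ≤ (η t a - η t b) * Real.exp ((ψ 0 + 1) * t) := by nlinarith
        exact le_of_mul_le_mul_right h8 hEpos
      · intro u hu
        have hu0 : 0 ≤ u := hu.1
        have hd1 := hdv_ge a ha b hb hba.le u hu0
        have hw1 := hweps u hu0
        have hdp := hdpos u hu0 a ha b hb hba
        have hep : (0:ℝ) < Real.exp ((ψ 0 + 1) * u) := Real.exp_pos _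
        have hcanc : ε / (ψ 0 + 1) * (ψ 0 + 1) = ε := div_mul_cancel₀ ε (ne_of_gt hψ1pos)
        have hr : ε / (ψ 0 + 1) * ((ψ 0 + 1) * Real.exp ((ψ 0 + 1) * u))
            = ε * Real.exp ((ψ 0 + 1) * u) := by rw [← mul_assoc, hcanc]
        rw [hr]
        nlinarith [mul_nonneg (sub_nonneg.2 hd1) hep.le,
          mul_nonneg (sub_nonneg.2 hw1) hep.le, mul_pos hdp hep]
    -- now derive the contradiction
    have hm : 0 < min (η 0 a - η 0 b) (ε / (ψ 0 + 1)) :=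
      lt_min (hdpos 0 le_rfl a ha b hb hba) (div_pos hε hψ1pos)
    have hC : 0 < lam * min (η 0 a - η 0 b) (ε / (ψ 0 + 1)) := mul_pos hlam hm
    have hw0 : ε ≤ ω 0 a - ω 0 b := hweps 0 le_rfl
    have ht0' : 0 ≤ (ω 0 a - ω 0 b) / (lam * min (η 0 a - η 0 b) (ε / (ψ 0 + 1))) + 1 := by
      have := div_nonneg (by linarith : (0:ℝ) ≤ ω 0 a - ω 0 b) hC.le
      linarith
    have hlin := deriv_le_linear
      (c := -(lam * min (η 0 a - η 0 b) (ε / (ψ 0 + 1))))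
      (hDw a b) (hcontwv a b) le_rfl ht0' ?_
    · have h11 : (ω 0 a - ω 0 b) / (lam * min (η 0 a - η 0 b) (ε / (ψ 0 + 1)))
          * (lam * min (η 0 a - η 0 b) (ε / (ψ 0 + 1))) = ω 0 a - ω 0 b :=
        div_mul_cancel₀ _ (ne_of_gt hC)
      have h12 := hweps _ ht0'
      nlinarith
    · intro u hu
      have hu0 : 0 ≤ u := hu.1
      have h1 := hwv_le a ha b hb hba u hu0
      have h2 := hbar u hu0
      nlinarith
  -- Step P4 : the extreme η-difference tends to 0
  have hdab : ∀ ε : ℝ, 0 < ε → ∃ T, 0 ≤ T ∧ ∀ t, T ≤ t → η t a - η t b ≤ ε := by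
    intro ε hε
    obtain ⟨δ, hδpos, hδε, hδlam⟩ : ∃ δ : ℝ, 0 < δ ∧ δ ≤ ε ∧ 8 * (δ * δ) ≤ lam * (ε * ε) := by
      refine ⟨min ε (lam * ε / 8), lt_min hε (by positivity), min_le_left _ _, ?_⟩
      have h1 : min ε (lam * ε / 8) ≤ ε := min_le_left _ _
      have h2 : min ε (lam * ε / 8) ≤ lam * ε / 8 := min_le_right _ _
      have h3 : 0 < min ε (lam * ε / 8) := lt_min hε (by positivity)
      nlinarith
    obtain ⟨T, hT0, hTw⟩ := hwab δ hδpos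
    have hh : 0 < ε / (2 * δ) := by positivity
    refine ⟨T + ε / (2 * δ), by linarith, fun t ht => ?_⟩
    by_contra hcon
    push_neg at hcon
    have hth : T ≤ t - ε / (2 * δ) := by linarith
    have ht0 : 0 ≤ t - ε / (2 * δ) := le_trans hT0 hth
    by_cases hcase : ∃ s ∈ Set.Icc (t - ε / (2 * δ)) t, η s a - η s b ≤ ε / 2
    · obtain ⟨s, hs, hsle⟩ := hcase
      have hs0 : 0 ≤ s := le_trans ht0 hs.1
      have hlin := deriv_le_linear (c := δ) (hDd a b) (hcontdv a b) hs0 hs.2 ?_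
      · have h1 : t - s ≤ ε / (2 * δ) := by linarith [hs.1]
        have h2 : δ * (t - s) ≤ δ * (ε / (2 * δ)) := mul_le_mul_of_nonneg_left h1 hδpos.le
        have h3 : δ * (ε / (2 * δ)) = ε / 2 := by
          field_simp
        linarith
      · intro u hu
        have hu0 : 0 ≤ u := le_trans hs0 hu.1
        calc ηt u a - ηt u b ≤ ω u a - ω u b := hdv_le_w a ha b hb hba.le u hu0
          _ ≤ δ := hTw u (le_trans hth (le_trans hs.1 hu.1))
    · push_neg at hcase
      have hlin := deriv_le_linear (c := -(lam * (ε / 2))) (hDw a b) (hcontwv a b) ht0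
        (by linarith : t - ε / (2 * δ) ≤ t) ?_
      · have hwt := hwpos a ha b hb hba t (by linarith)
        have hwth := hTw (t - ε / (2 * δ)) hth
        have e : t - (t - ε / (2 * δ)) = ε / (2 * δ) := by ring
        rw [e] at hlin
        have hfin : lam * (ε / 2) * (ε / (2 * δ)) ≤ δ := by nlinarith
        have hid : lam * (ε / 2) * (ε / (2 * δ)) = lam * ε * ε / (4 * δ) := by
          field_simp
          ring
        rw [hid, div_le_iff₀ (by positivity : (0:ℝ) < 4 * δ)] at hfin
        nlinarith
      · intro u hu
        have hu0 : 0 ≤ u := le_trans ht0 hu.1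
        have hdu : ε / 2 < η u a - η u b := hcase u hu
        have h1 := hwv_le a ha b hb hba u hu0
        nlinarith
  -- Step P6 : all ω-differences tend to 0 uniformly
  have hwall : ∀ ε : ℝ, 0 < ε → ∃ T, 0 ≤ T ∧ ∀ t, T ≤ t →
      ∀ x ∈ S, ∀ y ∈ S, y < x → ω t x - ω t y ≤ ε := by
    intro ε hε
    have hψ1pos : (0:ℝ) < ψ 0 + 1 := by linarith
    obtain ⟨T, hT0, hTd⟩ := hdab (ε / (2 * (ψ 0 + 1))) (div_pos hε (by linarith))
    refine ⟨T + 3, by linarith, fun t ht x hx y hy hyx => ?_⟩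
    by_contra hcon
    push_neg at hcon
    have ht0 : 0 ≤ t := by linarith
    have hψd : ∀ u, T ≤ u → ψ 0 * (η u x - η u y) ≤ ε / 2 := by
      intro u hu
      have hu0 : 0 ≤ u := le_trans hT0 hu
      have h1 : η u x - η u y ≤ ε / (2 * (ψ 0 + 1)) :=
        le_trans (hdle u hu0 x hx y hy) (hTd u hu)
      calc ψ 0 * (η u x - η u y) ≤ ψ 0 * (ε / (2 * (ψ 0 + 1))) :=
            mul_le_mul_of_nonneg_left h1 hψ0
        _ ≤ ε / 2 := haux ε hε.le
    have hlin := deriv_ge_linear (c := ε / 2) (hDd x y) (hcontdv x y) hT0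
      (by linarith : T ≤ t) ?_
    · have h1 : 0 < η T x - η T y := hdpos T hT0 x hx y hy hyx
      have h2 : η t x - η t y ≤ ε / (2 * (ψ 0 + 1)) :=
        le_trans (hdle t ht0 x hx y hy) (hTd t (by linarith))
      have h3 : ε / (2 * (ψ 0 + 1)) ≤ ε / 2 :=
        div_le_div_of_nonneg_left hε.le (by linarith) (by linarith)
      have h4 : (ε / 2) * 3 ≤ (ε / 2) * (t - T) :=
        mul_le_mul_of_nonneg_left (by linarith) (by positivity)
      linarith
    · intro u hu
      have hu0 : 0 ≤ u := le_trans hT0 hu.1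
      have hge := hdv_ge x hx y hy hyx.le u hu0
      have hwu : ε ≤ ω u x - ω u y := le_trans hcon.le (hwanti x hx y hy hyx u t hu0 hu.2)
      have hψu := hψd u hu.1
      linarith
  -- Final assembly
  rw [Metric.tendsto_atTop]
  intro ε hε
  have hψ1pos : (0:ℝ) < ψ 0 + 1 := by linarith
  obtain ⟨T₁, hT₁0, hT₁⟩ := hdab (min (ε/4) ((ε/4) / (2 * (ψ 0 + 1))))
    (lt_min (by positivity) (div_pos (by positivity) (by linarith)))
  obtain ⟨T₂, hT₂0, hT₂⟩ := hwall (ε/4) (by positivity)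
  refine ⟨max T₁ T₂, fun t ht => ?_⟩
  have ht1 : T₁ ≤ t := le_trans (le_max_left _ _) ht
  have ht2 : T₂ ≤ t := le_trans (le_max_right _ _) ht
  have ht0 : 0 ≤ t := le_trans hT₁0 ht1
  have hdab_t := hT₁ t ht1
  have hdmin1 : η t a - η t b ≤ ε/4 := le_trans hdab_t (min_le_left _ _)
  have hdmin2 : η t a - η t b ≤ (ε/4) / (2 * (ψ 0 + 1)) := le_trans hdab_t (min_le_right _ _)
  have hw_t := hT₂ t ht2
  have hb1 : ∀ x ∈ S, ∀ y ∈ S, |η t x - η t y| ≤ ε/4 := by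
    intro x hx y hy
    rw [abs_sub_le_iff]
    exact ⟨le_trans (hdle t ht0 x hx y hy) hdmin1,
      le_trans (hdle t ht0 y hy x hx) hdmin1⟩
  have hb2 : ∀ x ∈ S, ∀ y ∈ S, |ω t x - ω t y| ≤ ε/4 := by
    intro x hx y hy
    rcases lt_trichotomy x y with h | h | h
    · rw [abs_sub_comm, abs_of_nonneg (hwpos y hy x hx h t ht0)]
      exact hw_t y hy x hx h
    · rw [h]
      simp
      positivity
    · rw [abs_of_nonneg (hwpos x hx y hy h t ht0)]
      exact hw_t x hx y hy h
  have hb3key : ∀ x ∈ S, ∀ y ∈ S, y < x → |ηt t x - ηt t y| ≤ ε/4 := by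
    intro x hx y hy hyx
    have hI1 := hI_nonneg t ht0 x hx y hy hyx.le
    have hI2 := hI_le t ht0 x hx y hy hyx.le
    have hψd : ψ 0 * (η t x - η t y) ≤ (ε/4) / 2 := by
      calc ψ 0 * (η t x - η t y) ≤ ψ 0 * ((ε/4) / (2 * (ψ 0 + 1))) :=
            mul_le_mul_of_nonneg_left (le_trans (hdle t ht0 x hx y hy) hdmin2) hψ0
        _ ≤ (ε/4) / 2 := haux (ε/4) (by positivity)
    have hweq := hvd t ht0 x hx y hy
    have hw1 : 0 ≤ ω t x - ω t y := hwpos x hx y hy hyx t ht0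
    have hw2 : ω t x - ω t y ≤ ε/4 := hw_t x hx y hy hyx
    rw [hweq, abs_le]
    constructor <;> linarith
  have hb3 : ∀ x ∈ S, ∀ y ∈ S, |ηt t x - ηt t y| ≤ ε/4 := by
    intro x hx y hy
    rcases lt_trichotomy x y with h | h | h
    · rw [abs_sub_comm]
      exact hb3key y hy x hx h
    · rw [h]
      simp
      positivity
    · exact hb3key x hx y hy h
  obtain ⟨s1a, s1b⟩ := setDiam_bounds hSne hb1
  obtain ⟨s2a, s2b⟩ := setDiam_bounds hSne hb2
  obtain ⟨s3a, s3b⟩ := setDiam_bounds hSne hb3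
  rw [Real.dist_eq, sub_zero, abs_of_nonneg (by linarith)]
  linarith
end

section
/- Consider the one-dimensional Lagrangian alignment system with the Coulomb–quadratic potential: μ₀ is a compactly supported atomless Borel probability measure on ℝ whose support contains at least two points; ψ : ℝ → [0,∞) is even, nonincreasing on [0,∞), locally integrable, with primitive Ψ(r) := ∫₀^r ψ(s) ds; W′(s) := s − sgn(s) (with sgn(0) = 0); η, ω : [0,∞) × ℝ → ℝ are continuous in (t,x), continuously differentiable in t with time derivatives continuous in (t,x), satisfy for all t ≥ 0 and all x in supp μ₀: ∂_t η(t,x) = ω(t,x) − ∫ Ψ(η(t,x) − η(t,y)) dμ₀(y) and ∂_t ω(t,x) = −∫ (η(t,x) − η(t,y) − sgn(η(t,x) − η(t,y))) dμ₀(y), and satisfy strict order preservation: η(t,x) > η(t,y) whenever x, y ∈ supp μ₀ with x > y. Define D_η(t) := sup_{x,y ∈ supp μ₀} |η(t,x) − η(t,y)| and D_ω(t) analogously. Then for all t ≥ 0, D_η(t) ≤ 2 + max{ √((D_η(0) − 2)² + D_ω(0)²), max{D_ω(0), 2Ψ(1) + 1} + 2 }. -/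
open MeasureTheory Filter Topology intervalIntegral

set_option maxHeartbeats 400000

lemma ae_mem_msupp (μ : Measure ℝ) : ∀ᵐ y ∂μ, y ∈ msupp μ := by
  rw [ae_iff]
  apply measure_null_of_locally_null
  intro x hx
  simp only [Set.mem_setOf_eq, msupp, not_forall] at hx
  obtain ⟨U, hU, hU0⟩ := hx
  exact ⟨U, nhdsWithin_le_nhds hU, by simpa using hU0⟩

lemma integrable_of_continuous (μ : Measure ℝ) [IsFiniteMeasure μ]
    (hc : IsCompact (msupp μ)) {f : ℝ → ℝ} (hf : Continuous f) : Integrable f μ := by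
  have : μ.restrict (msupp μ) = μ :=
    Measure.restrict_eq_self_of_ae_mem (ae_mem_msupp μ)
  rw [← this]
  exact hf.continuousOn.integrableOn_compact hc

lemma myAntitoneOn {f f' : ℝ → ℝ} {A B : ℝ}
    (hf : Continuous f)
    (hd : ∀ t ∈ Set.Ioo A B, HasDerivAt f (f' t) t)
    (h0 : ∀ t ∈ Set.Ioo A B, f' t ≤ 0) : AntitoneOn f (Set.Icc A B) := by
  apply antitoneOn_of_deriv_nonpos (convex_Icc A B) hf.continuousOn
  · intro t ht; rw [interior_Icc] at ht
    exact (hd t ht).differentiableAt.differentiableWithinAt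
  · intro t ht; rw [interior_Icc] at ht
    rw [(hd t ht).deriv]; exact h0 t ht

section Psi
set_option linter.unusedSectionVars false
variable {ψ : ℝ → ℝ} {Ψ : ℝ → ℝ}
  (hψ_nonneg : ∀ s : ℝ, 0 ≤ ψ s)
  (hψ_even : ∀ s : ℝ, ψ (-s) = ψ s)
  (hψ_anti : ∀ ⦃s t : ℝ⦄, 0 ≤ s → s ≤ t → ψ t ≤ ψ s)
  (hψ_loc : LocallyIntegrable ψ)
  (hΨ : ∀ r : ℝ, Ψ r = ∫ s in (0:ℝ)..r, ψ s)

include hψ_loc hΨ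

lemma psi_ii (a b : ℝ) : IntervalIntegrable ψ volume a b :=
  (hψ_loc.integrableOn_isCompact isCompact_uIcc).intervalIntegrable

lemma Psi_continuous : Continuous Ψ := by
  have h : Continuous (fun r => ∫ s in (0:ℝ)..r, ψ s) :=
    intervalIntegral.continuous_primitive (fun a b => psi_ii hψ_loc hΨ a b) 0
  exact h.congr (fun r => (hΨ r).symm)

lemma Psi_sub (r r' : ℝ) : Ψ r' - Ψ r = ∫ s in r..r', ψ s := by
  rw [hΨ r, hΨ r']
  exact intervalIntegral.integral_interval_sub_left (psi_ii hψ_loc hΨ 0 r') (psi_ii hψ_loc hΨ 0 r)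

include hψ_nonneg

lemma Psi_mono : Monotone Ψ := by
  intro r r' h
  rw [← sub_nonneg, Psi_sub hψ_loc hΨ]
  exact intervalIntegral.integral_nonneg h (fun u _ => hψ_nonneg u)

lemma Psi_zero : Ψ 0 = 0 := by rw [hΨ 0, intervalIntegral.integral_same]

lemma Psi_nonneg {r : ℝ} (hr : 0 ≤ r) : 0 ≤ Ψ r := by
  have := Psi_mono hψ_nonneg hψ_loc hΨ hr
  rwa [Psi_zero hψ_nonneg hψ_loc hΨ] at this

include hψ_even in
lemma Psi_odd (r : ℝ) : Ψ (-r) = - Ψ r := by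
  have h1 : Ψ (-r) = ∫ s in (0:ℝ)..(-r), ψ s := hΨ (-r)
  have h2 : (∫ x in (-r)..(-(0:ℝ)), ψ (-x)) = ∫ x in (- -(0:ℝ))..(- -r), ψ x :=
    intervalIntegral.integral_comp_neg ψ
  simp only [neg_zero, neg_neg] at h2
  have h3 : (∫ x in (-r)..(0:ℝ), ψ (-x)) = ∫ x in (-r)..(0:ℝ), ψ x := by
    congr 1; ext s; rw [hψ_even]
  rw [h1, intervalIntegral.integral_symm, ← h3, h2, ← hΨ r]

include hψ_anti in
/-- key inequality : for `0 ≤ u`, `0 ≤ w`, `u + w ≤ 2` we have `Ψ u + Ψ w ≤ 2 * Ψ 1`. -/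
lemma Psi_pair {u w : ℝ} (hu : 0 ≤ u) (hw : 0 ≤ w) (huw : u + w ≤ 2) :
    Ψ u + Ψ w ≤ 2 * Ψ 1 := by
  have mono := Psi_mono hψ_nonneg hψ_loc hΨ
  have key : ∀ u w : ℝ, 0 ≤ u → 0 ≤ w → u + w ≤ 2 → u ≤ 1 → 1 ≤ w →
      Ψ u + Ψ w ≤ 2 * Ψ 1 := by
    intro u w hu hw huw h1 h2
    have hu2 : u ≤ 2 - w := by linarith
    have e1 : Ψ w - Ψ 1 = ∫ s in (1:ℝ)..w, ψ s := Psi_sub hψ_loc hΨ 1 w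
    have e2 : Ψ 1 - Ψ (2 - w) = ∫ s in (2-w)..1, ψ s := Psi_sub hψ_loc hΨ (2-w) 1
    have b1 : (∫ s in (1:ℝ)..w, ψ s) ≤ (w - 1) * ψ 1 := by
      have h := intervalIntegral.integral_mono_on h2 (psi_ii hψ_loc hΨ 1 w)
        intervalIntegrable_const (fun s hs => hψ_anti zero_le_one hs.1)
      simpa using h
    have b2 : (w - 1) * ψ 1 ≤ ∫ s in (2-w)..1, ψ s := by
      have h := intervalIntegral.integral_mono_on (by linarith : 2 - w ≤ 1)
        intervalIntegrable_const (psi_ii hψ_loc hΨ (2-w) 1)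
        (fun s hs => hψ_anti (le_trans (by linarith) hs.1) hs.2)
      simp only [intervalIntegral.integral_const, smul_eq_mul] at h
      calc (w-1) * ψ 1 = (1 - (2 - w)) * ψ 1 := by ring
        _ ≤ _ := h
    have := mono hu2
    linarith
  rcases le_total u 1 with h1 | h1
  · rcases le_total w 1 with h2 | h2
    · have := mono h1; have := mono h2; linarith
    · exact key u w hu hw huw h1 h2
  · have hw1 : w ≤ 1 := by linarith
    have := key w u hw hu (by linarith) hw1 h1
    linarith
end Psi

/-- Proposition 3.1 (ii): for the one-dimensional Lagrangian alignment system
with the Coulomb--quadratic potential `W(x) = -|x| + x²/2` (so `W'(s) = s - sgn s`),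
the flow diameter is uniformly bounded in time. -/
theorem stmt_8 (μ₀ : Measure ℝ) [IsProbabilityMeasure μ₀] [NullSingletonClass μ₀]
    (hsupp_cpt : IsCompact (msupp μ₀))
    (hsupp_nontriv : (msupp μ₀).Nontrivial)
    (ψ : ℝ → ℝ)
    (hψ_nonneg : ∀ s : ℝ, 0 ≤ ψ s)
    (hψ_even : ∀ s : ℝ, ψ (-s) = ψ s)
    (hψ_anti : ∀ ⦃s t : ℝ⦄, 0 ≤ s → s ≤ t → ψ t ≤ ψ s)
    (hψ_loc : LocallyIntegrable ψ)
    (Ψ : ℝ → ℝ) (hΨ : ∀ r : ℝ, Ψ r = ∫ s in (0:ℝ)..r, ψ s)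
    (η ω ηt ωt : ℝ → ℝ → ℝ)
    (hη_cont : Continuous (fun p : ℝ × ℝ => η p.1 p.2))
    (hω_cont : Continuous (fun p : ℝ × ℝ => ω p.1 p.2))
    (hηt_cont : Continuous (fun p : ℝ × ℝ => ηt p.1 p.2))
    (hωt_cont : Continuous (fun p : ℝ × ℝ => ωt p.1 p.2))
    (hη_deriv : ∀ x : ℝ, ∀ t ∈ Set.Ici (0:ℝ),
      HasDerivWithinAt (fun s => η s x) (ηt t x) (Set.Ici (0:ℝ)) t)
    (hω_deriv : ∀ x : ℝ, ∀ t ∈ Set.Ici (0:ℝ),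
      HasDerivWithinAt (fun s => ω s x) (ωt t x) (Set.Ici (0:ℝ)) t)
    (heq_η : ∀ t : ℝ, 0 ≤ t → ∀ x ∈ msupp μ₀,
      ηt t x = ω t x - ∫ y, Ψ (η t x - η t y) ∂μ₀)
    (heq_ω : ∀ t : ℝ, 0 ≤ t → ∀ x ∈ msupp μ₀,
      ωt t x = -∫ y, (η t x - η t y - Real.sign (η t x - η t y)) ∂μ₀)
    (horder : ∀ t : ℝ, 0 ≤ t → ∀ x ∈ msupp μ₀, ∀ y ∈ msupp μ₀,
      y < x → η t y < η t x) :
    ∀ t : ℝ, 0 ≤ t →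
      setDiam (msupp μ₀) (η t) ≤ 2 +
        max (Real.sqrt ((setDiam (msupp μ₀) (η 0) - 2) ^ 2 + setDiam (msupp μ₀) (ω 0) ^ 2))
          (max (setDiam (msupp μ₀) (ω 0)) (2 * Ψ 1 + 1) + 2) := by
  -- basic setup
  have hΨcont : Continuous Ψ := Psi_continuous hψ_loc hΨ
  have hΨmono : Monotone Ψ := Psi_mono hψ_nonneg hψ_loc hΨ
  have hΨ0 : Ψ 0 = 0 := Psi_zero hψ_nonneg hψ_loc hΨ
  have hΨ1 : 0 ≤ Ψ 1 := Psi_nonneg hψ_nonneg hψ_loc hΨ zero_le_one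
  have hΨodd : ∀ r, Ψ (-r) = - Ψ r := Psi_odd hψ_nonneg hψ_even hψ_loc hΨ
  have hΨpair : ∀ {u w : ℝ}, 0 ≤ u → 0 ≤ w → u + w ≤ 2 → Ψ u + Ψ w ≤ 2 * Ψ 1 :=
    fun hu hw huw => Psi_pair hψ_nonneg hψ_anti hψ_loc hΨ hu hw huw
  set S := msupp μ₀ with hSdef
  have hSne : S.Nonempty := hsupp_nontriv.nonempty
  obtain ⟨a, haS, ha⟩ := hsupp_cpt.exists_isLeast hSne
  obtain ⟨b, hbS, hb⟩ := hsupp_cpt.exists_isGreatest hSne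
  have hab : a < b := by
    rcases lt_or_eq_of_le (ha hbS) with h | h
    · exact h
    · exfalso
      obtain ⟨x, hx, y, hy, hxy⟩ := hsupp_nontriv
      have hx1 : x = a := le_antisymm (h ▸ hb hx) (ha hx)
      have hy1 : y = a := le_antisymm (h ▸ hb hy) (ha hy)
      exact hxy (hx1.trans hy1.symm)
  have hmono : ∀ t, 0 ≤ t → ∀ x ∈ S, η t a ≤ η t x ∧ η t x ≤ η t b := by
    intro t ht x hx
    constructor
    · rcases lt_or_eq_of_le (ha hx) with h | h
      · exact (horder t ht x hx a haS h).le
      · rw [h]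
    · rcases lt_or_eq_of_le (hb hx) with h | h
      · exact (horder t ht b hbS x hx h).le
      · rw [h]
  -- key abbreviations
  set d : ℝ → ℝ := fun t => η t b - η t a with hd_def
  set q : ℝ → ℝ := fun t => ω t b - ω t a with hq_def
  set p : ℝ → ℝ := fun t => d t - 2 with hp_def
  set Φ : ℝ → ℝ := fun t => ∫ y, (Ψ (η t b - η t y) - Ψ (η t a - η t y)) ∂μ₀ with hPhi_def
  set V : ℝ → ℝ := fun t => p t ^ 2 + q t ^ 2 with hV_def
  set e : ℝ := 2 * Ψ 1 with he_def
  set c : ℝ := 2 * Ψ 1 + 1 with hc_def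
  set J : ℝ → ℝ := fun t => (q t - e) ^ 2 + p t ^ 2 with hJ_def
  have hec : c = e + 1 := rfl
  have he0 : 0 ≤ e := by simp only [he_def]; linarith
  have hd_pos : ∀ t, 0 ≤ t → 0 < d t := fun t ht => by
    simp only [hd_def, sub_pos]; exact horder t ht b hbS a haS hab
  have hp_lb : ∀ t, 0 ≤ t → -2 ≤ p t := fun t ht => by
    have := hd_pos t ht; simp only [hp_def]; linarith
  -- continuity of the various functions
  have hcont_ηb : Continuous (fun t => η t b) :=
    hη_cont.comp (continuous_id.prodMk continuous_const)
  have hcont_ηa : Continuous (fun t => η t a) :=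
    hη_cont.comp (continuous_id.prodMk continuous_const)
  have hcont_d : Continuous d := hcont_ηb.sub hcont_ηa
  have hcont_p : Continuous p := hcont_d.sub continuous_const
  have hcont_q : Continuous q :=
    ((hω_cont.comp (continuous_id.prodMk continuous_const)).sub
      (hω_cont.comp (continuous_id.prodMk continuous_const)))
  have hcont_V : Continuous V := by
    exact ((hcont_p.pow 2).add (hcont_q.pow 2))
  have hcont_J : Continuous J := by
    exact (((hcont_q.sub continuous_const).pow 2).add (hcont_p.pow 2))
  -- integrability of continuous functions of y
  have hInt : ∀ f : ℝ → ℝ, Continuous f → Integrable f μ₀ :=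
    fun f hf => integrable_of_continuous μ₀ hsupp_cpt hf
  have hcont_y : ∀ t x, Continuous (fun y => η t x - η t y) := by
    intro t x
    exact continuous_const.sub (hη_cont.comp (continuous_const.prodMk continuous_id))
  -- derivative identities
  have hd_eriv : ∀ t, 0 ≤ t → HasDerivWithinAt p (q t - Φ t) (Set.Ici 0) t := by
    intro t ht
    have h1 := ((hη_deriv b t ht).sub (hη_deriv a t ht)).sub_const 2
    have hIb : Integrable (fun y => Ψ (η t b - η t y)) μ₀ := hInt _ (hΨcont.comp (hcont_y t b))
    have hIa : Integrable (fun y => Ψ (η t a - η t y)) μ₀ := hInt _ (hΨcont.comp (hcont_y t a))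
    have hsub : Φ t = (∫ y, Ψ (η t b - η t y) ∂μ₀) - ∫ y, Ψ (η t a - η t y) ∂μ₀ :=
      integral_sub hIb hIa
    have h2 : ηt t b - ηt t a = q t - Φ t := by
      rw [heq_η t ht b hbS, heq_η t ht a haS, hsub]; simp only [hq_def]; ring
    rw [← h2]
    exact h1
  have hInt_η : ∀ t : ℝ, Integrable (fun y => η t y) μ₀ :=
    fun t => hInt _ (hη_cont.comp (continuous_const.prodMk continuous_id))
  have hae_ne : ∀ z : ℝ, ∀ᵐ y ∂μ₀, y ≠ z := by
    intro z
    rw [ae_iff]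
    simpa using measure_singleton (μ := μ₀) z
  have hωt_b : ∀ t, 0 ≤ t → ωt t b = -(η t b - (∫ y, η t y ∂μ₀) - 1) := by
    intro t ht
    rw [heq_ω t ht b hbS]
    congr 1
    have hae : ∀ᵐ y ∂μ₀, (fun y => η t b - η t y - Real.sign (η t b - η t y)) y
        = (fun y => η t b - η t y - 1) y := by
      filter_upwards [ae_mem_msupp μ₀, hae_ne b] with y hyS hyb
      have h1 : y < b := lt_of_le_of_ne (hb hyS) hyb
      have h2 : η t y < η t b := horder t ht b hbS y hyS h1
      rw [Real.sign_of_pos (by linarith : (0:ℝ) < η t b - η t y)]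
    rw [integral_congr_ae hae,
      integral_sub (hInt _ (hcont_y t b)) (integrable_const 1),
      integral_sub (integrable_const (η t b)) (hInt_η t)]
    simp [measure_univ]
  have hωt_a : ∀ t, 0 ≤ t → ωt t a = -(η t a - (∫ y, η t y ∂μ₀) + 1) := by
    intro t ht
    rw [heq_ω t ht a haS]
    congr 1
    have hae : ∀ᵐ y ∂μ₀, (fun y => η t a - η t y - Real.sign (η t a - η t y)) y
        = (fun y => η t a - η t y - (-1)) y := by
      filter_upwards [ae_mem_msupp μ₀, hae_ne a] with y hyS hya
      have h1 : a < y := lt_of_le_of_ne (ha hyS) (Ne.symm hya)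
      have h2 : η t a < η t y := horder t ht y hyS a haS h1
      rw [Real.sign_of_neg (by linarith : η t a - η t y < 0)]
    rw [integral_congr_ae hae,
      integral_sub (hInt _ (hcont_y t a)) (integrable_const (-1)),
      integral_sub (integrable_const (η t a)) (hInt_η t)]
    simp [measure_univ]
  have hq_eriv : ∀ t, 0 ≤ t → HasDerivWithinAt q (-(p t)) (Set.Ici 0) t := by
    intro t ht
    have h1 := (hω_deriv b t ht).sub (hω_deriv a t ht)
    have h2 : ωt t b - ωt t a = -(p t) := by
      rw [hωt_b t ht, hωt_a t ht]; simp only [hp_def, hd_def]; ring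
    rw [← h2]
    exact h1
  have hp_at : ∀ t, 0 < t → HasDerivAt p (q t - Φ t) t := fun t ht =>
    (hd_eriv t ht.le).hasDerivAt (Ici_mem_nhds ht)
  have hq_at : ∀ t, 0 < t → HasDerivAt q (-(p t)) t := fun t ht =>
    (hq_eriv t ht.le).hasDerivAt (Ici_mem_nhds ht)
  -- bounds on Φ
  have hPhi_nonneg : ∀ t, 0 ≤ t → 0 ≤ Φ t := by
    intro t ht
    apply MeasureTheory.integral_nonneg
    intro y
    simp only [Pi.zero_apply, sub_nonneg]
    apply hΨmono
    have := hd_pos t ht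
    simp only [hd_def] at this
    linarith
  have hPhi_le : ∀ t, 0 ≤ t → d t ≤ 2 → Φ t ≤ e := by
    intro t ht hd2
    have hIb : Integrable (fun y => Ψ (η t b - η t y)) μ₀ := hInt _ (hΨcont.comp (hcont_y t b))
    have hIa : Integrable (fun y => Ψ (η t a - η t y)) μ₀ := hInt _ (hΨcont.comp (hcont_y t a))
    have hbound := integral_mono_ae (hIb.sub hIa) (integrable_const e) ?_
    · calc Φ t ≤ ∫ _, e ∂μ₀ := hbound
        _ = e := by simp [measure_univ]
    · filter_upwards [ae_mem_msupp μ₀] with y hyS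
      have h1 := hmono t ht y hyS
      have hu : 0 ≤ η t b - η t y := by linarith [h1.2]
      have hw : 0 ≤ η t y - η t a := by linarith [h1.1]
      have hsum : (η t b - η t y) + (η t y - η t a) ≤ 2 := by
        simp only [hd_def] at hd2; linarith
      have hodd : Ψ (η t a - η t y) = - Ψ (η t y - η t a) := by
        rw [show η t a - η t y = -(η t y - η t a) by ring, hΨodd]
      show Ψ (η t b - η t y) - Ψ (η t a - η t y) ≤ e
      rw [hodd, he_def]
      have := hΨpair hu hw hsum
      linarith
  clear_value d q p Φ V J e c
  -- comparison estimates
  have hq2 : ∀ s t : ℝ, 0 ≤ t → t ≤ s → q s ≤ q t + 2 * (s - t) := by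
    intro s t ht hts
    have hanti : AntitoneOn (fun u => q u - 2 * u) (Set.Icc t s) := by
      apply myAntitoneOn (hcont_q.sub (continuous_const.mul continuous_id))
        (f' := fun u => -(p u) - 2 * 1)
      · intro u hu
        exact (hq_at u (lt_of_le_of_lt ht hu.1)).sub ((hasDerivAt_id u).const_mul 2)
      · intro u hu
        have := hd_pos u (le_trans ht hu.1.le)
        simp only [hp_def] at *
        linarith
    have := hanti (Set.left_mem_Icc.2 hts) ⟨hts, le_refl s⟩ hts
    simp only at this
    linarith
  have hp_grow : ∀ t, 0 ≤ t → ∀ h : ℝ, 0 ≤ h → p (t + h) ≤ p t + q t * h + h ^ 2 := by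
    intro t ht h hh
    have hanti : AntitoneOn (fun u => p u - q t * (u - t) - (u - t) ^ 2)
        (Set.Icc t (t + h)) := by
      apply myAntitoneOn ((hcont_p.sub (continuous_const.mul
        (continuous_id.sub continuous_const))).sub
        ((continuous_id.sub continuous_const).pow 2))
        (f' := fun u => (q u - Φ u) - q t * 1 - 2 * (u - t) ^ 1 * 1)
      · intro u hu
        exact ((hp_at u (lt_of_le_of_lt ht hu.1)).sub
          (((hasDerivAt_id u).sub_const t).const_mul (q t))).sub
          (((hasDerivAt_id u).sub_const t).pow 2)
      · intro u hu
        have h1 := hq2 u t ht hu.1.le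
        have h2 := hPhi_nonneg u (le_trans ht hu.1.le)
        simp only [pow_one]
        linarith
    have := hanti (Set.left_mem_Icc.2 (by linarith)) ⟨by linarith, le_refl _⟩ (by linarith)
    simp only [sub_self, mul_zero, zero_pow, sub_zero] at this
    nlinarith [this]
  have hq_lb : ∀ t, 0 ≤ t → -2 * Real.sqrt (2 + p t) ≤ q t := by
    intro t ht
    set A : ℝ := 2 + p t with hA_def
    clear_value A
    have hA : 0 ≤ A := by rw [hA_def]; linarith [hp_lb t ht]
    have key : ∀ h : ℝ, 0 < h → -(A / h) - h ≤ q t := by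
      intro h hh
      have h1 := hp_grow t ht h hh.le
      have h2 := hp_lb (t + h) (by linarith)
      have h3 : (-(A / h) - h) * h = -A - h ^ 2 := by field_simp
      have h4 : (-(A / h) - h) * h ≤ q t * h := by rw [h3, hA_def]; nlinarith
      exact le_of_mul_le_mul_right h4 hh
    rcases eq_or_lt_of_le hA with hA0 | hA0
    · rw [← hA0, Real.sqrt_zero, mul_zero]
      by_contra hq
      push_neg at hq
      have := key (-(q t) / 2) (by linarith)
      rw [← hA0] at this
      simp only [zero_div, neg_zero, zero_sub] at this
      linarith
    · have hs : 0 < Real.sqrt A := Real.sqrt_pos.2 hA0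
      have := key (Real.sqrt A) hs
      rw [Real.div_sqrt] at this
      linarith
  -- monotonicity of V and J
  have hV_anti : ∀ A B : ℝ, 0 ≤ A → (∀ u ∈ Set.Ioo A B, 0 ≤ p u) →
      AntitoneOn V (Set.Icc A B) := by
    intro A B hA hp0
    rw [hV_def]
    apply myAntitoneOn ((hcont_p.pow 2).add (hcont_q.pow 2))
      (f' := fun u => 2 * p u * (q u - Φ u) + 2 * q u * (-(p u)))
    · intro u hu
      have h := ((hp_at u (lt_of_le_of_lt hA hu.1)).pow 2).add
        ((hq_at u (lt_of_le_of_lt hA hu.1)).pow 2)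
      have he : (2:ℕ) * p u ^ (2-1) * (q u - Φ u) + (2:ℕ) * q u ^ (2-1) * (-(p u))
          = 2 * p u * (q u - Φ u) + 2 * q u * (-(p u)) := by norm_num
      rw [he] at h
      exact h
    · intro u hu
      have h1 := hPhi_nonneg u (le_trans hA hu.1.le)
      have h2 := hp0 u hu
      nlinarith [mul_nonneg h2 h1]
  have hJ_anti : ∀ A B : ℝ, 0 ≤ A → (∀ u ∈ Set.Ioo A B, p u ≤ 0) →
      AntitoneOn J (Set.Icc A B) := by
    intro A B hA hp0
    rw [hJ_def]
    apply myAntitoneOn (((hcont_q.sub continuous_const).pow 2).add (hcont_p.pow 2))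
      (f' := fun u => 2 * (q u - e) * (-(p u)) + 2 * p u * (q u - Φ u))
    · intro u hu
      have h := (((hq_at u (lt_of_le_of_lt hA hu.1)).sub_const e).pow 2).add
        ((hp_at u (lt_of_le_of_lt hA hu.1)).pow 2)
      have he : (2:ℕ) * (q u - e) ^ (2-1) * (-(p u)) + (2:ℕ) * p u ^ (2-1) * (q u - Φ u)
          = 2 * (q u - e) * (-(p u)) + 2 * p u * (q u - Φ u) := by norm_num
      rw [he] at h
      exact h
    · intro u hu
      have h2 := hp0 u hu
      have h1 : Φ u ≤ e := by
        apply hPhi_le u (le_trans hA hu.1.le)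
        rw [hp_def] at h2
        simp only at h2
        linarith
      nlinarith [mul_nonneg (neg_nonneg.2 h2) (sub_nonneg.2 h1)]
  -- diameters
  have hsetDiam_eq : ∀ t, 0 ≤ t → setDiam S (η t) = d t := by
    intro t ht
    rw [hd_def]
    show setDiam S (η t) = η t b - η t a
    have hub : ∀ z ∈ (fun pr : ℝ × ℝ => |η t pr.1 - η t pr.2|) '' (S ×ˢ S),
        z ≤ η t b - η t a := by
      rintro z ⟨⟨x, y⟩, ⟨hx, hy⟩, rfl⟩
      obtain ⟨h1, h2⟩ := hmono t ht x hx
      obtain ⟨h3, h4⟩ := hmono t ht y hy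
      rw [abs_le]; constructor <;> simp only [neg_sub] <;> linarith
    apply le_antisymm
    · exact Real.sSup_le hub (by linarith [(hmono t ht a haS).2])
    · have h5 : η t b - η t a = |η t b - η t a| := by
        rw [abs_of_nonneg]; linarith [(hmono t ht a haS).2]
      show sSup _ ≥ η t b - η t a
      rw [h5]
      exact le_csSup ⟨_, hub⟩ ⟨(b, a), ⟨hbS, haS⟩, rfl⟩
  have hDw_mem : ∀ x ∈ S, ∀ y ∈ S, |ω 0 x - ω 0 y| ≤ setDiam S (ω 0) := by
    intro x hx y hy
    have hbdd : BddAbove ((fun pr : ℝ × ℝ => |ω 0 pr.1 - ω 0 pr.2|) '' (S ×ˢ S)) := by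
      apply IsCompact.bddAbove
      apply IsCompact.image (hsupp_cpt.prod hsupp_cpt)
      exact (((hω_cont.comp (continuous_const.prodMk continuous_fst)).sub
        (hω_cont.comp (continuous_const.prodMk continuous_snd))).abs)
    exact le_csSup hbdd ⟨(x, y), ⟨hx, hy⟩, rfl⟩
  set Dw : ℝ := setDiam S (ω 0) with hDw_def
  have hDw_q0 : |q 0| ≤ Dw := by
    have h7 := hDw_mem b hbS a haS
    rw [hDw_def, hq_def]
    exact h7
  have hDw_0 : 0 ≤ Dw :=
    le_trans (abs_nonneg (ω 0 a - ω 0 a)) (hDw_def ▸ hDw_mem a haS a haS)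
  clear_value Dw
  -- the bound M
  intro tt htt
  rw [hsetDiam_eq tt htt, hsetDiam_eq 0 le_rfl]
  set M : ℝ := max (Real.sqrt ((d 0 - 2) ^ 2 + Dw ^ 2)) (max Dw c + 2) with hM_def
  have hM2 : max Dw c + 2 ≤ M := hM_def ▸ le_max_right _ _
  have hMsqrt : Real.sqrt ((d 0 - 2) ^ 2 + Dw ^ 2) ≤ M := hM_def ▸ le_max_left _ _
  clear_value M
  have hc1 : 1 ≤ c := by rw [hc_def]; linarith only [hΨ1]
  have hmaxc : c ≤ max Dw c := le_max_right _ _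
  have hmaxd : Dw ≤ max Dw c := le_max_left _ _
  have hMc2 : c + 2 ≤ M := by linarith only [hM2, hmaxc]
  have hM3 : 3 ≤ M := by linarith only [hMc2, hc1]
  have hM0 : 0 ≤ M := by linarith only [hM3]
  have hMsq : (d 0 - 2) ^ 2 + Dw ^ 2 ≤ M ^ 2 := by
    have h2 : (0:ℝ) ≤ (d 0 - 2) ^ 2 + Dw ^ 2 := by positivity
    nlinarith only [Real.sq_sqrt h2, Real.sqrt_nonneg ((d 0 - 2) ^ 2 + Dw ^ 2), hMsqrt, hM0]
  have hq0sq : q 0 ^ 2 ≤ Dw ^ 2 := by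
    nlinarith only [le_abs_self (q 0), neg_abs_le (q 0), hDw_q0, abs_nonneg (q 0)]
  have hV0 : V 0 ≤ M ^ 2 := by
    rw [hV_def, hp_def]
    simp only
    linarith only [hMsq, hq0sq]
  have hM2sq : (c + 2) ^ 2 ≤ M ^ 2 := by nlinarith only [hMc2, hc1]
  suffices hgoal : p tt ≤ M by
    rw [hp_def] at hgoal
    simp only at hgoal
    linarith only [hgoal]
  by_cases hppos : p tt ≤ 0
  · linarith only [hppos, hM0]
  push_neg at hppos
  -- the set of times in [0, tt] where p ≤ 0
  set Sset : Set ℝ := Set.Icc 0 tt ∩ p ⁻¹' Set.Iic 0 with hSset_def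
  have hSsetc : IsCompact Sset :=
    isCompact_Icc.inter_right (isClosed_Iic.preimage hcont_p)
  by_cases hSne' : Sset.Nonempty
  · -- main case : there is a last time s0 ≤ tt with p s0 ≤ 0
    set s0 : ℝ := sSup Sset with hs0_def
    have hs0mem : s0 ∈ Sset := by rw [hs0_def]; exact hSsetc.sSup_mem hSne'
    have hbddS : BddAbove Sset := hSsetc.bddAbove
    have hs0ub : ∀ u ∈ Sset, u ≤ s0 := by
      intro u hu; rw [hs0_def]; exact le_csSup hbddS hu
    clear_value s0
    obtain ⟨⟨h0s0, hs0tt⟩, hps0'⟩ := hs0mem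
    have hps0 : p s0 ≤ 0 := hps0'
    have hs0lt : s0 < tt := lt_of_le_of_ne hs0tt
      (fun h => by rw [h] at hps0; linarith only [hps0, hppos])
    have hpos : ∀ u ∈ Set.Ioc s0 tt, 0 < p u := by
      intro u hu
      by_contra h
      push_neg at h
      have hmem : u ∈ Sset := ⟨⟨le_trans h0s0 hu.1.le, hu.2⟩, h⟩
      exact absurd (hs0ub u hmem) (not_le.2 hu.1)
    have hVa : AntitoneOn V (Set.Icc s0 tt) :=
      hV_anti s0 tt h0s0 (fun u hu => (hpos u ⟨hu.1, hu.2.le⟩).le)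
    have hVtts0 : V tt ≤ V s0 :=
      hVa (Set.left_mem_Icc.2 hs0lt.le) (Set.right_mem_Icc.2 hs0lt.le) hs0lt.le
    have hps0lb : -2 ≤ p s0 := hp_lb s0 h0s0
    -- we show V s0 ≤ M ^ 2
    have hVs0 : V s0 ≤ M ^ 2 := by
      rcases le_or_gt (q s0) 0 with hq0' | hq0'
      · -- q s0 ≤ 0 : use the a priori lower bound on q
        have hlb := hq_lb s0 h0s0
        have hA : (0:ℝ) ≤ 2 + p s0 := by linarith only [hps0lb]
        have hqsq : q s0 ^ 2 ≤ 4 * (2 + p s0) := by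
          nlinarith only [Real.sq_sqrt hA, Real.sqrt_nonneg (2 + p s0), hlb, hq0']
        rw [hV_def]
        simp only
        nlinarith only [hqsq, hps0lb, hps0, hM3]
      rcases le_or_gt (q s0) c with hqc | hqc
      · -- 0 < q s0 ≤ c
        rw [hV_def]
        simp only
        nlinarith only [hq0', hqc, hps0, hps0lb, hM2sq, hc1]
      · -- c < q s0 : excursion analysis via J
        have hfinish : ∀ X : ℝ, 1 ≤ X → J s0 ≤ X ^ 2 + 4 → e + X + 2 ≤ M → V s0 ≤ M ^ 2 := by
          intro X hX hJX heXM
          rw [hJ_def] at hJX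
          simp only at hJX
          have hqec : e + 1 < q s0 := by rw [hec] at hqc; exact hqc
          have hqe : q s0 - e ≤ X + 2 := by
            nlinarith only [hJX, hqec, hX, sq_nonneg (p s0)]
          rw [hV_def]
          simp only
          have hprod : e * (q s0 - e) ≤ e * (X + 2) :=
            mul_le_mul_of_nonneg_left hqe he0
          nlinarith only [hJX, hprod, heXM, hX, he0, hqec]
        set Kset : Set ℝ := {u | u ∈ Set.Icc 0 s0 ∧ (0 < p u ∨ q u < c)} with hKset_def
        by_cases hK : Kset.Nonempty
        · -- nonempty : σ = sup Kset is the entry time of the final left excursion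
          set σ : ℝ := sSup Kset with hσ_def
          have hbddK : BddAbove Kset := ⟨s0, fun x hx => hx.1.2⟩
          have hσub : ∀ x ∈ Kset, x ≤ σ := by
            intro x hx; rw [hσ_def]; exact le_csSup hbddK hx
          have hσlt : ∀ y : ℝ, y < σ → ∃ x ∈ Kset, y < x := by
            intro y hy; rw [hσ_def] at hy; exact exists_lt_of_lt_csSup hK hy
          have hσle : σ ≤ s0 := by
            rw [hσ_def]; exact csSup_le hK (fun x hx => hx.1.2)
          clear_value σ
          have hσ0 : 0 ≤ σ := by
            obtain ⟨x0, hx0⟩ := hK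
            exact le_trans hx0.1.1 (hσub x0 hx0)
          have hGafter : ∀ u ∈ Set.Ioc σ s0, p u ≤ 0 ∧ c ≤ q u := by
            intro u hu
            by_contra h
            have hor : 0 < p u ∨ q u < c := by
              rcases lt_or_ge 0 (p u) with h1 | h1
              · exact Or.inl h1
              · rcases lt_or_ge (q u) c with h2 | h2
                · exact Or.inr h2
                · exact absurd ⟨h1, h2⟩ h
            have hmem : u ∈ Kset := ⟨⟨le_trans hσ0 hu.1.le, hu.2⟩, hor⟩
            exact absurd (hσub u hmem) (not_le.2 hu.1)
          have hGσ : p σ ≤ 0 ∧ c ≤ q σ := by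
            rcases eq_or_lt_of_le hσle with heq | hlt
            · rw [heq]; exact ⟨hps0, hqc.le⟩
            · constructor
              · apply le_of_tendsto
                  (hcont_p.continuousAt.tendsto.mono_left nhdsWithin_le_nhds :
                    Filter.Tendsto p (nhdsWithin σ (Set.Ioi σ)) (nhds (p σ)))
                filter_upwards [Ioc_mem_nhdsGT_of_mem ⟨le_refl σ, hlt⟩] with u hu
                  using (hGafter u hu).1
              · apply ge_of_tendsto
                  (hcont_q.continuousAt.tendsto.mono_left nhdsWithin_le_nhds :
                    Filter.Tendsto q (nhdsWithin σ (Set.Ioi σ)) (nhds (q σ)))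
                filter_upwards [Ioc_mem_nhdsGT_of_mem ⟨le_refl σ, hlt⟩] with u hu
                  using (hGafter u hu).2
          have hσK : σ ∉ Kset := by
            intro hmem
            rcases hmem.2 with h | h
            · linarith only [h, hGσ.1]
            · linarith only [h, hGσ.2]
          have hσpos : 0 < σ := by
            rcases eq_or_lt_of_le hσ0 with heq | hlt
            · exfalso
              obtain ⟨x0, hx0⟩ := hK
              have h1 : x0 ≤ σ := hσub x0 hx0
              have h2 : 0 ≤ x0 := hx0.1.1
              have h3 : x0 = σ := le_antisymm h1 (by linarith only [h2, heq])
              exact hσK (h3 ▸ hx0)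
            · exact hlt
          have hfreq : ∃ᶠ u in nhdsWithin σ (Set.Iio σ), (0 < p u ∨ q u < c) := by
            rw [Filter.frequently_iff]
            intro U hU
            obtain ⟨l, hl, hsub⟩ := mem_nhdsLT_iff_exists_Ioo_subset.1 hU
            obtain ⟨x, hxK, hlx⟩ := hσlt l hl
            have hxσ : x ≤ σ := hσub x hxK
            have hxne : x ≠ σ := fun h => hσK (h ▸ hxK)
            exact ⟨x, hsub ⟨hlx, lt_of_le_of_ne hxσ hxne⟩, hxK.2⟩
          rcases Filter.frequently_or_distrib.1 hfreq with hfp | hfq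
          · -- frequently p > 0 just before σ : impossible
            exfalso
            haveI hne : (nhdsWithin σ (Set.Iio σ) ⊓ Filter.principal {u | 0 < p u}).NeBot :=
              Filter.frequently_iff_neBot.1 hfp
            set l' := nhdsWithin σ (Set.Iio σ) ⊓ Filter.principal {u | 0 < p u} with hl'_def
            have hl'nhds : l' ≤ nhds σ := le_trans inf_le_left nhdsWithin_le_nhds
            have hpσ0 : p σ = 0 := by
              refine le_antisymm hGσ.1 ?_
              apply ge_of_tendsto (hcont_p.continuousAt.tendsto.mono_left hl'nhds)
              rw [hl'_def, Filter.eventually_inf_principal]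
              exact Filter.Eventually.of_forall (fun u hu => hu.le)
            have hslope := hasDerivAt_iff_tendsto_slope.1 (hp_at σ hσpos)
            have hl'ne : l' ≤ nhdsWithin σ {σ}ᶜ :=
              le_trans inf_le_left (nhdsWithin_mono σ (fun x hx => ne_of_lt hx))
            have hle : q σ - Φ σ ≤ 0 := by
              apply le_of_tendsto (hslope.mono_left hl'ne)
              have h1 : ∀ᶠ u in l', u ∈ Set.Iio σ :=
                Filter.Eventually.filter_mono inf_le_left self_mem_nhdsWithin
              have h2 : ∀ᶠ u in l', 0 < p u := by
                rw [hl'_def, Filter.eventually_inf_principal]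
                exact Filter.Eventually.of_forall (fun u hu => hu)
              filter_upwards [h1, h2] with u hu1 hu2
              rw [slope_def_field, hpσ0]
              apply le_of_lt
              apply div_neg_of_pos_of_neg (by linarith only [hu2])
              simp only [Set.mem_Iio] at hu1
              linarith only [hu1]
            have hΦσ : Φ σ ≤ e := by
              apply hPhi_le σ hσ0
              rw [hp_def] at hpσ0
              simp only at hpσ0
              linarith only [hpσ0]
            have h9 := hGσ.2
            rw [hec] at h9
            linarith only [h9, hle, hΦσ]
          · -- frequently q < c just before σ : q σ = c
            haveI hne : (nhdsWithin σ (Set.Iio σ) ⊓ Filter.principal {u | q u < c}).NeBot :=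
              Filter.frequently_iff_neBot.1 hfq
            set l' := nhdsWithin σ (Set.Iio σ) ⊓ Filter.principal {u | q u < c} with hl'_def
            have hl'nhds : l' ≤ nhds σ := le_trans inf_le_left nhdsWithin_le_nhds
            have hqσc : q σ ≤ c := by
              apply le_of_tendsto (hcont_q.continuousAt.tendsto.mono_left hl'nhds)
              rw [hl'_def, Filter.eventually_inf_principal]
              exact Filter.Eventually.of_forall (fun u hu => hu.le)
            have hqσ : q σ = c := le_antisymm hqσc hGσ.2
            have hpσlb : -2 ≤ p σ := hp_lb σ hσ0
            have hJσ : J σ ≤ 5 := by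
              rw [hJ_def]
              simp only [hqσ, hec]
              nlinarith only [hGσ.1, hpσlb]
            have hJa : AntitoneOn J (Set.Icc σ s0) :=
              hJ_anti σ s0 hσ0 (fun u hu => (hGafter u ⟨hu.1, hu.2.le⟩).1)
            have hJs0 : J s0 ≤ J σ :=
              hJa (Set.left_mem_Icc.2 hσle) (Set.right_mem_Icc.2 hσle) hσle
            refine hfinish 1 le_rfl (by linarith only [hJs0, hJσ]) ?_
            rw [hec] at hMc2
            linarith only [hMc2]
        · -- Kset empty : p ≤ 0 and q ≥ c on all of [0, s0]
          have hG : ∀ u ∈ Set.Icc 0 s0, p u ≤ 0 ∧ c ≤ q u := by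
            intro u hu
            by_contra h
            have hor : 0 < p u ∨ q u < c := by
              rcases lt_or_ge 0 (p u) with h1 | h1
              · exact Or.inl h1
              · rcases lt_or_ge (q u) c with h2 | h2
                · exact Or.inr h2
                · exact absurd ⟨h1, h2⟩ h
            exact hK ⟨u, hu, hor⟩
          have hJa : AntitoneOn J (Set.Icc 0 s0) :=
            hJ_anti 0 s0 le_rfl (fun u hu => (hG u ⟨hu.1.le, hu.2.le⟩).1)
          have hJs0 : J s0 ≤ J 0 :=
            hJa (Set.left_mem_Icc.2 h0s0) (Set.right_mem_Icc.2 h0s0) h0s0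
          obtain ⟨hp0le, hq0ge⟩ := hG 0 (Set.left_mem_Icc.2 h0s0)
          have hp0lb : -2 ≤ p 0 := hp_lb 0 le_rfl
          have hq0Dw : q 0 ≤ Dw := le_trans (le_abs_self _) hDw_q0
          set X : ℝ := max Dw c - e with hX_def
          clear_value X
          have hX1 : 1 ≤ X := by
            rw [hX_def, hec] at *
            linarith only [hmaxc, hX_def]
          have hJ0 : J 0 ≤ X ^ 2 + 4 := by
            have hqe0 : 0 ≤ q 0 - e := by rw [hec] at hq0ge; linarith only [hq0ge]
            have hqeX : q 0 - e ≤ X := by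
              rw [hX_def]
              linarith only [hq0Dw, hmaxd]
            rw [hJ_def]
            simp only
            nlinarith only [hqe0, hqeX, hp0le, hp0lb]
          refine hfinish X hX1 (by linarith only [hJs0, hJ0]) ?_
          rw [hX_def]
          linarith only [hM2]
    -- conclude
    have hptt2 : p tt ^ 2 ≤ V tt := by
      rw [hV_def]; simp only; nlinarith only [sq_nonneg (q tt)]
    nlinarith only [hptt2, hVtts0, hVs0, hppos, hM0]
  · -- p > 0 on all of [0, tt]
    have hpos : ∀ u ∈ Set.Icc 0 tt, 0 < p u := by
      intro u hu
      by_contra h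
      push_neg at h
      exact hSne' ⟨u, hu, h⟩
    have hVa : AntitoneOn V (Set.Icc 0 tt) :=
      hV_anti 0 tt le_rfl (fun u hu => (hpos u ⟨hu.1.le, hu.2.le⟩).le)
    have hVtt : V tt ≤ V 0 :=
      hVa (Set.left_mem_Icc.2 htt) (Set.right_mem_Icc.2 htt) htt
    have hptt2 : p tt ^ 2 ≤ V tt := by
      rw [hV_def]; simp only; nlinarith only [sq_nonneg (q tt)]
    nlinarith only [hptt2, hVtt, hV0, hppos, hM0]
end

section
/- Let Λ ≥ λ > 0 and c₁ ≥ c₂ > 0, and let (X, Y) : [0,∞) → (0,∞) × ℝ be continuously differentiable and satisfy, for all t ≥ 0, Y(t) − c₁·X(t) ≤ X′(t) ≤ Y(t) − c₂·X(t) and −Λ·X(t) ≤ Y′(t) ≤ −λ·X(t). Then Y(t) > 0 for all t ≥ 0, and there exist positive constants C₁, C₂ (depending only on λ, Λ, c₁, c₂, X(0), Y(0)) such that for all t ≥ 0, C₁·e^{−c₁ t} ≤ X(t) + Y(t) ≤ C₂·e^{−h t}, where h := c₂λ/(λ + c₁c₂). -/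
private lemma expDeriv (a t : ℝ) :
    HasDerivAt (fun s : ℝ => Real.exp (a * s)) (a * Real.exp (a * t)) t := by
  simpa [mul_comm] using ((hasDerivAt_id t).const_mul a).exp

private lemma antitone_aux {f f' : ℝ → ℝ} {a : ℝ} (ha : 0 ≤ a)
    (hf : ∀ t ∈ Set.Ici (0:ℝ), HasDerivWithinAt f (f' t) (Set.Ici (0:ℝ)) t)
    (hle : ∀ t, a < t → f' t ≤ 0) :
    ∀ t, a ≤ t → f t ≤ f a := by
  have hcont : ContinuousOn f (Set.Ici (0:ℝ)) := fun t ht => (hf t ht).continuousWithinAt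
  have H : AntitoneOn f (Set.Ici a) := by
    apply antitoneOn_of_deriv_nonpos (convex_Ici a)
      (hcont.mono (Set.Ici_subset_Ici.mpr ha))
    · intro x hx
      rw [interior_Ici] at hx
      have hx0 : (0:ℝ) < x := lt_of_le_of_lt ha hx
      exact (((hf x hx0.le).hasDerivAt (Ici_mem_nhds hx0)).differentiableAt).differentiableWithinAt
    · intro x hx
      rw [interior_Ici] at hx
      have hx0 : (0:ℝ) < x := lt_of_le_of_lt ha hx
      have hd := (hf x hx0.le).hasDerivAt (Ici_mem_nhds hx0)
      rw [hd.deriv]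
      exact hle x hx
  intro t ht
  exact H Set.self_mem_Ici ht ht

private lemma div_aux {a t C u : ℝ} (h : Real.exp (a * t) * u ≤ C) :
    u ≤ C * Real.exp (-a * t) := by
  have he : 0 < Real.exp (a * t) := Real.exp_pos _
  have h2 : u ≤ C / Real.exp (a * t) := (le_div_iff₀ he).mpr (by rw [mul_comm]; exact h)
  calc u ≤ C / Real.exp (a * t) := h2
    _ = C * Real.exp (-a * t) := by rw [neg_mul, Real.exp_neg, div_eq_mul_inv]

private lemma div_aux2 {a t C u : ℝ} (h : C ≤ Real.exp (a * t) * u) :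
    C * Real.exp (-a * t) ≤ u := by
  have he : 0 < Real.exp (a * t) := Real.exp_pos _
  have h2 : C / Real.exp (a * t) ≤ u := (div_le_iff₀ he).mpr (by rw [mul_comm]; exact h)
  calc C * Real.exp (-a * t) = C / Real.exp (a * t) := by
        rw [neg_mul, Real.exp_neg, div_eq_mul_inv]
    _ ≤ u := h2

set_option maxHeartbeats 1000000 in
/-- Lemma 4.2 (two-sided exponential bounds for the linear ODI system). -/
theorem stmt_9 (lam Lam c₁ c₂ : ℝ)
    (hlam : 0 < lam) (hLam : lam ≤ Lam) (hc₂ : 0 < c₂) (hc₁ : c₂ ≤ c₁)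
    (X Y X' Y' : ℝ → ℝ)
    (hX_deriv : ∀ t ∈ Set.Ici (0:ℝ), HasDerivWithinAt X (X' t) (Set.Ici (0:ℝ)) t)
    (hY_deriv : ∀ t ∈ Set.Ici (0:ℝ), HasDerivWithinAt Y (Y' t) (Set.Ici (0:ℝ)) t)
    (hX'_cont : ContinuousOn X' (Set.Ici (0:ℝ)))
    (hY'_cont : ContinuousOn Y' (Set.Ici (0:ℝ)))
    (hXpos : ∀ t : ℝ, 0 ≤ t → 0 < X t)
    (hODI1 : ∀ t : ℝ, 0 ≤ t → Y t - c₁ * X t ≤ X' t ∧ X' t ≤ Y t - c₂ * X t)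
    (hODI2 : ∀ t : ℝ, 0 ≤ t → -Lam * X t ≤ Y' t ∧ Y' t ≤ -lam * X t) :
    (∀ t : ℝ, 0 ≤ t → 0 < Y t) ∧
      ∃ C₁ C₂ : ℝ, 0 < C₁ ∧ 0 < C₂ ∧ ∀ t : ℝ, 0 ≤ t →
        C₁ * Real.exp (-c₁ * t) ≤ X t + Y t ∧
          X t + Y t ≤ C₂ * Real.exp (-(c₂ * lam / (lam + c₁ * c₂)) * t) := by
  have hc1pos : 0 < c₁ := lt_of_lt_of_le hc₂ hc₁
  have hYcont : ContinuousOn Y (Set.Ici (0:ℝ)) :=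
    fun t ht => (hY_deriv t ht).continuousWithinAt
  -- Y is strictly decreasing
  have hYanti : StrictAntiOn Y (Set.Ici (0:ℝ)) := by
    apply strictAntiOn_of_deriv_neg (convex_Ici 0) hYcont
    intro x hx
    rw [interior_Ici, Set.mem_Ioi] at hx
    have hd := (hY_deriv x hx.le).hasDerivAt (Ici_mem_nhds hx)
    rw [hd.deriv]
    have h2 := (hODI2 x hx.le).2
    nlinarith [hXpos x hx.le]
  -- Y is positive
  have hYpos : ∀ t : ℝ, 0 ≤ t → 0 < Y t := by
    by_contra hcon
    push_neg at hcon
    obtain ⟨t₀, ht₀, hY0⟩ := hcon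
    have ht₁ : (0:ℝ) ≤ t₀ + 1 := by linarith
    have hYt₁ : Y (t₀ + 1) < 0 :=
      lt_of_lt_of_le (hYanti ht₀ ht₁ (by linarith)) hY0
    set δ : ℝ := -Y (t₀ + 1) with hδdef
    have hδ : 0 < δ := by simp [hδdef]; linarith
    have hYle : ∀ t, t₀ + 1 ≤ t → Y t ≤ Y (t₀ + 1) := by
      intro t ht
      rcases eq_or_lt_of_le ht with h | h
      · rw [← h]
      · exact (hYanti ht₁ (Set.mem_Ici.mpr (by linarith)) h).le
    have hf : ∀ t ∈ Set.Ici (0:ℝ),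
        HasDerivWithinAt (fun s => X s + δ * (s - (t₀ + 1))) (X' t + δ) (Set.Ici (0:ℝ)) t := by
      intro t ht
      have h1 : HasDerivAt (fun s : ℝ => δ * (s - (t₀ + 1))) (δ * 1) t :=
        ((hasDerivAt_id t).sub_const (t₀ + 1)).const_mul δ
      exact ((hX_deriv t ht).add h1.hasDerivWithinAt).congr_deriv (by ring)
    have hkey := antitone_aux ht₁ hf (by
      intro t ht
      have h1 := (hODI1 t (by linarith)).2
      have h2 := hYle t ht.le
      have h3 := hXpos t (by linarith)
      nlinarith)
    have hTpos : 0 < (X (t₀ + 1) + 1) / δ := by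
      apply div_pos _ hδ
      linarith [hXpos (t₀ + 1) ht₁]
    have hT := hkey (t₀ + 1 + (X (t₀ + 1) + 1) / δ) (by linarith)
    have hXT := hXpos (t₀ + 1 + (X (t₀ + 1) + 1) / δ) (by linarith)
    have heq : δ * (t₀ + 1 + (X (t₀ + 1) + 1) / δ - (t₀ + 1)) = X (t₀ + 1) + 1 := by
      field_simp
      ring
    simp only [sub_self, mul_zero, add_zero] at hT
    rw [heq] at hT
    linarith
  refine ⟨hYpos, ?_⟩
  have hX0 := hXpos 0 le_rfl
  have hY0 := hYpos 0 le_rfl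
  -- rate constants
  have hden : 0 < lam + c₁ * c₂ := by positivity
  set hr : ℝ := c₂ * lam / (lam + c₁ * c₂) with hrdef
  have hh0 : 0 < hr := by rw [hrdef]; positivity
  have hhc2 : hr < c₂ := by rw [hrdef, div_lt_iff₀ hden]; nlinarith [mul_pos hc₂ (mul_pos hc1pos hc₂)]
  have hhmu : hr < lam / c₁ := by rw [hrdef, div_lt_div_iff₀ hden hc1pos]; nlinarith
  set h' : ℝ := (hr + min c₂ (lam / c₁)) / 2 with h'def
  have hm1 : hr < min c₂ (lam / c₁) := lt_min hhc2 hhmu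
  have hh'1 : hr < h' := by rw [h'def]; linarith
  have hh'c2 : h' < c₂ := by
    have := min_le_left c₂ (lam / c₁)
    rw [h'def]; linarith
  have hh'mu : h' ≤ lam / c₁ := by
    have := min_le_right c₂ (lam / c₁)
    rw [h'def]; linarith
  have hh'c1 : h' < c₁ := lt_of_lt_of_le hh'c2 hc₁
  have hh'pos : 0 < h' := hh0.trans hh'1
  have hc₃ : 0 < c₁ - h' := by linarith
  have hc₄ : 0 < h' - hr := by linarith
  have hc1h' : c₁ * h' ≤ lam := by
    rw [le_div_iff₀ hc1pos] at hh'mu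
    linarith [hh'mu]
  -- lower bound : X t ≥ X 0 * exp (-c₁ t)
  have hg : ∀ t ∈ Set.Ici (0:ℝ), HasDerivWithinAt (fun s => -(Real.exp (c₁ * s) * X s))
      (-(c₁ * Real.exp (c₁ * t) * X t + Real.exp (c₁ * t) * X' t)) (Set.Ici (0:ℝ)) t :=
    fun t ht => ((expDeriv c₁ t).hasDerivWithinAt.mul (hX_deriv t ht)).neg
  have hlow := antitone_aux le_rfl hg (by
    intro t ht
    have h1 := (hODI1 t ht.le).1
    have hy := hYpos t ht.le
    have he := Real.exp_pos (c₁ * t)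
    have hx := hXpos t ht.le
    nlinarith [mul_pos he hy, mul_pos he hx])
  have hXlow : ∀ t : ℝ, 0 ≤ t → X 0 * Real.exp (-c₁ * t) ≤ X t := by
    intro t ht
    have h0 := hlow t ht
    simp only [mul_zero, Real.exp_zero, one_mul] at h0
    exact div_aux2 (by linarith)
  -- step C : Y t ≤ c₁ X t + A exp(-c₁ t)
  set A : ℝ := max (Y 0 - c₁ * X 0) 0 with hAdef
  have hA0 : 0 ≤ A := le_max_right _ _
  have hF1 : ∀ t ∈ Set.Ici (0:ℝ), HasDerivWithinAt
      (fun s => Real.exp (c₁ * s) * (Y s - c₁ * X s))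
      (c₁ * Real.exp (c₁ * t) * (Y t - c₁ * X t) + Real.exp (c₁ * t) * (Y' t - c₁ * X' t))
      (Set.Ici (0:ℝ)) t :=
    fun t ht => (expDeriv c₁ t).hasDerivWithinAt.mul
      ((hY_deriv t ht).sub ((hX_deriv t ht).const_mul c₁))
  have hC := antitone_aux le_rfl hF1 (by
    intro t ht
    have h1 := (hODI1 t ht.le).1
    have h2 := (hODI2 t ht.le).2
    have hx := hXpos t ht.le
    have he := Real.exp_pos (c₁ * t)
    have hscal : c₁ * (Y t - c₁ * X t) + (Y' t - c₁ * X' t) ≤ 0 := by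
      nlinarith [mul_le_mul_of_nonneg_left h1 hc1pos.le, mul_pos hlam hx]
    nlinarith [mul_le_mul_of_nonneg_left hscal he.le])
  have hYb : ∀ t : ℝ, 0 ≤ t → Y t ≤ c₁ * X t + A * Real.exp (-c₁ * t) := by
    intro t ht
    have h0 := hC t ht
    simp only [mul_zero, Real.exp_zero, one_mul] at h0
    have h3 : Real.exp (c₁ * t) * (Y t - c₁ * X t) ≤ A := h0.trans (le_max_left _ _)
    have := div_aux h3
    linarith
  -- step D : Y t ≤ D exp(-h' t)
  set K : ℝ := lam * A / (c₁ * (c₁ - h')) with hKdef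
  have hK0 : 0 ≤ K := by
    rw [hKdef]
    exact div_nonneg (mul_nonneg hlam.le hA0) (mul_pos hc1pos hc₃).le
  have hF2 : ∀ t ∈ Set.Ici (0:ℝ), HasDerivWithinAt
      (fun s => Real.exp (h' * s) * Y s + K * Real.exp (-(c₁ - h') * s))
      ((h' * Real.exp (h' * t) * Y t + Real.exp (h' * t) * Y' t) +
        K * (-(c₁ - h') * Real.exp (-(c₁ - h') * t))) (Set.Ici (0:ℝ)) t :=
    fun t ht => ((expDeriv h' t).hasDerivWithinAt.mul (hY_deriv t ht)).add
      ((expDeriv (-(c₁ - h')) t).hasDerivWithinAt.const_mul K)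
  have hD2 := antitone_aux le_rfl hF2 (by
    intro t ht
    have hyb := hYb t ht.le
    have h2 := (hODI2 t ht.le).2
    have hy := hYpos t ht.le
    have he1 := Real.exp_pos (h' * t)
    have he3 := Real.exp_pos (-c₁ * t)
    have hstep : c₁ * (h' * Y t + Y' t) ≤ lam * A * Real.exp (-c₁ * t) := by
      nlinarith [mul_le_mul_of_nonneg_right hc1h' hy.le,
        mul_le_mul_of_nonneg_left h2 hc1pos.le,
        mul_le_mul_of_nonneg_left hyb hlam.le]
    have hstep2 : h' * Y t + Y' t ≤ lam * A / c₁ * Real.exp (-c₁ * t) := by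
      rw [show lam * A / c₁ * Real.exp (-c₁ * t) = lam * A * Real.exp (-c₁ * t) / c₁ from by
        ring, le_div_iff₀ hc1pos]
      nlinarith [hstep]
    have h4 := mul_le_mul_of_nonneg_left hstep2 he1.le
    have e2eq : Real.exp (h' * t) * Real.exp (-c₁ * t) = Real.exp (-(c₁ - h') * t) := by
      rw [← Real.exp_add]; congr 1; ring
    have h5 : Real.exp (h' * t) * (lam * A / c₁ * Real.exp (-c₁ * t))
        = lam * A / c₁ * Real.exp (-(c₁ - h') * t) := by rw [← e2eq]; ring
    have h6 : K * (-(c₁ - h') * Real.exp (-(c₁ - h') * t))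
        = -(lam * A / c₁ * Real.exp (-(c₁ - h') * t)) := by
      rw [hKdef]; field_simp
    nlinarith [h4, h5, h6])
  have hYdec : ∀ t : ℝ, 0 ≤ t → Y t ≤ (Y 0 + K) * Real.exp (-h' * t) := by
    intro t ht
    have h0 := hD2 t ht
    simp only [mul_zero, Real.exp_zero, one_mul, mul_one] at h0
    have he2 := Real.exp_pos (-(c₁ - h') * t)
    apply div_aux
    nlinarith [mul_le_mul_of_nonneg_left he2.le hK0]
  have hDD : 0 < Y 0 + K := by linarith
  -- step E : X t ≤ E exp(-hr t)
  set L : ℝ := (Y 0 + K) / (h' - hr) with hLdef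
  have hL0 : 0 < L := by rw [hLdef]; exact div_pos hDD hc₄
  have hF3 : ∀ t ∈ Set.Ici (0:ℝ), HasDerivWithinAt
      (fun s => Real.exp (hr * s) * X s + L * Real.exp (-(h' - hr) * s))
      ((hr * Real.exp (hr * t) * X t + Real.exp (hr * t) * X' t) +
        L * (-(h' - hr) * Real.exp (-(h' - hr) * t))) (Set.Ici (0:ℝ)) t :=
    fun t ht => ((expDeriv hr t).hasDerivWithinAt.mul (hX_deriv t ht)).add
      ((expDeriv (-(h' - hr)) t).hasDerivWithinAt.const_mul L)
  have hE2 := antitone_aux le_rfl hF3 (by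
    intro t ht
    have h1 := (hODI1 t ht.le).2
    have hx := hXpos t ht.le
    have hyd := hYdec t ht.le
    have he := Real.exp_pos (hr * t)
    have hstep : hr * X t + X' t ≤ (Y 0 + K) * Real.exp (-h' * t) := by
      nlinarith
    have h4 := mul_le_mul_of_nonneg_left hstep he.le
    have e2eq : Real.exp (hr * t) * Real.exp (-h' * t) = Real.exp (-(h' - hr) * t) := by
      rw [← Real.exp_add]; congr 1; ring
    have h5 : Real.exp (hr * t) * ((Y 0 + K) * Real.exp (-h' * t))
        = (Y 0 + K) * Real.exp (-(h' - hr) * t) := by rw [← e2eq]; ring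
    have h6 : L * (-(h' - hr) * Real.exp (-(h' - hr) * t))
        = -((Y 0 + K) * Real.exp (-(h' - hr) * t)) := by
      rw [hLdef]; field_simp
    nlinarith [h4, h5, h6])
  have hXdec : ∀ t : ℝ, 0 ≤ t → X t ≤ (X 0 + L) * Real.exp (-hr * t) := by
    intro t ht
    have h0 := hE2 t ht
    simp only [mul_zero, Real.exp_zero, one_mul, mul_one] at h0
    have he2 := Real.exp_pos (-(h' - hr) * t)
    apply div_aux
    nlinarith [mul_le_mul_of_nonneg_left he2.le hL0.le]
  -- assemble
  refine ⟨X 0, (X 0 + L) + (Y 0 + K), hX0, by linarith, ?_⟩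
  intro t ht
  constructor
  · have := hXlow t ht
    have := hYpos t ht
    linarith
  · have h1 := hXdec t ht
    have h2 := hYdec t ht
    have h3 : Real.exp (-h' * t) ≤ Real.exp (-hr * t) := by
      apply Real.exp_le_exp.mpr
      nlinarith
    have he := Real.exp_pos (-hr * t)
    nlinarith [mul_le_mul_of_nonneg_left h3 hDD.le]
end

section
/- Let Λ ≥ λ > 0 and c₁ ≥ c₂ > 0, and let (X, Y) : [0,∞) → (0,∞) × ℝ be continuously differentiable and satisfy, for all t ≥ 0, Y(t) − c₁·X(t) ≤ X′(t) ≤ Y(t) − c₂·X(t) and −Λ·X(t) ≤ Y′(t) ≤ −λ·X(t). Then there exists t_i with 0 ≤ t_i ≤ (1/λ)·max{Y(0)/X(0) − c₁, 0} such that Y(t) ≤ c₁·X(t) for all t ≥ t_i. -/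
/-- The crossing-time estimate: after a time of order
`(1/λ)·max{Y(0)/X(0) − c₁, 0}`, one has `Y(t) ≤ c₁·X(t)` forever. -/
theorem stmt_10 (lam Lam c₁ c₂ : ℝ)
    (hlam : 0 < lam) (hLam : lam ≤ Lam) (hc₂ : 0 < c₂) (hc₁ : c₂ ≤ c₁)
    (X Y X' Y' : ℝ → ℝ)
    (hX_deriv : ∀ t ∈ Set.Ici (0:ℝ), HasDerivWithinAt X (X' t) (Set.Ici (0:ℝ)) t)
    (hY_deriv : ∀ t ∈ Set.Ici (0:ℝ), HasDerivWithinAt Y (Y' t) (Set.Ici (0:ℝ)) t)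
    (hX'_cont : ContinuousOn X' (Set.Ici (0:ℝ)))
    (hY'_cont : ContinuousOn Y' (Set.Ici (0:ℝ)))
    (hXpos : ∀ t : ℝ, 0 ≤ t → 0 < X t)
    (hODI1 : ∀ t : ℝ, 0 ≤ t → Y t - c₁ * X t ≤ X' t ∧ X' t ≤ Y t - c₂ * X t)
    (hODI2 : ∀ t : ℝ, 0 ≤ t → -Lam * X t ≤ Y' t ∧ Y' t ≤ -lam * X t) :
    ∃ ti : ℝ, 0 ≤ ti ∧ ti ≤ (1 / lam) * max (Y 0 / X 0 - c₁) 0 ∧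
      ∀ t : ℝ, ti ≤ t → Y t ≤ c₁ * X t := by
  have hc₁pos : 0 < c₁ := lt_of_lt_of_le hc₂ hc₁
  set Z : ℝ → ℝ := fun t => Y t - c₁ * X t with hZdef
  have hXcont : ContinuousOn X (Set.Ici (0:ℝ)) :=
    fun t ht => (hX_deriv t ht).continuousWithinAt
  have hYcont : ContinuousOn Y (Set.Ici (0:ℝ)) :=
    fun t ht => (hY_deriv t ht).continuousWithinAt
  have hZcont : ContinuousOn Z (Set.Ici (0:ℝ)) :=
    hYcont.sub (continuousOn_const.mul hXcont)
  have hZderiv : ∀ x : ℝ, 0 < x → HasDerivAt Z (Y' x - c₁ * X' x) x := by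
    intro x hx
    have h1 := (hY_deriv x hx.le).hasDerivAt (Ici_mem_nhds hx)
    have h2 := (hX_deriv x hx.le).hasDerivAt (Ici_mem_nhds hx)
    exact h1.sub (h2.const_mul c₁)
  have hZ'neg : ∀ x : ℝ, 0 < x → 0 ≤ Z x → Y' x - c₁ * X' x < 0 := by
    intro x hx hZx
    have h1 := (hODI1 x hx.le).1
    have h2 := (hODI2 x hx.le).2
    have hXx := hXpos x hx.le
    have h3 : c₁ * Z x ≤ c₁ * X' x := mul_le_mul_of_nonneg_left h1 hc₁pos.le
    have h4 : 0 ≤ c₁ * Z x := mul_nonneg hc₁pos.le hZx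
    nlinarith [mul_pos hlam hXx]
  -- invariance: once Z ≤ 0 it stays ≤ 0
  have inv : ∀ s : ℝ, 0 ≤ s → Z s ≤ 0 → ∀ t, s ≤ t → Z t ≤ 0 := by
    intro s hs hZs t hst
    by_contra hpos
    push_neg at hpos
    have hst' : s < t := by
      rcases lt_or_eq_of_le hst with h | h
      · exact h
      · exfalso; rw [← h] at hpos; linarith
    set A := {u : ℝ | u ∈ Set.Icc s t ∧ Z u ≤ 0} with hA
    have hA_ne : A.Nonempty := ⟨s, ⟨le_refl s, hst⟩, hZs⟩
    have hA_sub : A ⊆ Set.Icc s t := fun u hu => hu.1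
    have hA_closed : IsClosed A := by
      have : A = Set.Icc s t ∩ Z ⁻¹' Set.Iic 0 := rfl
      rw [this]
      exact (hZcont.mono (fun u hu => le_trans hs hu.1)).preimage_isClosed_of_isClosed
        isClosed_Icc isClosed_Iic
    have hA_cpt : IsCompact A := isCompact_Icc.of_isClosed_subset hA_closed hA_sub
    set u := sSup A with hu
    have hu_mem : u ∈ A := hA_cpt.sSup_mem hA_ne
    have huIcc : u ∈ Set.Icc s t := hu_mem.1
    have hZu : Z u ≤ 0 := hu_mem.2
    have hult : u < t := by
      rcases lt_or_eq_of_le huIcc.2 with h | h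
      · exact h
      · exfalso; rw [h] at hZu; linarith
    have hu0 : 0 ≤ u := le_trans hs huIcc.1
    have hZpos : ∀ x ∈ Set.Ioc u t, 0 < Z x := by
      intro x hx
      by_contra hx'
      push_neg at hx'
      have hxA : x ∈ A := ⟨⟨le_trans huIcc.1 hx.1.le, hx.2⟩, hx'⟩
      have := le_csSup (hA_cpt.bddAbove) hxA
      exact absurd this (not_le.2 hx.1)
    have hanti : StrictAntiOn Z (Set.Icc u t) := by
      apply strictAntiOn_of_deriv_neg (convex_Icc u t)
        (hZcont.mono (fun x hx => le_trans hu0 hx.1))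
      intro x hx
      rw [interior_Icc] at hx
      have hx0 : 0 < x := lt_of_le_of_lt hu0 hx.1
      have hZx : 0 < Z x := hZpos x ⟨hx.1, hx.2.le⟩
      rw [(hZderiv x hx0).deriv]
      exact hZ'neg x hx0 hZx.le
    have := hanti ⟨le_refl u, hult.le⟩ ⟨hult.le, le_refl t⟩ hult
    linarith
  by_cases h0 : Z 0 ≤ 0
  · refine ⟨0, le_refl 0, ?_, fun t ht => sub_nonpos.1 (inv 0 le_rfl h0 t ht)⟩
    have : 0 ≤ max (Y 0 / X 0 - c₁) 0 := le_max_right _ _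
    positivity
  · push_neg at h0
    have hX0 := hXpos 0 le_rfl
    set T := Z 0 / (lam * X 0) with hT
    have hTpos : 0 < T := div_pos h0 (mul_pos hlam hX0)
    have hmax : (1/lam) * max (Y 0 / X 0 - c₁) 0 = T := by
      have h1 : 0 < Y 0 / X 0 - c₁ := by
        rw [sub_pos, lt_div_iff₀ hX0]
        have : Z 0 = Y 0 - c₁ * X 0 := rfl
        nlinarith
      rw [max_eq_left h1.le, hT]
      have : Z 0 = Y 0 - c₁ * X 0 := rfl
      rw [this]
      field_simp
    by_cases hex : ∃ s ∈ Set.Icc (0:ℝ) T, Z s ≤ 0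
    · obtain ⟨s, hsmem, hZs⟩ := hex
      exact ⟨s, hsmem.1, by rw [hmax]; exact hsmem.2,
        fun t ht => sub_nonpos.1 (inv s hsmem.1 hZs t ht)⟩
    · exfalso
      push_neg at hex
      -- X is strictly increasing on [0, T]
      have hXmono : StrictMonoOn X (Set.Icc 0 T) := by
        apply strictMonoOn_of_deriv_pos (convex_Icc 0 T)
          (hXcont.mono (fun x hx => hx.1))
        intro x hx
        rw [interior_Icc] at hx
        have hx0 : 0 < x := hx.1
        have hZx : 0 < Z x := hex x ⟨hx0.le, hx.2.le⟩
        have hd := (hX_deriv x hx0.le).hasDerivAt (Ici_mem_nhds hx0)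
        rw [hd.deriv]
        have := (hODI1 x hx0.le).1
        have : Z x ≤ X' x := this
        linarith
      -- g := Z + λ X(0) · t is strictly decreasing on [0, T]
      have hganti : StrictAntiOn (fun x => Z x + lam * X 0 * x) (Set.Icc 0 T) := by
        apply strictAntiOn_of_deriv_neg (convex_Icc 0 T)
        · exact (hZcont.mono (fun x hx => hx.1)).add
            ((continuousOn_const.mul continuousOn_id))
        intro x hx
        rw [interior_Icc] at hx
        have hx0 : 0 < x := hx.1
        have hZx : 0 < Z x := hex x ⟨hx0.le, hx.2.le⟩
        have hd : HasDerivAt (fun x => Z x + lam * X 0 * x)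
            ((Y' x - c₁ * X' x) + lam * X 0) x := by
          have := ((hasDerivAt_id x).const_mul (lam * X 0))
          have h := (hZderiv x hx0).add this
          simp only [mul_one] at h
          exact h
        rw [hd.deriv]
        have hXge : X 0 < X x := hXmono ⟨le_refl 0, hTpos.le⟩ ⟨hx0.le, hx.2.le⟩ hx0
        have h1 := (hODI1 x hx0.le).1
        have h2 := (hODI2 x hx0.le).2
        have h3 : c₁ * Z x ≤ c₁ * X' x := mul_le_mul_of_nonneg_left h1 hc₁pos.le
        have h4 : 0 < c₁ * Z x := mul_pos hc₁pos hZx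
        nlinarith [mul_lt_mul_of_pos_left hXge hlam]
      have hgT := hganti ⟨le_refl 0, hTpos.le⟩ ⟨hTpos.le, le_refl T⟩ hTpos
      have hlamT : lam * X 0 * T = Z 0 := by
        rw [hT]; field_simp
      have hZT : Z T < 0 := by
        simp only at hgT
        nlinarith
      exact absurd (hex T ⟨hTpos.le, le_refl T⟩) (not_lt.2 hZT.le)
end

section
/- Let α ∈ (0,1), Λ ≥ λ > 0 and c₁ ≥ c₂ > 0, and let (X, Y) : [0,∞) → (0,∞) × ℝ be continuously differentiable and satisfy, for all t ≥ 0, Y(t) − c₁·X(t)^{1−α} ≤ X′(t) ≤ Y(t) − c₂·X(t)^{1−α} and −Λ·X(t) ≤ Y′(t) ≤ −λ·X(t). Then there exist T ≥ 0 and constants 0 < C₁ ≤ C₂ such that for all t ≥ T: C₁·t^{−1/α} ≤ X(t) ≤ C₂·t^{−1/α} and C₁·t^{−(1/α − 1)} ≤ Y(t) ≤ C₂·t^{−(1/α − 1)}. -/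
open Set

lemma my_contOn {f f' : ℝ → ℝ} {s : Set ℝ} (h : ∀ t ∈ s, HasDerivWithinAt f (f' t) s t) :
    ContinuousOn f s := fun t ht => (h t ht).continuousWithinAt

lemma my_mono {f f' : ℝ → ℝ} {a b : ℝ}
    (hd : ∀ t ∈ Icc a b, HasDerivWithinAt f (f' t) (Icc a b) t)
    (h0 : ∀ t ∈ Ioo a b, 0 ≤ f' t) : MonotoneOn f (Icc a b) := by
  apply monotoneOn_of_deriv_nonneg (convex_Icc a b) (my_contOn hd)
  · intro t ht
    rw [interior_Icc] at ht
    exact ((hd t (Ioo_subset_Icc_self ht)).hasDerivAt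
      (Icc_mem_nhds ht.1 ht.2)).differentiableAt.differentiableWithinAt
  · intro t ht
    rw [interior_Icc] at ht
    rw [((hd t (Ioo_subset_Icc_self ht)).hasDerivAt (Icc_mem_nhds ht.1 ht.2)).deriv]
    exact h0 t ht

lemma my_strict {f f' : ℝ → ℝ} {a b : ℝ}
    (hd : ∀ t ∈ Icc a b, HasDerivWithinAt f (f' t) (Icc a b) t)
    (h0 : ∀ t ∈ Ioo a b, 0 < f' t) : StrictMonoOn f (Icc a b) := by
  apply strictMonoOn_of_deriv_pos (convex_Icc a b) (my_contOn hd)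
  intro t ht
  rw [interior_Icc] at ht
  rw [((hd t (Ioo_subset_Icc_self ht)).hasDerivAt (Icc_mem_nhds ht.1 ht.2)).deriv]
  exact h0 t ht

/-- linear upper comparison: f' ≤ m on (a,b) implies f b ≤ f a + m (b-a) -/
lemma my_le_lin {f f' : ℝ → ℝ} {a b m : ℝ} (hab : a ≤ b)
    (hd : ∀ t ∈ Icc a b, HasDerivWithinAt f (f' t) (Icc a b) t)
    (hm : ∀ t ∈ Ioo a b, f' t ≤ m) : f b ≤ f a + m * (b - a) := by
  have h := my_mono (f := fun t => m * t - f t) (f' := fun t => m - f' t)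
    (fun t ht => (((hasDerivWithinAt_id t _).const_mul m).sub (hd t ht)).congr_deriv (by ring))
    (fun t ht => by have := hm t ht; show (0:ℝ) ≤ m - f' t; linarith)
    (left_mem_Icc.2 hab) (right_mem_Icc.2 hab) hab
  simp only at h
  linarith

lemma my_ge_lin {f f' : ℝ → ℝ} {a b m : ℝ} (hab : a ≤ b)
    (hd : ∀ t ∈ Icc a b, HasDerivWithinAt f (f' t) (Icc a b) t)
    (hm : ∀ t ∈ Ioo a b, m ≤ f' t) : f a + m * (b - a) ≤ f b := by
  have h := my_mono (f := fun t => f t - m * t) (f' := fun t => f' t - m)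
    (fun t ht => ((hd t ht).sub ((hasDerivWithinAt_id t _).const_mul m)).congr_deriv (by ring))
    (fun t ht => by have := hm t ht; show (0:ℝ) ≤ f' t - m; linarith)
    (left_mem_Icc.2 hab) (right_mem_Icc.2 hab) hab
  simp only at h
  linarith

/-- upper barrier -/
lemma my_barrier_up {f f' : ℝ → ℝ} {a b K : ℝ} (hab : a ≤ b)
    (hd : ∀ t ∈ Icc a b, HasDerivWithinAt f (f' t) (Icc a b) t)
    (hK : f a ≤ K) (hbar : ∀ t ∈ Ioo a b, K < f t → f' t < 0) : f b ≤ K := by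
  by_contra hfb
  push_neg at hfb
  set S : Set ℝ := {t ∈ Icc a b | f t ≤ K} with hS
  have hSsub : S ⊆ Icc a b := fun t ht => ht.1
  have hSclosed : IsClosed S := by
    have : S = Icc a b ∩ f ⁻¹' (Iic K) := rfl
    rw [this]
    exact (my_contOn hd).preimage_isClosed_of_isClosed isClosed_Icc isClosed_Iic
  have hSco : IsCompact S := isCompact_Icc.of_isClosed_subset hSclosed hSsub
  have hSne : S.Nonempty := ⟨a, ⟨left_mem_Icc.2 hab, hK⟩⟩
  set s := sSup S with hs
  have hsmem : s ∈ S := hSco.sSup_mem hSne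
  have hsb : s < b := lt_of_le_of_ne (hsmem.1).2 (fun h => by rw [h] at hsmem; exact absurd hsmem.2 (not_le.2 hfb))
  have hgt : ∀ t ∈ Ioc s b, K < f t := by
    intro t ht
    by_contra hle
    push_neg at hle
    have : t ∈ S := ⟨⟨le_trans hsmem.1.1 ht.1.le, ht.2⟩, hle⟩
    exact absurd (le_csSup hSco.bddAbove this) (not_le.2 ht.1)
  -- f is antitone on [s,b]
  have hanti := my_mono (f := fun t => -f t) (f' := fun t => -f' t)
    (fun t ht => ((hd t (Icc_subset_Icc hsmem.1.1 le_rfl ht)).mono (Icc_subset_Icc hsmem.1.1 le_rfl)).neg)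
    (fun t ht => by
      have h1 : t ∈ Ioo a b := ⟨lt_of_le_of_lt hsmem.1.1 ht.1, ht.2⟩
      have := hbar t h1 (hgt t ⟨ht.1, ht.2.le⟩)
      show (0:ℝ) ≤ -f' t
      linarith)
    (left_mem_Icc.2 hsb.le) (right_mem_Icc.2 hsb.le) hsb.le
  have hanti' : f b ≤ f s := by simpa using hanti
  have : K < f s := lt_of_lt_of_le hfb hanti'
  exact absurd hsmem.2 (not_le.2 this)

/-- two-level lower barrier -/
lemma my_barrier_strip {f f' : ℝ → ℝ} {a b k' k : ℝ} (hab : a ≤ b) (hkk : k' < k)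
    (hd : ∀ t ∈ Icc a b, HasDerivWithinAt f (f' t) (Icc a b) t)
    (ha : k ≤ f a) (hbar : ∀ t ∈ Ioo a b, k' ≤ f t → f t ≤ k → 0 < f' t) : k' ≤ f b := by
  by_contra hfb
  push_neg at hfb
  set S : Set ℝ := {t ∈ Icc a b | k ≤ f t} with hS
  have hSclosed : IsClosed S := by
    have : S = Icc a b ∩ f ⁻¹' (Ici k) := rfl
    rw [this]
    exact (my_contOn hd).preimage_isClosed_of_isClosed isClosed_Icc isClosed_Ici
  have hSco : IsCompact S := isCompact_Icc.of_isClosed_subset hSclosed (fun t ht => ht.1)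
  have hSne : S.Nonempty := ⟨a, ⟨left_mem_Icc.2 hab, ha⟩⟩
  set s := sSup S with hs
  have hsmem : s ∈ S := hSco.sSup_mem hSne
  have hsb : s < b := lt_of_le_of_ne (hsmem.1).2
    (fun h => by rw [h] at hsmem; linarith [hsmem.2])
  set S' : Set ℝ := {t ∈ Icc s b | f t ≤ k'} with hS'
  have hS'closed : IsClosed S' := by
    have : S' = Icc s b ∩ f ⁻¹' (Iic k') := rfl
    rw [this]
    exact ((my_contOn hd).mono (Icc_subset_Icc hsmem.1.1 le_rfl)).preimage_isClosed_of_isClosed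
      isClosed_Icc isClosed_Iic
  have hS'co : IsCompact S' := isCompact_Icc.of_isClosed_subset hS'closed (fun t ht => ht.1)
  have hS'ne : S'.Nonempty := ⟨b, ⟨right_mem_Icc.2 hsb.le, hfb.le⟩⟩
  set s' := sInf S' with hs'
  have hs'mem : s' ∈ S' := hS'co.sInf_mem hS'ne
  have hss' : s < s' := lt_of_le_of_ne hs'mem.1.1
    (fun h => by rw [← h] at hs'mem; linarith [hsmem.2, hs'mem.2])
  have hmid : ∀ t ∈ Ioo s s', k' < f t ∧ f t < k := by
    intro t ht
    have htIcc : t ∈ Icc a b := ⟨le_trans hsmem.1.1 ht.1.le, le_trans ht.2.le hs'mem.1.2⟩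
    constructor
    · by_contra hle
      push_neg at hle
      have : t ∈ S' := ⟨⟨ht.1.le, le_trans ht.2.le hs'mem.1.2⟩, hle⟩
      exact absurd (csInf_le hS'co.bddBelow this) (not_le.2 ht.2)
    · by_contra hle
      push_neg at hle
      have : t ∈ S := ⟨htIcc, hle⟩
      exact absurd (le_csSup hSco.bddAbove this) (not_le.2 ht.1)
  have hstrict := my_strict (f := f) (f' := f')
    (fun t ht => (hd t (Icc_subset_Icc hsmem.1.1 hs'mem.1.2 ht)).mono
      (Icc_subset_Icc hsmem.1.1 hs'mem.1.2))
    (fun t ht => by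
      have h1 : t ∈ Ioo a b := ⟨lt_of_le_of_lt hsmem.1.1 ht.1, lt_of_lt_of_le ht.2 hs'mem.1.2⟩
      obtain ⟨h2, h3⟩ := hmid t ht
      exact hbar t h1 h2.le h3.le)
    (left_mem_Icc.2 hss'.le) (right_mem_Icc.2 hss'.le) hss'
  have : f s < f s' := hstrict
  linarith [hsmem.2, hs'mem.2]

open Real

set_option maxHeartbeats 2000000 in
/-- Lemma 4.4 (sharp algebraic decay for the nonlinear ODI system with
weakly singular exponent α ∈ (0,1)). -/
theorem stmt_11 (α lam Lam c₁ c₂ : ℝ)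
    (hα : α ∈ Set.Ioo (0:ℝ) 1)
    (hlam : 0 < lam) (hLam : lam ≤ Lam) (hc₂ : 0 < c₂) (hc₁ : c₂ ≤ c₁)
    (X Y X' Y' : ℝ → ℝ)
    (hX_deriv : ∀ t ∈ Set.Ici (0:ℝ), HasDerivWithinAt X (X' t) (Set.Ici (0:ℝ)) t)
    (hY_deriv : ∀ t ∈ Set.Ici (0:ℝ), HasDerivWithinAt Y (Y' t) (Set.Ici (0:ℝ)) t)
    (hX'_cont : ContinuousOn X' (Set.Ici (0:ℝ)))
    (hY'_cont : ContinuousOn Y' (Set.Ici (0:ℝ)))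
    (hXpos : ∀ t : ℝ, 0 ≤ t → 0 < X t)
    (hODI1 : ∀ t : ℝ, 0 ≤ t →
      Y t - c₁ * X t ^ (1 - α) ≤ X' t ∧ X' t ≤ Y t - c₂ * X t ^ (1 - α))
    (hODI2 : ∀ t : ℝ, 0 ≤ t → -Lam * X t ≤ Y' t ∧ Y' t ≤ -lam * X t) :
    ∃ T : ℝ, 0 ≤ T ∧ ∃ C₁ C₂ : ℝ, 0 < C₁ ∧ C₁ ≤ C₂ ∧ ∀ t : ℝ, T ≤ t →
      (C₁ * t ^ (-(1 / α)) ≤ X t ∧ X t ≤ C₂ * t ^ (-(1 / α))) ∧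
        (C₁ * t ^ (-(1 / α - 1)) ≤ Y t ∧ Y t ≤ C₂ * t ^ (-(1 / α - 1))) := by
  obtain ⟨hα0, hα1⟩ := hα
  have hLam0 : 0 < Lam := lt_of_lt_of_le hlam hLam
  have h1α : 0 < 1 - α := by linarith
  have hc₁0 : 0 < c₁ := lt_of_lt_of_le hc₂ hc₁
  set R : ℝ → ℝ := fun t => Y t * X t ^ (α - 1) with hRdef
  set R' : ℝ → ℝ := fun t => Y' t * X t ^ (α-1) + Y t * (X' t * (α - 1) * X t ^ (α - 1 - 1))
    with hR'def
  have hRd : ∀ t : ℝ, 0 ≤ t → HasDerivWithinAt R (R' t) (Set.Ici (0:ℝ)) t := fun t ht =>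
    (hY_deriv t ht).mul ((hX_deriv t ht).rpow_const (Or.inl (hXpos t ht).ne'))
  -- restrictions to Icc
  have hRdIcc : ∀ a b : ℝ, 0 ≤ a → ∀ t ∈ Set.Icc a b, HasDerivWithinAt R (R' t) (Set.Icc a b) t :=
    fun a b ha t ht => (hRd t (le_trans ha ht.1)).mono (fun u hu => le_trans ha hu.1)
  have hXdIcc : ∀ a b : ℝ, 0 ≤ a → ∀ t ∈ Set.Icc a b, HasDerivWithinAt X (X' t) (Set.Icc a b) t :=
    fun a b ha t ht => (hX_deriv t (le_trans ha ht.1)).mono (fun u hu => le_trans ha hu.1)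
  have hYdIcc : ∀ a b : ℝ, 0 ≤ a → ∀ t ∈ Set.Icc a b, HasDerivWithinAt Y (Y' t) (Set.Icc a b) t :=
    fun a b ha t ht => (hY_deriv t (le_trans ha ht.1)).mono (fun u hu => le_trans ha hu.1)
  -- basic identity : Y = R * X^(1-α)
  have hYeq : ∀ t : ℝ, 0 ≤ t → Y t = R t * X t ^ (1-α) := by
    intro t ht
    have hx := hXpos t ht
    have h1 : X t ^ (α-1) * X t ^ (1-α) = 1 := by
      rw [← Real.rpow_add hx]; norm_num
    calc Y t = Y t * (X t ^ (α-1) * X t ^ (1-α)) := by rw [h1, mul_one]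
      _ = R t * X t ^ (1-α) := by simp only [hRdef]; ring
  set K : ℝ := max (R 0) (c₁ + 1) with hKdef
  have hK1 : c₁ + 1 ≤ K := le_max_right _ _
  have hK0 : 0 < K := by linarith
  -- Step A : R ≤ K always
  have hRK : ∀ t : ℝ, 0 ≤ t → R t ≤ K := by
    intro t ht
    refine my_barrier_up ht (hRdIcc 0 t le_rfl) (le_max_left _ _) ?_
    intro u hu hKu
    have hu0 : (0:ℝ) ≤ u := hu.1.le
    have hx := hXpos u hu0
    have hA : (0:ℝ) < X u ^ (α-1) := Real.rpow_pos_of_pos hx _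
    have hB : (0:ℝ) < X u ^ (α-1-1) := Real.rpow_pos_of_pos hx _
    have hP : (0:ℝ) < X u ^ (1-α) := Real.rpow_pos_of_pos hx _
    have hYu := hYeq u hu0
    have hRc : c₁ < R u := by linarith
    have h1 := (hODI1 u hu0).1
    rw [hYu] at h1
    have hprod : 0 < (R u - c₁) * X u ^ (1-α) := mul_pos (by linarith) hP
    have hXd' : 0 < X' u := by nlinarith [h1, hprod]
    have hY'neg : Y' u < 0 := lt_of_le_of_lt (hODI2 u hu0).2 (by nlinarith [mul_pos hlam hx])
    have hYpos : 0 < Y u := by rw [hYu]; exact mul_pos (by linarith) hP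
    have t1 : Y' u * X u ^ (α-1) < 0 := mul_neg_of_neg_of_pos hY'neg hA
    have t2 : Y u * (X' u * (α - 1) * X u ^ (α-1-1)) ≤ 0 := by
      have h3 : X' u * (α - 1) * X u ^ (α-1-1) ≤ 0 := by nlinarith [mul_pos hXd' hB]
      exact mul_nonpos_of_nonneg_of_nonpos hYpos.le h3
    show R' u < 0
    simp only [hR'def]
    linarith
  -- Y is antitone
  have hYanti : ∀ a b : ℝ, 0 ≤ a → a ≤ b → Y b ≤ Y a := by
    intro a b ha hab
    have := my_le_lin (m := 0) hab (hYdIcc a b ha) (fun u hu => by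
      have hu0 : (0:ℝ) ≤ u := le_trans ha hu.1.le
      have := (hODI2 u hu0).2
      nlinarith [mul_pos hlam (hXpos u hu0)])
    linarith
  -- Y gets small
  have hYsmall : ∀ ε : ℝ, 0 < ε → ∃ t₀ : ℝ, 0 ≤ t₀ ∧ Y t₀ ≤ ε := by
    intro ε hε
    by_contra hcon
    push_neg at hcon
    have hYbig : ∀ t : ℝ, 0 ≤ t → ε < Y t := fun t ht => hcon t ht
    set ρ : ℝ := (ε/K) ^ (1/(1-α)) with hρdef
    have hρ : 0 < ρ := Real.rpow_pos_of_pos (div_pos hε hK0) _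
    have hXlow : ∀ t : ℝ, 0 ≤ t → ρ ≤ X t := by
      intro t ht
      have hx := hXpos t ht
      have hP : (0:ℝ) < X t ^ (1-α) := Real.rpow_pos_of_pos hx _
      have h1 : Y t ≤ K * X t ^ (1-α) := by
        have := hRK t ht
        rw [hYeq t ht]
        nlinarith [hP]
      have h2 : ε / K ≤ X t ^ (1-α) := by
        rw [div_le_iff₀ hK0]
        nlinarith [hYbig t ht]
      have h3 : ρ ≤ (X t ^ (1-α)) ^ (1/(1-α)) :=
        Real.rpow_le_rpow (div_pos hε hK0).le h2 (by positivity)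
      have h4 : (X t ^ (1-α)) ^ (1/(1-α)) = X t := by
        rw [← Real.rpow_mul hx.le]
        rw [show (1-α) * (1/(1-α)) = 1 by field_simp]
        exact Real.rpow_one _
      rwa [h4] at h3
    set b : ℝ := Y 0 / (lam * ρ) with hbdef
    have hY00 : 0 < Y 0 := lt_trans hε (hYbig 0 le_rfl)
    have hb0 : 0 ≤ b := le_of_lt (div_pos hY00 (mul_pos hlam hρ))
    have hlin := my_le_lin (m := -(lam*ρ)) hb0 (hYdIcc 0 b le_rfl) (fun u hu => by
      have hu0 : (0:ℝ) ≤ u := hu.1.le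
      have h5 := (hODI2 u hu0).2
      have h6 := hXlow u hu0
      nlinarith [h5, h6])
    have hbb : lam * ρ * b = Y 0 := by
      rw [hbdef]; field_simp
    have := hYbig b hb0
    nlinarith [hlin]
  -- X gets (and stays) small
  have hXsmall : ∀ ε : ℝ, 0 < ε → ∃ T : ℝ, 0 ≤ T ∧ ∀ t : ℝ, T ≤ t → X t ≤ ε := by
    intro ε hε
    set δ : ℝ := (c₂/2) * ε^(1-α) with hδdef
    have hδ : 0 < δ := by
      have : (0:ℝ) < ε ^ (1-α) := Real.rpow_pos_of_pos hε _
      positivity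
    obtain ⟨T₀, hT₀0, hYT₀⟩ := hYsmall δ hδ
    have hYle : ∀ t : ℝ, T₀ ≤ t → Y t ≤ δ := fun t ht => le_trans (hYanti T₀ t hT₀0 ht) hYT₀
    have hdrop : ∀ u : ℝ, T₀ ≤ u → ε < X u → X' u ≤ -δ := by
      intro u hu hεu
      have hu0 : (0:ℝ) ≤ u := le_trans hT₀0 hu
      have h2 := (hODI1 u hu0).2
      have h3 : ε ^ (1-α) ≤ X u ^ (1-α) := Real.rpow_le_rpow hε.le hεu.le h1α.le
      have h4 := hYle u hu
      nlinarith [h2]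
    obtain ⟨T₂, hT₂def⟩ : ∃ y : ℝ, y = T₀ + X T₀ / δ := ⟨_, rfl⟩
    have hT₂ : T₀ ≤ T₂ := by
      have h7 := hXpos T₀ hT₀0
      have h8 : 0 ≤ X T₀ / δ := by positivity
      linarith [hT₂def.ge, hT₂def.le]
    have hex : ∃ t₁ ∈ Set.Icc T₀ T₂, X t₁ ≤ ε := by
      by_contra hcon
      push_neg at hcon
      have hlin := my_le_lin (m := -δ) hT₂ (hXdIcc T₀ T₂ hT₀0) (fun u hu => by
        exact hdrop u hu.1.le (hcon u ⟨hu.1.le, hu.2.le⟩))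
      have hval : X T₀ + -δ * (T₂ - T₀) = 0 := by
        rw [hT₂def]; field_simp; ring
      have := hXpos T₂ (le_trans hT₀0 hT₂)
      linarith
    obtain ⟨t₁, ht₁mem, ht₁⟩ := hex
    refine ⟨T₂, le_trans hT₀0 hT₂, ?_⟩
    intro t htt
    refine my_barrier_up (le_trans ht₁mem.2 htt) (hXdIcc t₁ t (le_trans hT₀0 ht₁mem.1)) ht₁ ?_
    intro u hu hεu
    exact lt_of_le_of_lt (hdrop u (le_trans ht₁mem.1 hu.1.le) hεu) (by linarith)
  -- the strip : R' > 0 when X is small and R ∈ [c₂/4, c₂/2]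
  obtain ⟨c, hcdef⟩ : ∃ y : ℝ, y = (1-α)*c₂^2/(16*Lam) := ⟨_, rfl⟩
  have hc : 0 < c := by rw [hcdef]; positivity
  obtain ⟨ε₀, hε₀def⟩ : ∃ y : ℝ, y = c ^ (2*α)⁻¹ := ⟨_, rfl⟩
  have hε₀ : 0 < ε₀ := hε₀def ▸ Real.rpow_pos_of_pos hc _
  obtain ⟨T₀, hT₀0, hXT₀⟩ := hXsmall ε₀ hε₀
  have hM : ∀ u : ℝ, T₀ ≤ u → Lam * X u ^ (2*α) ≤ (1-α)*c₂^2/16 := by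
    intro u hu
    have hu0 : (0:ℝ) ≤ u := le_trans hT₀0 hu
    have h1 : X u ^ (2*α) ≤ ε₀ ^ (2*α) :=
      Real.rpow_le_rpow (hXpos u hu0).le (hXT₀ u hu) (by positivity)
    have h2 : ε₀ ^ (2*α) = c := by
      rw [hε₀def]; exact Real.rpow_inv_rpow hc.le (by positivity)
    rw [h2] at h1
    have h3 : Lam * X u ^ (2*α) ≤ Lam * c := mul_le_mul_of_nonneg_left h1 hLam0.le
    have h4 : Lam * c = (1-α)*c₂^2/16 := by rw [hcdef]; field_simp
    linarith
  have hstrip : ∀ u : ℝ, T₀ ≤ u → c₂/4 ≤ R u → R u ≤ c₂/2 → 0 < R' u := by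
    intro u hu hR1 hR2
    have hu0 : (0:ℝ) ≤ u := le_trans hT₀0 hu
    have hx := hXpos u hu0
    have hA : (0:ℝ) < X u ^ (α-1) := Real.rpow_pos_of_pos hx _
    have hB : (0:ℝ) < X u ^ (α-1-1) := Real.rpow_pos_of_pos hx _
    have hP : (0:ℝ) < X u ^ (1-α) := Real.rpow_pos_of_pos hx _
    have hN : (0:ℝ) < X u ^ (-α) := Real.rpow_pos_of_pos hx _
    have hMM : (0:ℝ) < X u ^ (2*α) := Real.rpow_pos_of_pos hx _
    have hYu := hYeq u hu0
    have hYpos : 0 < Y u := by rw [hYu]; exact mul_pos (by linarith) hP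
    -- identities
    have idBPP : X u ^ (α-1-1) * X u ^ (1-α) * X u ^ (1-α) = X u ^ (-α) := by
      rw [← Real.rpow_add hx, ← Real.rpow_add hx]; congr 1; ring
    have idXA : X u * X u ^ (α-1) = X u ^ (2*α) * X u ^ (-α) := by
      nth_rewrite 1 [← Real.rpow_one (X u)]
      rw [← Real.rpow_add hx, ← Real.rpow_add hx]; congr 1; ring
    -- the inequality X' u ≤ -(c₂/2) * X^(1-α)
    have h2 := (hODI1 u hu0).2
    rw [hYu] at h2
    have hX'le : X' u ≤ -(c₂/2) * X u ^ (1-α) := by nlinarith [h2, hP]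
    -- term 1 bound
    have hf1 := (hODI2 u hu0).1
    have b1 : -(Lam * (X u ^ (2*α) * X u ^ (-α))) ≤ Y' u * X u ^ (α-1) := by
      have := mul_le_mul_of_nonneg_right hf1 hA.le
      calc -(Lam * (X u ^ (2*α) * X u ^ (-α))) = -Lam * X u * X u ^ (α-1) := by
            rw [mul_assoc, idXA]; ring
        _ ≤ Y' u * X u ^ (α-1) := this
    -- term 2 bound
    have hDneg : (α - 1) * (Y u * X u ^ (α-1-1)) ≤ 0 := by
      nlinarith [mul_pos hYpos hB]
    have h5 : (α-1) * (Y u * X u ^ (α-1-1)) * (-(c₂/2) * X u ^ (1-α)) ≤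
        (α-1) * (Y u * X u ^ (α-1-1)) * X' u := mul_le_mul_of_nonpos_left hX'le hDneg
    have hDP : Y u * X u ^ (α-1-1) * X u ^ (1-α) = R u * X u ^ (-α) := by
      rw [hYu, ← idBPP]; ring
    have b2 : (1-α) * (c₂/2) * (R u * X u ^ (-α)) ≤ Y u * (X' u * (α - 1) * X u ^ (α-1-1)) := by
      have e1 : (α-1) * (Y u * X u ^ (α-1-1)) * (-(c₂/2) * X u ^ (1-α)) =
          (1-α) * (c₂/2) * (Y u * X u ^ (α-1-1) * X u ^ (1-α)) := by ring
      rw [e1, hDP] at h5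
      calc (1-α) * (c₂/2) * (R u * X u ^ (-α)) ≤
          (α-1) * (Y u * X u ^ (α-1-1)) * X' u := h5
        _ = Y u * (X' u * (α - 1) * X u ^ (α-1-1)) := by ring
    -- combine
    have hMu := hM u hu
    have hMN : Lam * X u ^ (2*α) * X u ^ (-α) ≤ ((1-α)*c₂^2/16) * X u ^ (-α) :=
      mul_le_mul_of_nonneg_right hMu hN.le
    have hRN : (1-α) * (c₂/2) * (c₂/4) * X u ^ (-α) ≤ (1-α) * (c₂/2) * (R u * X u ^ (-α)) := by
      have h6 : (c₂/4) * X u ^ (-α) ≤ R u * X u ^ (-α) :=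
        mul_le_mul_of_nonneg_right hR1 hN.le
      have h7 := mul_le_mul_of_nonneg_left h6 (mul_nonneg h1α.le (by positivity : (0:ℝ) ≤ c₂/2))
      nlinarith [h7]
    have hfin : 0 < (1-α)*c₂^2/16 * X u ^ (-α) := by positivity
    show 0 < R' u
    simp only [hR'def]
    nlinarith [b1, b2, hMN, hRN, hfin]
  -- existence of a start time with R ≥ c₂/2
  obtain ⟨T₁, hT₁def⟩ : ∃ y : ℝ, y = T₀ + (X T₀ ^ α) * (2/(α*c₂)) := ⟨_, rfl⟩
  have hXT₀α : (0:ℝ) < X T₀ ^ α := Real.rpow_pos_of_pos (hXpos T₀ hT₀0) _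
  have hT₁ : T₀ ≤ T₁ := by
    have h8 : (0:ℝ) ≤ (X T₀ ^ α) * (2/(α*c₂)) := by positivity
    linarith [hT₁def.le, hT₁def.ge]
  have hT₁0 : (0:ℝ) ≤ T₁ := le_trans hT₀0 hT₁
  have hex : ∃ t₁, t₁ ∈ Set.Icc T₀ T₁ ∧ c₂/2 ≤ R t₁ := by
    by_contra hcon
    push_neg at hcon
    have hFd : ∀ t ∈ Set.Icc T₀ T₁, HasDerivWithinAt (fun t => X t ^ α)
        (X' t * α * X t ^ (α-1)) (Set.Icc T₀ T₁) t := fun t ht =>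
      ((hX_deriv t (le_trans hT₀0 ht.1)).rpow_const
        (Or.inl (hXpos t (le_trans hT₀0 ht.1)).ne')).mono (fun u hu => le_trans hT₀0 hu.1)
    have hlin := my_le_lin (m := -(α*c₂/2)) hT₁ hFd (by
      intro u hu
      have hu0 : (0:ℝ) ≤ u := le_trans hT₀0 hu.1.le
      have hx := hXpos u hu0
      have hA : (0:ℝ) < X u ^ (α-1) := Real.rpow_pos_of_pos hx _
      have hP : (0:ℝ) < X u ^ (1-α) := Real.rpow_pos_of_pos hx _
      have hRu : R u < c₂/2 := hcon u ⟨hu.1.le, hu.2.le⟩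
      have h2 := (hODI1 u hu0).2
      rw [hYeq u hu0] at h2
      have idAP : X u ^ (1-α) * X u ^ (α-1) = 1 := by
        rw [← Real.rpow_add hx]; norm_num
      have step1 : X' u * (α * X u ^ (α-1)) ≤ ((R u - c₂) * X u ^ (1-α)) * (α * X u ^ (α-1)) := by
        apply mul_le_mul_of_nonneg_right _ (by positivity)
        nlinarith [h2]
      have step2 : ((R u - c₂) * X u ^ (1-α)) * (α * X u ^ (α-1)) = α * (R u - c₂) := by
        calc ((R u - c₂) * X u ^ (1-α)) * (α * X u ^ (α-1))
            = α * (R u - c₂) * (X u ^ (1-α) * X u ^ (α-1)) := by ring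
          _ = α * (R u - c₂) := by rw [idAP, mul_one]
      have step3 : α * (R u - c₂) ≤ -(α*c₂/2) := by
        have h9 := mul_le_mul_of_nonneg_left (show R u - c₂ ≤ -(c₂/2) by linarith) hα0.le
        nlinarith [h9]
      calc X' u * α * X u ^ (α-1) = X' u * (α * X u ^ (α-1)) := by ring
        _ ≤ ((R u - c₂) * X u ^ (1-α)) * (α * X u ^ (α-1)) := step1
        _ = α * (R u - c₂) := step2
        _ ≤ -(α*c₂/2) := step3)
    have hval : X T₀ ^ α + -(α*c₂/2) * (T₁ - T₀) = 0 := by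
      rw [hT₁def]
      have hαc : α*c₂ ≠ 0 := by positivity
      field_simp
      ring
    have := Real.rpow_pos_of_pos (hXpos T₁ hT₁0) α
    linarith
  obtain ⟨t₁, ht₁mem, ht₁R⟩ := hex
  have ht₁0 : (0:ℝ) ≤ t₁ := le_trans hT₀0 ht₁mem.1
  -- R stays above c₂/4 from T₁ on
  have hRlow : ∀ t : ℝ, T₁ ≤ t → c₂/4 ≤ R t := by
    intro t ht
    refine my_barrier_strip (le_trans ht₁mem.2 ht) (by linarith : c₂/4 < c₂/2)
      (hRdIcc t₁ t ht₁0) ht₁R ?_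
    intro v hv h1 h2
    exact hstrip v (le_trans ht₁mem.1 hv.1.le) h1 h2
  -- final phase : sharp rates
  obtain ⟨β, hβdef⟩ : ∃ y : ℝ, y = 1/(1-α) := ⟨_, rfl⟩
  have hβ : 0 < β := by rw [hβdef]; positivity
  obtain ⟨q, hqdef⟩ : ∃ y : ℝ, y = α/(1-α) := ⟨_, rfl⟩
  have hq : 0 < q := by rw [hqdef]; positivity
  have hYpos2 : ∀ t : ℝ, T₁ ≤ t → 0 < Y t := by
    intro t ht
    have ht0 : (0:ℝ) ≤ t := le_trans hT₁0 ht
    rw [hYeq t ht0]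
    exact mul_pos (lt_of_lt_of_le (by positivity) (hRlow t ht))
      (Real.rpow_pos_of_pos (hXpos t ht0) _)
  -- X is pinched between powers of Y
  have hXub : ∀ t : ℝ, T₁ ≤ t → X t ≤ (4/c₂) ^ β * Y t ^ β := by
    intro t ht
    have ht0 : (0:ℝ) ≤ t := le_trans hT₁0 ht
    have hx := hXpos t ht0
    have hP : (0:ℝ) < X t ^ (1-α) := Real.rpow_pos_of_pos hx _
    have h1 : (c₂/4) * X t ^ (1-α) ≤ Y t := by
      rw [hYeq t ht0]
      exact mul_le_mul_of_nonneg_right (hRlow t ht) hP.le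
    have h2 : X t ^ (1-α) ≤ (4/c₂) * Y t := by
      rw [div_mul_eq_mul_div, le_div_iff₀ hc₂]
      nlinarith [h1]
    have h3 : (X t ^ (1-α)) ^ β ≤ ((4/c₂) * Y t) ^ β := Real.rpow_le_rpow hP.le h2 hβ.le
    have e : (X t ^ (1-α)) ^ β = X t := by
      rw [← Real.rpow_mul hx.le, show (1-α)*β = 1 by rw [hβdef]; field_simp, Real.rpow_one]
    rw [e, Real.mul_rpow (by positivity) (hYpos2 t ht).le] at h3
    exact h3
  have hXlb : ∀ t : ℝ, T₁ ≤ t → (1/K) ^ β * Y t ^ β ≤ X t := by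
    intro t ht
    have ht0 : (0:ℝ) ≤ t := le_trans hT₁0 ht
    have hx := hXpos t ht0
    have hP : (0:ℝ) < X t ^ (1-α) := Real.rpow_pos_of_pos hx _
    have h1 : Y t ≤ K * X t ^ (1-α) := by
      rw [hYeq t ht0]
      exact mul_le_mul_of_nonneg_right (hRK t ht0) hP.le
    have h2 : (1/K) * Y t ≤ X t ^ (1-α) := by
      rw [div_mul_eq_mul_div, div_le_iff₀ hK0]
      nlinarith [h1]
    have h3 : ((1/K) * Y t) ^ β ≤ (X t ^ (1-α)) ^ β :=
      Real.rpow_le_rpow (mul_nonneg (one_div_nonneg.mpr hK0.le) (hYpos2 t ht).le) h2 hβ.le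
    have e : (X t ^ (1-α)) ^ β = X t := by
      rw [← Real.rpow_mul hx.le, show (1-α)*β = 1 by rw [hβdef]; field_simp, Real.rpow_one]
    rw [e, Real.mul_rpow (one_div_nonneg.mpr hK0.le) (hYpos2 t ht).le] at h3
    exact h3
  -- the function G = Y^(-q) has derivative pinched between a0 and b0
  obtain ⟨a0, ha0def⟩ : ∃ y : ℝ, y = q * lam * (1/K)^β := ⟨_, rfl⟩
  obtain ⟨b0, hb0def⟩ : ∃ y : ℝ, y = q * Lam * (4/c₂)^β := ⟨_, rfl⟩
  have ha0 : 0 < a0 := by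
    rw [ha0def]
    have : (0:ℝ) < (1/K)^β := Real.rpow_pos_of_pos (by positivity) _
    positivity
  have hb0 : 0 < b0 := by
    rw [hb0def]
    have : (0:ℝ) < (4/c₂)^β := Real.rpow_pos_of_pos (by positivity) _
    positivity
  have hG'bounds : ∀ t : ℝ, T₁ ≤ t →
      a0 ≤ Y' t * (-q) * Y t ^ (-q-1) ∧ Y' t * (-q) * Y t ^ (-q-1) ≤ b0 := by
    intro t ht
    have ht0 : (0:ℝ) ≤ t := le_trans hT₁0 ht
    have hy := hYpos2 t ht
    have hE : (0:ℝ) < Y t ^ (-q-1) := Real.rpow_pos_of_pos hy _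
    have idEW : Y t ^ (-q-1) * Y t ^ β = 1 := by
      rw [← Real.rpow_add hy, show (-q-1) + β = 0 by rw [hqdef, hβdef]; field_simp; ring,
        Real.rpow_zero]
    have hWpos : (0:ℝ) < Y t ^ β := Real.rpow_pos_of_pos hy _
    have hs1 : lam * X t ≤ -Y' t := by have := (hODI2 t ht0).2; linarith
    have hs1' : -Y' t ≤ Lam * X t := by have := (hODI2 t ht0).1; linarith
    have hqE : (0:ℝ) ≤ q * Y t ^ (-q-1) := by positivity
    constructor
    · -- lower bound
      have t0 : q * Y t ^ (-q-1) * (lam * ((1/K)^β * Y t ^ β)) ≤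
          q * Y t ^ (-q-1) * (lam * X t) :=
        mul_le_mul_of_nonneg_left (mul_le_mul_of_nonneg_left (hXlb t ht) hlam.le) hqE
      have t1 : q * Y t ^ (-q-1) * (lam * X t) ≤ q * Y t ^ (-q-1) * (-Y' t) :=
        mul_le_mul_of_nonneg_left hs1 hqE
      have e2 : q * Y t ^ (-q-1) * (lam * ((1/K)^β * Y t ^ β)) = a0 := by
        rw [ha0def]
        linear_combination (q * lam * (1/K)^β) * idEW
      have e3 : q * Y t ^ (-q-1) * (-Y' t) = Y' t * (-q) * Y t ^ (-q-1) := by ring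
      linarith [t0, t1, e2.ge, e2.le, e3.le, e3.ge]
    · -- upper bound
      have t0 : q * Y t ^ (-q-1) * (-Y' t) ≤ q * Y t ^ (-q-1) * (Lam * X t) :=
        mul_le_mul_of_nonneg_left hs1' hqE
      have t1 : q * Y t ^ (-q-1) * (Lam * X t) ≤
          q * Y t ^ (-q-1) * (Lam * ((4/c₂)^β * Y t ^ β)) :=
        mul_le_mul_of_nonneg_left (mul_le_mul_of_nonneg_left (hXub t ht) hLam0.le) hqE
      have e2 : q * Y t ^ (-q-1) * (Lam * ((4/c₂)^β * Y t ^ β)) = b0 := by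
        rw [hb0def]
        linear_combination (q * Lam * (4/c₂)^β) * idEW
      have e3 : q * Y t ^ (-q-1) * (-Y' t) = Y' t * (-q) * Y t ^ (-q-1) := by ring
      linarith [t0, t1, e2.ge, e2.le, e3.le, e3.ge]
  have hGd : ∀ b' : ℝ, ∀ t ∈ Set.Icc T₁ b', HasDerivWithinAt (fun u => Y u ^ (-q))
      (Y' t * (-q) * Y t ^ (-q-1)) (Set.Icc T₁ b') t := by
    intro b' t ht
    have := ((hY_deriv t (le_trans hT₁0 ht.1)).mono
      (show Set.Icc T₁ b' ⊆ Set.Ici 0 from fun u hu => le_trans hT₁0 hu.1)).rpow_const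
      (p := -q) (Or.inl (hYpos2 t ht.1).ne')
    convert this using 2 <;> ring
  have hGgrow : ∀ t : ℝ, T₁ ≤ t →
      Y T₁ ^ (-q) + a0*(t - T₁) ≤ Y t ^ (-q) ∧ Y t ^ (-q) ≤ Y T₁ ^ (-q) + b0*(t - T₁) := by
    intro t ht
    constructor
    · exact my_ge_lin ht (hGd t) (fun u hu => (hG'bounds u hu.1.le).1)
    · exact my_le_lin ht (hGd t) (fun u hu => (hG'bounds u hu.1.le).2)
  -- define the final horizon
  obtain ⟨T, hTdef⟩ : ∃ y : ℝ, y = max (2*T₁) 1 := ⟨_, rfl⟩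
  have hT1 : (1:ℝ) ≤ T := hTdef ▸ le_max_right _ _
  have hT2T₁ : 2*T₁ ≤ T := hTdef ▸ le_max_left _ _
  have hTT₁ : ∀ t : ℝ, T ≤ t → T₁ ≤ t := fun t ht => by linarith
  have hGT1pos : 0 < Y T₁ ^ (-q) := Real.rpow_pos_of_pos (hYpos2 T₁ le_rfl) _
  obtain ⟨A₁, hA₁def⟩ : ∃ y : ℝ, y = a0/2 := ⟨_, rfl⟩
  obtain ⟨A₂, hA₂def⟩ : ∃ y : ℝ, y = Y T₁ ^ (-q) + b0 := ⟨_, rfl⟩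
  have hA₁ : 0 < A₁ := by rw [hA₁def]; positivity
  have hA₂ : 0 < A₂ := by rw [hA₂def]; positivity
  have hGlin : ∀ t : ℝ, T ≤ t → A₁ * t ≤ Y t ^ (-q) ∧ Y t ^ (-q) ≤ A₂ * t := by
    intro t ht
    have ht1 : (1:ℝ) ≤ t := le_trans hT1 ht
    have htT₁ : T₁ ≤ t := hTT₁ t ht
    have h2T : 2*T₁ ≤ t := le_trans hT2T₁ ht
    obtain ⟨hg1, hg2⟩ := hGgrow t htT₁
    constructor
    · rw [hA₁def]
      nlinarith [hg1, hGT1pos, ha0]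
    · rw [hA₂def]
      nlinarith [hg2, hGT1pos, hb0, hT₁0]
  -- invert : bounds for Y
  obtain ⟨e, hedef⟩ : ∃ y : ℝ, y = -(1/q) := ⟨_, rfl⟩
  have hee : e = -(1/α - 1) := by rw [hedef, hqdef]; field_simp
  have heneg : e ≤ 0 := by rw [hedef]; simp; positivity
  have hYbounds : ∀ t : ℝ, T ≤ t →
      A₂^e * t^e ≤ Y t ∧ Y t ≤ A₁^e * t^e := by
    intro t ht
    have ht1 : (1:ℝ) ≤ t := le_trans hT1 ht
    have ht0 : (0:ℝ) < t := by linarith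
    have htT₁ : T₁ ≤ t := hTT₁ t ht
    have hy := hYpos2 t htT₁
    have hGpos : (0:ℝ) < Y t ^ (-q) := Real.rpow_pos_of_pos hy _
    obtain ⟨hg1, hg2⟩ := hGlin t ht
    have idG : (Y t ^ (-q)) ^ e = Y t := by
      rw [← Real.rpow_mul hy.le, show (-q)*e = 1 by rw [hedef]; field_simp, Real.rpow_one]
    constructor
    · have h4 : (A₂ * t) ^ e ≤ (Y t ^ (-q)) ^ e :=
        Real.rpow_le_rpow_of_nonpos hGpos hg2 heneg
      rw [idG, Real.mul_rpow hA₂.le ht0.le] at h4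
      exact h4
    · have h4 : (Y t ^ (-q)) ^ e ≤ (A₁ * t) ^ e :=
        Real.rpow_le_rpow_of_nonpos (by positivity) hg1 heneg
      rw [idG, Real.mul_rpow hA₁.le ht0.le] at h4
      exact h4
  -- bounds for X
  have hte : ∀ t : ℝ, 0 < t → (t^e)^β = t^(-(1/α)) := by
    intro t ht0
    rw [← Real.rpow_mul ht0.le, show e*β = -(1/α) by
      rw [hedef, hβdef, hqdef]; field_simp]
  have hXbounds : ∀ t : ℝ, T ≤ t →
      ((1/K)^β * (A₂^e)^β) * t^(-(1/α)) ≤ X t ∧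
        X t ≤ ((4/c₂)^β * (A₁^e)^β) * t^(-(1/α)) := by
    intro t ht
    have ht1 : (1:ℝ) ≤ t := le_trans hT1 ht
    have ht0 : (0:ℝ) < t := by linarith
    have htT₁ : T₁ ≤ t := hTT₁ t ht
    have hy := hYpos2 t htT₁
    obtain ⟨hy1, hy2⟩ := hYbounds t ht
    have htep : (0:ℝ) < t^e := Real.rpow_pos_of_pos ht0 _
    constructor
    · have h5 : (A₂^e * t^e) ^ β ≤ Y t ^ β := Real.rpow_le_rpow (by positivity) hy1 hβ.le
      rw [Real.mul_rpow (by positivity) htep.le, hte t ht0] at h5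
      have h6 := mul_le_mul_of_nonneg_left h5
        (le_of_lt (Real.rpow_pos_of_pos (by positivity : (0:ℝ) < 1/K) β))
      calc (1/K)^β * (A₂^e)^β * t^(-(1/α)) = (1/K)^β * ((A₂^e)^β * t^(-(1/α))) := by ring
        _ ≤ (1/K)^β * Y t ^ β := h6
        _ ≤ X t := hXlb t htT₁
    · have h5 : Y t ^ β ≤ (A₁^e * t^e) ^ β := Real.rpow_le_rpow hy.le hy2 hβ.le
      rw [Real.mul_rpow (by positivity) htep.le, hte t ht0] at h5
      have h6 := mul_le_mul_of_nonneg_left h5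
        (le_of_lt (Real.rpow_pos_of_pos (by positivity : (0:ℝ) < 4/c₂) β))
      calc X t ≤ (4/c₂)^β * Y t ^ β := hXub t htT₁
        _ ≤ (4/c₂)^β * ((A₁^e)^β * t^(-(1/α))) := h6
        _ = (4/c₂)^β * (A₁^e)^β * t^(-(1/α)) := by ring
  -- assemble
  obtain ⟨C₁, hC₁def⟩ : ∃ y : ℝ, y = min ((1/K)^β * (A₂^e)^β) (A₂^e) := ⟨_, rfl⟩
  obtain ⟨C₂, hC₂def⟩ : ∃ y : ℝ, y = max ((4/c₂)^β * (A₁^e)^β) (A₁^e) := ⟨_, rfl⟩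
  have hA₂e : (0:ℝ) < A₂^e := Real.rpow_pos_of_pos hA₂ _
  have hA₁e : (0:ℝ) < A₁^e := Real.rpow_pos_of_pos hA₁ _
  have hC₁ : 0 < C₁ := by
    rw [hC₁def]
    apply lt_min
    · have h7 : (0:ℝ) < (1/K)^β := Real.rpow_pos_of_pos (by positivity) _
      have h8 : (0:ℝ) < (A₂^e)^β := Real.rpow_pos_of_pos hA₂e _
      positivity
    · exact hA₂e
  have hmain : ∀ t : ℝ, T ≤ t →
      (C₁ * t ^ (-(1 / α)) ≤ X t ∧ X t ≤ C₂ * t ^ (-(1 / α))) ∧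
        (C₁ * t ^ (-(1 / α - 1)) ≤ Y t ∧ Y t ≤ C₂ * t ^ (-(1 / α - 1))) := by
    intro t ht
    have ht1 : (1:ℝ) ≤ t := le_trans hT1 ht
    have ht0 : (0:ℝ) < t := by linarith
    have htp1 : (0:ℝ) ≤ t ^ (-(1/α)) := (Real.rpow_pos_of_pos ht0 _).le
    have htp2 : (0:ℝ) ≤ t ^ (-(1/α - 1)) := (Real.rpow_pos_of_pos ht0 _).le
    obtain ⟨hx1, hx2⟩ := hXbounds t ht
    obtain ⟨hy1, hy2⟩ := hYbounds t ht
    have hy1' : A₂^e * t ^ (-(1/α - 1)) ≤ Y t := by rw [← hee]; exact hy1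
    have hy2' : Y t ≤ A₁^e * t ^ (-(1/α - 1)) := by rw [← hee]; exact hy2
    refine ⟨⟨?_, ?_⟩, ?_, ?_⟩
    · calc C₁ * t ^ (-(1/α)) ≤ ((1/K)^β * (A₂^e)^β) * t ^ (-(1/α)) :=
          mul_le_mul_of_nonneg_right (hC₁def ▸ min_le_left _ _) htp1
        _ ≤ X t := hx1
    · calc X t ≤ ((4/c₂)^β * (A₁^e)^β) * t ^ (-(1/α)) := hx2
        _ ≤ C₂ * t ^ (-(1/α)) :=
          mul_le_mul_of_nonneg_right (hC₂def ▸ le_max_left _ _) htp1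
    · calc C₁ * t ^ (-(1/α - 1)) ≤ A₂^e * t ^ (-(1/α - 1)) :=
          mul_le_mul_of_nonneg_right (hC₁def ▸ min_le_right _ _) htp2
        _ ≤ Y t := hy1'
    · calc Y t ≤ A₁^e * t ^ (-(1/α - 1)) := hy2'
        _ ≤ C₂ * t ^ (-(1/α - 1)) :=
          mul_le_mul_of_nonneg_right (hC₂def ▸ le_max_right _ _) htp2
  have hC₁C₂ : C₁ ≤ C₂ := by
    have h1 := (hmain T le_rfl).1
    have hT0 : (0:ℝ) < T := by linarith
    have hp : (0:ℝ) < T ^ (-(1/α)) := Real.rpow_pos_of_pos hT0 _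
    have := le_trans h1.1 h1.2
    exact le_of_mul_le_mul_right this hp
  exact ⟨T, by linarith, C₁, C₂, hC₁, hC₁C₂, hmain⟩
end

section
/- Let α ∈ (0,1) and κ > 0, and let L : [0,∞) → [0,∞) be continuously differentiable. Suppose that for every nonincreasing function δ : [0,∞) → (0,∞) one has L′(t) ≤ −κ·δ(t)^{2α}·L(t) + δ(t)³ for all t ≥ 0. Then there exists a constant C > 0 such that L(t) ≤ C·(1 + t)^{−(3/(2α) − 1)} for all t ≥ 0. -/
/-- Lemma 5.4 (algebraic decay from the family of differential inequalities
`L' ≤ -κ δ^{2α} L + δ³` valid for every positive nonincreasing profile δ). -/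
theorem stmt_14 (α κ : ℝ) (hα : α ∈ Set.Ioo (0:ℝ) 1) (hκ : 0 < κ)
    (L L' : ℝ → ℝ)
    (hL_nonneg : ∀ t : ℝ, 0 ≤ t → 0 ≤ L t)
    (hL_deriv : ∀ t ∈ Set.Ici (0:ℝ), HasDerivWithinAt L (L' t) (Set.Ici (0:ℝ)) t)
    (hL'_cont : ContinuousOn L' (Set.Ici (0:ℝ)))
    (hODI : ∀ δ : ℝ → ℝ, (∀ t : ℝ, 0 ≤ t → 0 < δ t) →
      (∀ s t : ℝ, 0 ≤ s → s ≤ t → δ t ≤ δ s) →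
      ∀ t : ℝ, 0 ≤ t → L' t ≤ -κ * δ t ^ (2 * α) * L t + δ t ^ (3:ℝ)) :
    ∃ C : ℝ, 0 < C ∧ ∀ t : ℝ, 0 ≤ t →
      L t ≤ C * (1 + t) ^ (-(3 / (2 * α) - 1)) := by
  obtain ⟨hα0, hα1⟩ := hα
  have h2α : (0:ℝ) < 2 * α := by linarith
  set γ : ℝ := 3 / (2 * α) with hγdef
  have hγpos : 0 < γ := by positivity
  have hγ1 : 1 < γ := by
    rw [hγdef, lt_div_iff₀ h2α]; linarith
  set θ : ℝ := (2 * α)⁻¹ with hθdef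
  have hθpos : 0 < θ := inv_pos.mpr h2α
  have hθ2α : θ * (2 * α) = 1 := inv_mul_cancel₀ h2α.ne'
  have hθ3 : θ * 3 = γ := by rw [hθdef, hγdef]; field_simp
  have hbase : (0:ℝ) < γ / κ := div_pos hγpos hκ
  set c : ℝ := (γ / κ) ^ θ with hcdef
  have hc : 0 < c := Real.rpow_pos_of_pos hbase θ
  have hc3 : 0 < c ^ (3:ℝ) := Real.rpow_pos_of_pos hc 3
  set δ : ℝ → ℝ := fun t => c * (1 + t) ^ (-θ) with hδdef
  have hδpos : ∀ t : ℝ, 0 ≤ t → 0 < δ t := fun t ht =>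
    mul_pos hc (Real.rpow_pos_of_pos (by linarith) _)
  have hδanti : ∀ s t : ℝ, 0 ≤ s → s ≤ t → δ t ≤ δ s := by
    intro s t hs hst
    exact mul_le_mul_of_nonneg_left
      (Real.rpow_le_rpow_of_nonpos (by linarith) (by linarith) (by linarith)) hc.le
  have key := hODI δ hδpos hδanti
  have hkey : ∀ t : ℝ, 0 ≤ t →
      L' t ≤ -γ * (1 + t) ^ (-(1:ℝ)) * L t + c ^ (3:ℝ) * (1 + t) ^ (-γ) := by
    intro t ht
    have h1t : (0:ℝ) < 1 + t := by linarith
    have e1 : δ t ^ (2 * α) = (γ / κ) * (1 + t) ^ (-(1:ℝ)) := by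
      show (c * (1 + t) ^ (-θ)) ^ (2 * α) = _
      rw [Real.mul_rpow hc.le (Real.rpow_nonneg h1t.le _), hcdef,
        ← Real.rpow_mul hbase.le, ← Real.rpow_mul h1t.le, hθ2α, Real.rpow_one]
      congr 2
      rw [← hθ2α]; ring
    have e2 : δ t ^ (3:ℝ) = c ^ (3:ℝ) * (1 + t) ^ (-γ) := by
      show (c * (1 + t) ^ (-θ)) ^ (3:ℝ) = _
      rw [Real.mul_rpow hc.le (Real.rpow_nonneg h1t.le _), ← Real.rpow_mul h1t.le]
      congr 2
      rw [← hθ3]; ring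
    have := key t ht
    rw [e1, e2] at this
    have hκγ : -κ * ((γ / κ) * (1 + t) ^ (-(1:ℝ))) = -γ * (1 + t) ^ (-(1:ℝ)) := by
      field_simp
    calc L' t ≤ -κ * ((γ / κ) * (1 + t) ^ (-(1:ℝ))) * L t + c ^ (3:ℝ) * (1 + t) ^ (-γ) :=
          this
      _ = -γ * (1 + t) ^ (-(1:ℝ)) * L t + c ^ (3:ℝ) * (1 + t) ^ (-γ) := by rw [hκγ]
  set g : ℝ → ℝ := fun t => (1 + t) ^ γ * L t - c ^ (3:ℝ) * (1 + t) with hgdef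
  have hLcont : ContinuousOn L (Set.Ici (0:ℝ)) := fun t ht =>
    (hL_deriv t ht).continuousWithinAt
  have hgcont : ContinuousOn g (Set.Ici (0:ℝ)) := by
    apply ContinuousOn.sub
    · exact ((continuousOn_const.add continuousOn_id).rpow_const
        (fun t ht => Or.inl (by simp only [Set.mem_Ici] at ht; show (1:ℝ) + t ≠ 0; exact ne_of_gt (by linarith)))).mul hLcont
    · exact continuousOn_const.mul (continuousOn_const.add continuousOn_id)
  have hgderiv : ∀ t ∈ Set.Ioi (0:ℝ),
      HasDerivAt g (1 * γ * (1 + t) ^ (γ - 1) * L t + (1 + t) ^ γ * L' t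
        - c ^ (3:ℝ) * 1) t := by
    intro t ht
    simp only [Set.mem_Ioi] at ht
    have h1t : (0:ℝ) < 1 + t := by linarith
    have hLd : HasDerivAt L (L' t) t :=
      (hL_deriv t (Set.mem_Ici.mpr ht.le)).hasDerivAt (Ici_mem_nhds ht)
    have hpow : HasDerivAt (fun y : ℝ => (1 + y) ^ γ) (1 * γ * (1 + t) ^ (γ - 1)) t :=
      ((hasDerivAt_id t).const_add 1).rpow_const (Or.inl h1t.ne')
    exact (hpow.mul hLd).sub (((hasDerivAt_id t).const_add 1).const_mul (c ^ (3:ℝ)))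
  have hganti : AntitoneOn g (Set.Ici (0:ℝ)) := by
    apply antitoneOn_of_deriv_nonpos (convex_Ici 0) hgcont
    · intro t ht
      rw [interior_Ici] at ht
      exact (hgderiv t ht).differentiableAt.differentiableWithinAt
    · intro t ht
      rw [interior_Ici] at ht
      rw [(hgderiv t ht).deriv]
      have ht' : (0:ℝ) < t := ht
      have h1t : (0:ℝ) < 1 + t := by linarith
      have hp : (0:ℝ) < (1 + t) ^ γ := Real.rpow_pos_of_pos h1t γ
      have hmul := mul_le_mul_of_nonneg_left (hkey t ht'.le) hp.le
      have e3 : (1 + t) ^ γ * ((1 + t) ^ (-(1:ℝ))) = (1 + t) ^ (γ - 1) := by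
        rw [← Real.rpow_add h1t]; congr 1
      have e4 : (1 + t) ^ γ * ((1 + t) ^ (-γ)) = 1 := by
        rw [← Real.rpow_add h1t]; simp
      have hrhs : (1 + t) ^ γ * (-γ * (1 + t) ^ (-(1:ℝ)) * L t + c ^ (3:ℝ) * (1 + t) ^ (-γ))
          = -γ * (1 + t) ^ (γ - 1) * L t + c ^ (3:ℝ) := by
        have : (1 + t) ^ γ * (-γ * (1 + t) ^ (-(1:ℝ)) * L t + c ^ (3:ℝ) * (1 + t) ^ (-γ))
            = -γ * ((1 + t) ^ γ * (1 + t) ^ (-(1:ℝ))) * L t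
              + c ^ (3:ℝ) * ((1 + t) ^ γ * (1 + t) ^ (-γ)) := by ring
        rw [this, e3, e4, mul_one]
      rw [hrhs] at hmul
      nlinarith [hmul]
  have hαne : -(3 / (2 * α) - 1) = 1 - γ := by rw [hγdef]; ring
  have hL0 : 0 ≤ L 0 := hL_nonneg 0 le_rfl
  refine ⟨L 0 + c ^ (3:ℝ) + 1, by positivity, ?_⟩
  intro t ht
  have h1t : (0:ℝ) < 1 + t := by linarith
  have hg := hganti (Set.mem_Ici.mpr le_rfl) (Set.mem_Ici.mpr ht) ht
  have hg0 : g 0 = L 0 - c ^ (3:ℝ) := by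
    simp [hgdef, Real.one_rpow]
  rw [hg0] at hg
  -- hg : (1+t)^γ * L t - c^3 * (1+t) ≤ L 0 - c^3
  have hbound : (1 + t) ^ γ * L t ≤ L 0 + c ^ (3:ℝ) * (1 + t) := by
    have : g t = (1 + t) ^ γ * L t - c ^ (3:ℝ) * (1 + t) := rfl
    nlinarith [hg, hc3.le, h1t.le]
  have hpowpos : (0:ℝ) < (1 + t) ^ (-γ) := Real.rpow_pos_of_pos h1t _
  have e4 : (1 + t) ^ γ * (1 + t) ^ (-γ) = 1 := by
    rw [← Real.rpow_add h1t]; simp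
  have hLt : L t ≤ (L 0 + c ^ (3:ℝ) * (1 + t)) * (1 + t) ^ (-γ) := by
    have := mul_le_mul_of_nonneg_right hbound hpowpos.le
    calc L t = (1 + t) ^ γ * L t * (1 + t) ^ (-γ) := by
          rw [mul_comm ((1+t)^γ) (L t), mul_assoc, e4, mul_one]
      _ ≤ (L 0 + c ^ (3:ℝ) * (1 + t)) * (1 + t) ^ (-γ) := this
  have e5 : (1 + t) * (1 + t) ^ (-γ) = (1 + t) ^ (1 - γ) := by
    nth_rewrite 1 [← Real.rpow_one (1 + t)]
    rw [← Real.rpow_add h1t]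
    congr 1
  have hmono : (1 + t) ^ (-γ) ≤ (1 + t) ^ (1 - γ) :=
    Real.rpow_le_rpow_of_exponent_le (by linarith) (by linarith)
  have hfinal : L t ≤ (L 0 + c ^ (3:ℝ)) * (1 + t) ^ (1 - γ) := by
    calc L t ≤ (L 0 + c ^ (3:ℝ) * (1 + t)) * (1 + t) ^ (-γ) := hLt
      _ = L 0 * (1 + t) ^ (-γ) + c ^ (3:ℝ) * ((1 + t) * (1 + t) ^ (-γ)) := by ring
      _ = L 0 * (1 + t) ^ (-γ) + c ^ (3:ℝ) * (1 + t) ^ (1 - γ) := by rw [e5]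
      _ ≤ L 0 * (1 + t) ^ (1 - γ) + c ^ (3:ℝ) * (1 + t) ^ (1 - γ) := by
          have := mul_le_mul_of_nonneg_left hmono hL0
          linarith
      _ = (L 0 + c ^ (3:ℝ)) * (1 + t) ^ (1 - γ) := by ring
  rw [hαne]
  have hpow1γ : (0:ℝ) < (1 + t) ^ (1 - γ) := Real.rpow_pos_of_pos h1t _
  nlinarith [hfinal, hpow1γ]
end
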